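/- arXiv:1109.1586 — 11 statements merged into one kernel-verified Lean document; each statement's English description precedes it below -/
import Mathlib

section
/- For every integer n ≥ 3 there exist points λ = (λ_1,…,λ_n) and μ = (μ_1,…,μ_n) in 𝔻ⁿ, each with pairwise distinct coordinates (λ_i ≠ λ_j and μ_i ≠ μ_j for i ≠ j), such that det[(1 − λ_j·conj(μ_k))^{−2}]_{1≤j,k≤n} = 0. (By the Edigarian–Zwonek formula for the Bergman kernel of the symmetrized polydisc, this vanishing determinant is exactly the statement that the symmetrized polydisc 𝔾_n is not a Lu Qi-Keng domain for n ≥ 3.) -/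
/-!
Take `λ_j = a ω^j` and `μ_k = ā ω^k` with `ω = e^{2πi/n}`, so that `λ_j μ̄_k = q ω^{j-k}` with
`q = a²` and the matrix is circulant. Its row sums are all `∑_l (1 - q ω^l)⁻²`, which expanding
`(1 - z)⁻² = ∑ (s + 1) z^s` and averaging over the roots of unity evaluates to
`n (1 + (n - 1) qⁿ) / (1 - qⁿ)²`. For `n ≥ 3` one may choose `qⁿ = -1/(n - 1)` with `|q| < 1`;
then every row sum vanishes, so `(1, …, 1)` lies in the kernel.
-/

open Finset ComplexConjugate

theorem IsPrimitiveRoot.sum_pow_pow_eq_ite {R : Type*} [CommRing R] [IsDomain R] {ω : R} {n : ℕ}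
    (hω : IsPrimitiveRoot ω n) (s : ℕ) :
    ∑ l ∈ range n, (ω ^ l) ^ s = if n ∣ s then (n : R) else 0 := by
  simp_rw [← pow_mul, mul_comm _ s, pow_mul]
  split_ifs with hs
  · simp [(hω.pow_eq_one_iff_dvd s).2 hs]
  · have hne : ω ^ s - 1 ≠ 0 := sub_ne_zero.2 fun h => hs ((hω.pow_eq_one_iff_dvd s).1 h)
    refine (mul_eq_zero.1 ?_).resolve_right hne
    rw [geom_sum_mul, ← pow_mul, mul_comm, pow_mul, hω.pow_eq_one, one_pow, sub_self]

section NormedField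

variable {𝕜 : Type*} [NormedField 𝕜]

theorem hasSum_nat_add_one_mul_geometric {z : 𝕜} (hz : ‖z‖ < 1) :
    HasSum (fun s : ℕ => ((s : 𝕜) + 1) * z ^ s) ((1 - z) ^ 2)⁻¹ := by
  simpa using hasSum_choose_mul_geometric_of_norm_lt_one 1 hz

theorem IsPrimitiveRoot.sum_inv_one_sub_mul_pow_sq {ω : 𝕜} {n : ℕ} (hω : IsPrimitiveRoot ω n)
    (hn : n ≠ 0) {q : 𝕜} (hq : ‖q‖ < 1) :
    ∑ l ∈ range n, ((1 - q * ω ^ l) ^ 2)⁻¹ = n * (1 + (n - 1) * q ^ n) / (1 - q ^ n) ^ 2 := by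
  have hω1 : ‖ω‖ = 1 :=
    (pow_eq_one_iff_of_nonneg (norm_nonneg ω) hn).1 (by rw [← norm_pow, hω.pow_eq_one, norm_one])
  have expand : HasSum (fun s : ℕ => ∑ l ∈ range n, ((s : 𝕜) + 1) * (q * ω ^ l) ^ s)
      (∑ l ∈ range n, ((1 - q * ω ^ l) ^ 2)⁻¹) :=
    hasSum_sum fun l _ => hasSum_nat_add_one_mul_geometric <| by
      rwa [norm_mul, norm_pow, hω1, one_pow, mul_one]
  have collapse : (fun s : ℕ => ∑ l ∈ range n, ((s : 𝕜) + 1) * (q * ω ^ l) ^ s) =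
      fun s => if n ∣ s then n * ((s : 𝕜) + 1) * q ^ s else 0 := by
    funext s
    simp_rw [mul_pow, ← mul_assoc, ← mul_sum, hω.sum_pow_pow_eq_ite]
    split_ifs <;> ring
  set x := q ^ n
  have hx : ‖x‖ < 1 := by rw [norm_pow]; exact pow_lt_one₀ (norm_nonneg q) hq hn
  have multiples : HasSum (fun t : ℕ => (n : 𝕜) ^ 2 * (t * x ^ t) + n * x ^ t)
      ((n : 𝕜) ^ 2 * (x / (1 - x) ^ 2) + n * (1 - x)⁻¹) :=
    ((hasSum_coe_mul_geometric_of_norm_lt_one hx).mul_left _).add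
      ((hasSum_geometric_of_norm_lt_one hx).mul_left _)
  have reindexed : HasSum (fun s : ℕ => if n ∣ s then n * ((s : 𝕜) + 1) * q ^ s else 0)
      ((n : 𝕜) ^ 2 * (x / (1 - x) ^ 2) + n * (1 - x)⁻¹) := by
    refine ((mul_right_injective₀ hn).hasSum_iff ?_).1 ?_
    · rintro s hs
      rw [if_neg]
      rintro ⟨t, rfl⟩
      exact hs ⟨t, rfl⟩
    · convert multiples using 2 with t
      simp only [Function.comp_apply, dvd_mul_right, if_true, pow_mul]
      push_cast
      ring
  have hx1 : 1 - x ≠ 0 := sub_ne_zero.2 fun h => by simp [← h] at hx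
  rw [collapse] at expand
  rw [expand.unique reindexed]
  field_simp
  ring

end NormedField

theorem Matrix.det_circulant_eq_zero {ι R : Type*} [AddGroup ι] [Fintype ι] [DecidableEq ι]
    [Nonempty ι] [CommRing R] [IsDomain R] {v : ι → R} (hv : ∑ i, v i = 0) :
    (circulant v).det = 0 := by
  refine exists_mulVec_eq_zero_iff.1 ⟨1, one_ne_zero, funext fun i => ?_⟩
  simp only [mulVec, dotProduct, circulant_apply, Pi.one_apply, mul_one, Pi.zero_apply]
  rw [← hv]
  exact Fintype.sum_equiv (Equiv.subLeft i) _ _ fun _ => rfl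

theorem IsPrimitiveRoot.injective_mul_pow {M : Type*} [CommMonoidWithZero M] [IsCancelMulZero M]
    {ω c : M} {n : ℕ} (hω : IsPrimitiveRoot ω n) (hc : c ≠ 0) :
    Function.Injective fun j : Fin n => c * ω ^ (j : ℕ) :=
  fun j k h => Fin.ext <| hω.pow_inj j.isLt k.isLt (mul_left_cancel₀ hc h)

theorem pow_val_sub_mul_pow_val {M : Type*} [Monoid M] {ω : M} {n : ℕ} [NeZero n]
    (h : ω ^ n = 1) (j k : Fin n) : ω ^ ((j - k : Fin n) : ℕ) * ω ^ (k : ℕ) = ω ^ (j : ℕ) := by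
  rw [← pow_add, pow_eq_pow_mod _ h, ← Fin.val_add, sub_add_cancel]

theorem mul_pow_mul_conj_conj_mul_pow {ω : ℂ} {n : ℕ} [NeZero n] (hω : ω ^ n = 1) (a : ℂ)
    (j k : Fin n) :
    a * ω ^ (j : ℕ) * conj (conj a * ω ^ (k : ℕ)) = a ^ 2 * ω ^ ((j - k : Fin n) : ℕ) := by
  have hωk : ω ^ (k : ℕ) * conj (ω ^ (k : ℕ)) = 1 := by
    rw [Complex.mul_conj', norm_pow, Complex.norm_eq_one_of_pow_eq_one hω (NeZero.ne n)]
    simp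
  rw [map_mul, Complex.conj_conj, ← pow_val_sub_mul_pow_val hω j k]
  linear_combination a ^ 2 * ω ^ ((j - k : Fin n) : ℕ) * hωk

theorem exists_norm_lt_one_one_add_mul_pow_eq_zero {r : ℝ} (hr : 1 < r) {m : ℕ} (hm : m ≠ 0) :
    ∃ a : ℂ, ‖a‖ < 1 ∧ 1 + r * a ^ m = 0 := by
  obtain ⟨a, ha⟩ := IsAlgClosed.exists_pow_nat_eq ((-r⁻¹ : ℝ) : ℂ) (Nat.pos_of_ne_zero hm)
  refine ⟨a, (pow_lt_one_iff_of_nonneg (norm_nonneg a) hm).1 ?_, ?_⟩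
  · rw [← norm_pow, ha, Complex.norm_real, norm_neg, norm_inv, Real.norm_of_nonneg (by linarith)]
    exact inv_lt_one_of_one_lt₀ hr
  · have : (r : ℂ) ≠ 0 := by exact_mod_cast (by linarith : r ≠ 0)
    rw [ha]
    push_cast
    field_simp
    ring

/-- For every integer `n ≥ 3` there exist points `λ, μ ∈ 𝔻ⁿ`, each with
pairwise distinct coordinates, such that `det[(1 - λ_j conj(μ_k))⁻²] = 0`
(i.e. the Bergman kernel of the symmetrized polydisc `𝔾_n` has a zero, so `𝔾_n`
is not a Lu Qi-Keng domain for `n ≥ 3`). -/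
theorem symmetrizedPolydisc_not_LuQiKeng (n : ℕ) (hn : 3 ≤ n) :
    ∃ lam mu : Fin n → ℂ,
      (∀ j, ‖lam j‖ < 1) ∧ (∀ j, ‖mu j‖ < 1) ∧
      Function.Injective lam ∧ Function.Injective mu ∧
      Matrix.det (Matrix.of fun j k : Fin n =>
        ((1 - lam j * (starRingEnd ℂ) (mu k)) ^ 2)⁻¹) = 0 := by
  have : NeZero n := ⟨by omega⟩
  have hn1 : (1 : ℝ) < n - 1 := by
    have : (3 : ℝ) ≤ n := by exact_mod_cast hn
    linarith
  obtain ⟨a, ha1, hq⟩ := exists_norm_lt_one_one_add_mul_pow_eq_zero hn1 (m := 2 * n) (by omega)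
  have ha0 : a ≠ 0 := by rintro rfl; simp [NeZero.ne n] at hq
  set ω := Complex.exp (2 * Real.pi * Complex.I / n)
  have hω : IsPrimitiveRoot ω n := Complex.isPrimitiveRoot_exp n (NeZero.ne n)
  have hω1 : ‖ω‖ = 1 := hω.norm'_eq_one (NeZero.ne n)
  refine ⟨fun j => a * ω ^ (j : ℕ), fun k => conj a * ω ^ (k : ℕ), fun j => ?_, fun k => ?_,
    hω.injective_mul_pow ha0, hω.injective_mul_pow (by simpa), ?_⟩
  · simpa [hω1] using ha1
  · simpa [hω1] using ha1
  have circulant : (Matrix.of fun j k : Fin n =>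
      ((1 - a * ω ^ (j : ℕ) * conj (conj a * ω ^ (k : ℕ))) ^ 2)⁻¹) =
      Matrix.circulant fun l : Fin n => ((1 - a ^ 2 * ω ^ (l : ℕ)) ^ 2)⁻¹ := by
    ext j k
    rw [Matrix.of_apply, Matrix.circulant_apply, mul_pow_mul_conj_conj_mul_pow hω.pow_eq_one]
  rw [circulant]
  refine Matrix.det_circulant_eq_zero ?_
  have hq1 : ‖a ^ 2‖ < 1 := by simpa using pow_lt_one₀ (norm_nonneg a) ha1 two_ne_zero
  rw [Fin.sum_univ_eq_sum_range (fun l => ((1 - a ^ 2 * ω ^ l) ^ 2)⁻¹),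
    hω.sum_inv_one_sub_mul_pow_sq (NeZero.ne n) hq1, ← pow_mul]
  push_cast at hq
  simp [hq]
end

section
/- A balanced domain D ⊆ ℂⁿ belongs to the class 𝓔 if and only if D is convex. -/
/-- `D'` is biholomorphic to `G`: there is a holomorphic bijection `D' → G`
whose inverse is holomorphic. -/
def Biholo {N : ℕ} (D G : Set (Fin N → ℂ)) : Prop :=
  ∃ f g : (Fin N → ℂ) → (Fin N → ℂ),
    DifferentiableOn ℂ f D ∧ DifferentiableOn ℂ g G ∧
    Set.MapsTo f D G ∧ Set.MapsTo g G D ∧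
    (∀ z ∈ D, g (f z) = z) ∧ (∀ w ∈ G, f (g w) = w)

/-- The class `𝓔`: every compact subset of `D` is contained in a subdomain of `D`
that is biholomorphic to a convex (open) domain. -/
def ClassE {N : ℕ} (D : Set (Fin N → ℂ)) : Prop :=
  ∀ K : Set (Fin N → ℂ), IsCompact K → K ⊆ D →
    ∃ D' : Set (Fin N → ℂ), K ⊆ D' ∧ D' ⊆ D ∧ IsOpen D' ∧ IsConnected D' ∧
      ∃ G : Set (Fin N → ℂ), IsOpen G ∧ Convex ℝ G ∧ Biholo D' G

/-!
Convex domains lie in `𝓔` trivially. Conversely, let `D` be balanced and in `𝓔`. Given `x, y ∈ D`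
and a biholomorphism `f : D' → G` onto a convex domain, with `D'` containing the discs `λ x` and
`λ y`, `‖λ‖ ≤ R`, the map `φ λ = f⁻¹ (a f (λ x) + b f (λ y))` sends the disc of radius `R > 1` into
`D`, fixes `0`, and has `φ' 0 = a x + b y`. So it suffices to show `φ' 0 ∈ D` for every such `φ`.

For this, take `f : D' → G` as above with `D'` containing the balanced hull of `φ (closedBall 0 r)`,
`1 < r < R`, and average over rotations: `Φ λ = ⨍ f (e^{-iθ} φ (e^{iθ} λ)) dθ` is holomorphic and,
`G` being convex, takes values in `G`. Writing `φ w = w ψ w`, the integrand is `f (λ ψ (e^{iθ} λ))`,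
so the mean value property gives `Φ λ = f (λ ψ 0) = f (λ φ' 0)` for small `λ`. By the identity
theorem `f⁻¹ (Φ λ) = λ φ' 0` on the disc of radius `r`, and `λ = 1` gives `φ' 0 ∈ D' ⊆ D`.
-/

open Set Metric Real Filter MeasureTheory Function
open scoped Pointwise Topology

section ConvexHull

variable {E : Type*} [NormedAddCommGroup E] [NormedSpace ℝ E]

theorem convexHull_thickening (δ : ℝ) (s : Set E) :
    convexHull ℝ (thickening δ s) = thickening δ (convexHull ℝ s) := by
  rw [← add_ball_zero, ← add_ball_zero, convexHull_add, (convex_ball 0 δ).convexHull_eq]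

theorem IsCompact.closure_convexHull_subset {K G : Set E} (hK : IsCompact K) (hG : IsOpen G)
    (hGc : Convex ℝ G) (hKG : K ⊆ G) : closure (convexHull ℝ K) ⊆ G := by
  obtain ⟨δ, hδ, hKδ⟩ := hK.exists_thickening_subset_open hG hKG
  calc closure (convexHull ℝ K) ⊆ thickening δ (convexHull ℝ K) := closure_subset_thickening hδ _
    _ = convexHull ℝ (thickening δ K) := (convexHull_thickening δ K).symm
    _ ⊆ G := convexHull_min hKδ hGc

theorem Convex.circleAverage_mem [CompleteSpace E] {s : Set E} (hs : Convex ℝ s)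
    (hsc : IsClosed s) {f : ℂ → E} {c : ℂ} {R : ℝ} (hf : CircleIntegrable f c R)
    (hfs : MapsTo f (sphere c |R|) s) : circleAverage f c R ∈ s := by
  rw [circleAverage_eq_intervalAverage]
  refine hs.set_average_mem hsc (by simp) (by rw [Real.volume_uIoc]; exact ENNReal.ofReal_ne_top)
    (ae_of_all _ fun θ => hfs (circleMap_mem_sphere' c R θ)) hf.def'

end ConvexHull

section ParametricCircleAverage

variable {E : Type*} [NormedAddCommGroup E] [NormedSpace ℂ E]

theorem stronglyMeasurable_deriv_with_param_of_differentiableAt {α : Type*} [MeasurableSpace α]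
    {F : α → ℂ → E} {U : Set ℂ} {z₀ : ℂ} (hU : U ∈ 𝓝 z₀)
    (hF : ∀ z ∈ U, StronglyMeasurable fun a => F a z)
    (hd : ∀ a, DifferentiableAt ℂ (F a) z₀) : StronglyMeasurable fun a => deriv (F a) z₀ := by
  obtain ⟨u, hu⟩ := exists_seq_tendsto (𝓝[≠] z₀)
  obtain ⟨N, hN⟩ := eventually_atTop.1 ((tendsto_nhdsWithin_iff.1 hu).1.eventually hU)
  have hu' : Tendsto (fun k => u (k + N)) atTop (𝓝[≠] z₀) := (tendsto_add_atTop_iff_nat N).2 hu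
  refine stronglyMeasurable_of_tendsto atTop (f := fun k a => slope (F a) z₀ (u (k + N)))
    (fun k => ?_) (tendsto_pi_nhds.2 fun a => ((hd a).hasDerivAt.tendsto_slope).comp hu')
  simp only [slope_def_module]
  exact ((hF _ (hN _ (Nat.le_add_left N k))).sub (hF z₀ (mem_of_mem_nhds hU))).const_smul _

theorem differentiableOn_circleAverage {H : ℂ → ℂ → E} {c : ℂ} {R : ℝ} {U : Set ℂ}
    (hU : IsOpen U) (hH : ContinuousOn (uncurry H) (sphere c |R| ×ˢ U))
    (hHd : ∀ μ ∈ sphere c |R|, DifferentiableOn ℂ (H μ) U) :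
    DifferentiableOn ℂ (fun z => circleAverage (H · z) c R) U := by
  intro z₀ hz₀
  obtain ⟨ε, hε, hεU⟩ : ∃ ε > 0, closedBall z₀ (2 * ε) ⊆ U := by
    obtain ⟨δ, hδ, hδU⟩ := Metric.isOpen_iff.1 hU z₀ hz₀
    exact ⟨δ / 4, by positivity, (closedBall_subset_ball (by linarith)).trans hδU⟩
  have hcirc : ∀ θ, circleMap c R θ ∈ sphere c |R| := circleMap_mem_sphere' c R
  obtain ⟨M, hM⟩ := ((isCompact_sphere c |R|).prod (isCompact_closedBall z₀ (2 * ε)))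
    |>.exists_bound_of_continuousOn (hH.mono (prod_mono subset_rfl hεU))
  -- Cauchy's estimate bounds the derivatives uniformly near `z₀`.
  have hbound : ∀ θ, ∀ z ∈ ball z₀ ε, ‖deriv (H (circleMap c R θ)) z‖ ≤ M / ε := by
    intro θ z hz
    have hsub : closedBall z ε ⊆ closedBall z₀ (2 * ε) :=
      closedBall_subset_closedBall' (by linarith [mem_ball.1 hz])
    exact Complex.norm_deriv_le_of_forall_mem_sphere_norm_le hε
      ((hHd _ (hcirc θ)).diffContOnCl_ball (hsub.trans hεU))
      fun w hw => hM (_, w) ⟨hcirc θ, hsub (sphere_subset_closedBall hw)⟩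
  have hcont : ∀ z ∈ U, Continuous fun θ => H (circleMap c R θ) z := fun z hz =>
    hH.comp_continuous ((continuous_circleMap c R).prodMk continuous_const) fun θ => ⟨hcirc θ, hz⟩
  have hderiv : ∀ θ, ∀ z ∈ U, HasDerivAt (H (circleMap c R θ)) (deriv (H (circleMap c R θ)) z) z :=
    fun θ z hz => ((hHd _ (hcirc θ)).differentiableAt (hU.mem_nhds hz)).hasDerivAt
  have hball : ball z₀ ε ⊆ U := ball_subset_closedBall.trans
    ((closedBall_subset_closedBall (by linarith)).trans hεU)
  obtain ⟨-, hint⟩ := intervalIntegral.hasDerivAt_integral_of_dominated_loc_of_deriv_le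
    (μ := volume) (bound := fun _ => M / ε) (ball_mem_nhds z₀ hε)
    (eventually_of_mem (hU.mem_nhds hz₀) fun z hz => (hcont z hz).aestronglyMeasurable)
    ((hcont z₀ hz₀).intervalIntegrable _ _)
    (stronglyMeasurable_deriv_with_param_of_differentiableAt (hU.mem_nhds hz₀)
      (fun z hz => (hcont z hz).stronglyMeasurable)
      fun θ => (hderiv θ z₀ hz₀).differentiableAt).aestronglyMeasurable
    (ae_of_all _ fun θ _ z hz => hbound θ z hz) intervalIntegrable_const
    (ae_of_all _ fun θ _ z hz => hderiv θ z (hball hz))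
  exact (hint.const_smul (2 * π)⁻¹).differentiableAt.differentiableWithinAt

end ParametricCircleAverage

section RotationAverage

variable {E F : Type*} [NormedAddCommGroup E] [NormedSpace ℂ E] [NormedAddCommGroup F]

theorem mul_mem_ball_zero_of_mem_sphere {μ z : ℂ} {ρ : ℝ} (hμ : μ ∈ sphere (0 : ℂ) 1)
    (hz : z ∈ ball (0 : ℂ) ρ) : μ * z ∈ ball (0 : ℂ) ρ := by
  simp_all

theorem continuousOn_rotationAverage_integrand {f : E → F} {φ : ℂ → E} {V : Set E} {ρ : ℝ}
    (hf : ContinuousOn f V) (hφ : ContinuousOn φ (ball 0 ρ))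
    (hφV : ∀ μ ∈ sphere (0 : ℂ) 1, ∀ z ∈ ball (0 : ℂ) ρ, μ⁻¹ • φ (μ * z) ∈ V) :
    ContinuousOn (fun p : ℂ × ℂ => f (p.1⁻¹ • φ (p.1 * p.2))) (sphere 0 1 ×ˢ ball 0 ρ) := by
  refine hf.comp ?_ fun p hp => hφV p.1 hp.1 p.2 hp.2
  exact (continuousOn_fst.inv₀ fun p hp => ne_of_mem_sphere hp.1 one_ne_zero).smul
    (hφ.comp (continuousOn_fst.mul continuousOn_snd) fun p hp =>
      mul_mem_ball_zero_of_mem_sphere hp.1 hp.2)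

variable [NormedSpace ℂ F]

/-- On the unit circle `μ⁻¹ = conj μ`, so this is the mean of `f (e^{-iθ} φ (e^{iθ} z))` over
`θ ∈ [0, 2π]`. -/
noncomputable def rotationAverage (f : E → F) (φ : ℂ → E) (z : ℂ) : F :=
  circleAverage (fun μ => f (μ⁻¹ • φ (μ * z))) 0 1

theorem differentiableOn_rotationAverage {f : E → F} {φ : ℂ → E} {V : Set E} {ρ : ℝ}
    (hf : DifferentiableOn ℂ f V) (hφ : DifferentiableOn ℂ φ (ball 0 ρ))
    (hφV : ∀ μ ∈ sphere (0 : ℂ) 1, ∀ z ∈ ball (0 : ℂ) ρ, μ⁻¹ • φ (μ * z) ∈ V) :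
    DifferentiableOn ℂ (rotationAverage f φ) (ball 0 ρ) := by
  refine differentiableOn_circleAverage (H := fun μ z => f (μ⁻¹ • φ (μ * z))) isOpen_ball
    ?_ ?_ <;> rw [abs_one]
  · exact continuousOn_rotationAverage_integrand hf.continuousOn hφ.continuousOn hφV
  · intro μ hμ
    refine hf.comp (DifferentiableOn.const_smul ?_ μ⁻¹) (hφV μ hμ)
    exact hφ.comp (differentiableOn_id.const_mul μ) fun z hz =>
      mul_mem_ball_zero_of_mem_sphere hμ hz

theorem rotationAverage_eq_of_forall_smul_dslope_mem [CompleteSpace E] [CompleteSpace F]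
    {f : E → F} {φ : ℂ → E} {V : Set E} {ρ : ℝ} (hV : IsOpen V) (hf : DifferentiableOn ℂ f V)
    (hφ : DifferentiableOn ℂ φ (ball 0 ρ)) (hφ0 : φ 0 = 0) {z : ℂ} (hz : ‖z‖ < ρ)
    (hzV : ∀ w ∈ closedBall (0 : ℂ) ‖z‖, z • dslope φ 0 w ∈ V) :
    rotationAverage f φ z = f (z • deriv φ 0) := by
  have hψ : DifferentiableOn ℂ (dslope φ 0) (ball 0 ρ) :=
    (Complex.differentiableOn_dslope (ball_mem_nhds 0 ((norm_nonneg z).trans_lt hz))).2 hφ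
  have hrot : EqOn (fun μ => f (μ⁻¹ • φ (μ * z))) (fun μ => f (z • dslope φ 0 (μ * z)))
      (sphere 0 |1|) := by
    intro μ hμ
    have hμ0 : μ ≠ 0 := ne_of_mem_sphere hμ (by norm_num)
    dsimp only
    rw [← sub_smul_dslope_of_zero hφ0 (μ * z), sub_zero, smul_smul, inv_mul_cancel_left₀ hμ0]
  have hmean : DiffContOnCl ℂ (fun μ => f (z • dslope φ 0 (μ * z))) (ball 0 |1|) := by
    rw [abs_one]
    refine DifferentiableOn.diffContOnCl ?_
    rw [closure_ball 0 one_ne_zero]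
    intro μ hμ
    have hμz : ‖μ * z‖ ≤ ‖z‖ := by
      rw [norm_mul]
      exact mul_le_of_le_one_left (norm_nonneg _) (mem_closedBall_zero_iff.1 hμ)
    have hψμ : DifferentiableAt ℂ (dslope φ 0) (μ * z) :=
      hψ.differentiableAt (isOpen_ball.mem_nhds (mem_ball_zero_iff.2 (hμz.trans_lt hz)))
    have hfμ : DifferentiableAt ℂ f (z • dslope φ 0 (μ * z)) :=
      hf.differentiableAt (hV.mem_nhds (hzV _ (mem_closedBall_zero_iff.2 hμz)))
    exact (hfμ.comp μ ((hψμ.comp μ (differentiableAt_id.mul_const z)).const_smul z))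
      |>.differentiableWithinAt
  rw [rotationAverage, circleAverage_congr_sphere hrot, hmean.circleAverage, zero_mul, dslope_same]

theorem rotationAverage_eventuallyEq [CompleteSpace E] [CompleteSpace F] {f : E → F}
    {φ : ℂ → E} {V : Set E} {ρ : ℝ} (hV : IsOpen V) (hf : DifferentiableOn ℂ f V) (h0V : 0 ∈ V)
    (hρ : 0 < ρ) (hφ : DifferentiableOn ℂ φ (ball 0 ρ)) (hφ0 : φ 0 = 0) :
    rotationAverage f φ =ᶠ[𝓝 0] fun z => f (z • deriv φ 0) := by
  have hψ : ContinuousAt (dslope φ 0) 0 :=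
    ((Complex.differentiableOn_dslope (ball_mem_nhds 0 hρ)).2 hφ).continuousOn.continuousAt
      (ball_mem_nhds 0 hρ)
  have hcont : ContinuousAt (fun p : ℂ × ℂ => p.1 • dslope φ 0 p.2) ((0 : ℂ), (0 : ℂ)) :=
    continuousAt_fst.smul (hψ.comp_of_eq continuousAt_snd rfl)
  have hV0 : V ∈ 𝓝 (((0 : ℂ), (0 : ℂ)).1 • dslope φ 0 (0 : ℂ)) := by simpa using hV.mem_nhds h0V
  obtain ⟨δ, hδ, hδV⟩ := Metric.mem_nhds_iff.1 (hcont.preimage_mem_nhds hV0)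
  filter_upwards [ball_mem_nhds (0 : ℂ) (lt_min hδ hρ)] with z hz
  rw [mem_ball_zero_iff, lt_min_iff] at hz
  refine rotationAverage_eq_of_forall_smul_dslope_mem hV hf hφ hφ0 hz.2 fun w hw => @hδV (z, w) ?_
  rw [← ball_prod_same]
  exact ⟨mem_ball_zero_iff.2 hz.1,
    mem_ball_zero_iff.2 ((mem_closedBall_zero_iff.1 hw).trans_lt hz.1)⟩

end RotationAverage

theorem hasDerivAt_convexCombination_of_leftInverse {E F : Type*} [NormedAddCommGroup E]
    [NormedSpace ℂ E] [NormedAddCommGroup F] [NormedSpace ℂ F] {f : E → F} {g : F → E}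
    (hf : DifferentiableAt ℂ f 0) (hg : DifferentiableAt ℂ g (f 0))
    (hgf : ∀ᶠ z in 𝓝 0, g (f z) = z) (x y : E) {a b : ℝ} (hab : a + b = 1) :
    HasDerivAt (fun lam : ℂ => g (a • f (lam • x) + b • f (lam • y))) (a • x + b • y) 0 := by
  have hid : (fderiv ℂ g (f 0)).comp (fderiv ℂ f 0) = ContinuousLinearMap.id ℂ E :=
    ((hg.hasFDerivAt.comp 0 hf.hasFDerivAt).congr_of_eventuallyEq (hgf.mono fun _ h => h.symm))
      |>.unique (hasFDerivAt_id 0)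
  have hline : ∀ v : E, HasDerivAt (fun lam : ℂ => f (lam • v)) (fderiv ℂ f 0 v) 0 := fun v => by
    simpa [comp_def] using hf.hasFDerivAt.comp_hasDerivAt_of_eq (0 : ℂ)
      ((hasDerivAt_id 0).smul_const v) (zero_smul ℂ v).symm
  have hcomb := hg.hasFDerivAt.comp_hasDerivAt_of_eq (0 : ℂ)
    (((hline x).const_smul a).add ((hline y).const_smul b)) (by simp [Convex.combo_self hab])
  have hval : fderiv ℂ g (f 0) (a • fderiv ℂ f 0 x + b • fderiv ℂ f 0 y) = a • x + b • y := by
    simp only [map_add, ContinuousLinearMap.map_smul_of_tower, ← ContinuousLinearMap.comp_apply,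
      hid, ContinuousLinearMap.id_apply]
  exact hval ▸ hcomb

theorem Balanced.exists_one_lt_smul_mem {E : Type*} [NormedAddCommGroup E] [NormedSpace ℂ E]
    {s : Set E} (hs : Balanced ℂ s) (hso : IsOpen s) {x : E} (hx : x ∈ s) :
    ∃ R > 1, ∀ c : ℂ, ‖c‖ ≤ R → c • x ∈ s := by
  obtain ⟨ε, hε, hεs⟩ := Metric.isOpen_iff.1
    (hso.preimage (continuous_id.smul continuous_const : Continuous fun c : ℂ => c • x)) 1
    (by simpa using hx)
  have hR : ((1 + ε / 2 : ℝ) : ℂ) ∈ ball (1 : ℂ) ε := by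
    rw [mem_ball, Complex.dist_eq, ← Complex.ofReal_one, ← Complex.ofReal_sub, Complex.norm_real,
      Real.norm_eq_abs, abs_of_pos (by linarith)]
    linarith
  have hRx : ((1 + ε / 2 : ℝ) : ℂ) • x ∈ s := hεs hR
  refine ⟨1 + ε / 2, by linarith, fun c hc => hs.smul_mem_mono hRx ?_⟩
  rwa [Complex.norm_real, Real.norm_eq_abs, abs_of_pos (by linarith)]

section ClassE

variable {n : ℕ} {D : Set (Fin n → ℂ)}

theorem ClassE.deriv_mem_of_mapsTo_ball (hE : ClassE D) (hbal : Balanced ℂ D)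
    {φ : ℂ → Fin n → ℂ} {R : ℝ} (hR : 1 < R) (hφ : DifferentiableOn ℂ φ (ball 0 R))
    (hφD : MapsTo φ (ball 0 R) D) (hφ0 : φ 0 = 0) : deriv φ 0 ∈ D := by
  obtain ⟨r, hr1, hrR⟩ := exists_between hR
  set K := closedBall (0 : ℂ) 1 • φ '' closedBall 0 r
  have hK : IsCompact K := (isCompact_closedBall 0 1).smul_set
    ((isCompact_closedBall 0 r).image_of_continuousOn
      (hφ.continuousOn.mono (closedBall_subset_ball hrR)))
  have hKD : K ⊆ D := (smul_subset_smul_left (image_subset_iff.2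
    (hφD.mono_left (closedBall_subset_ball hrR)))).trans (balanced_iff_closedBall_smul.1 hbal)
  obtain ⟨U, hKU, hUD, hU, -, G, hG, hGc, f, g, hf, hg, hfG, hgU, hgf, -⟩ := hE K hK hKD
  have h0U : (0 : Fin n → ℂ) ∈ U :=
    hKU ⟨0, mem_closedBall_self zero_le_one, φ 0, mem_image_of_mem φ (by simp; linarith), by simp⟩
  have hrotK : ∀ μ ∈ sphere (0 : ℂ) 1, ∀ z ∈ ball (0 : ℂ) r, μ⁻¹ • φ (μ * z) ∈ K :=
    fun μ hμ z hz => Set.smul_mem_smul (by simp_all) (mem_image_of_mem φ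
      (ball_subset_closedBall (mul_mem_ball_zero_of_mem_sphere hμ hz)))
  set Φ := rotationAverage f φ
  have hΦ : DifferentiableOn ℂ Φ (ball 0 r) := differentiableOn_rotationAverage hf
    (hφ.mono (ball_subset_ball hrR.le)) fun μ hμ z hz => hKU (hrotK μ hμ z hz)
  -- `Φ` takes values in the closed convex hull of the compact set `f '' K`, which stays in `G`.
  have hΦG : MapsTo Φ (ball 0 r) G := by
    intro z hz
    have hKG : f '' K ⊆ G := image_subset_iff.2 fun _ h => hfG (hKU h)
    refine (hK.image_of_continuousOn (hf.continuousOn.mono hKU)).closure_convexHull_subset hG hGc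
      hKG ?_
    rw [show Φ z = circleAverage (fun μ => f (μ⁻¹ • φ (μ * z))) 0 1 from rfl]
    refine (convex_convexHull ℝ _).closure.circleAverage_mem isClosed_closure ?_ ?_
    · have hcont : ContinuousOn (fun μ : ℂ => f (μ⁻¹ • φ (μ * z))) (sphere 0 1) :=
        (continuousOn_rotationAverage_integrand hf.continuousOn
          (hφ.continuousOn.mono (ball_subset_ball hrR.le)) fun μ hμ z hz => hKU (hrotK μ hμ z hz))
          |>.comp (f := fun μ : ℂ => (μ, z)) (by fun_prop) fun μ hμ => ⟨hμ, hz⟩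
      exact ContinuousOn.circleIntegrable' (by rwa [abs_one])
    · rw [abs_one]
      exact fun μ hμ =>
        subset_closure (subset_convexHull ℝ _ (mem_image_of_mem f (hrotK μ hμ z hz)))
  have hnear : g ∘ Φ =ᶠ[𝓝 0] fun z => z • deriv φ 0 := by
    have hX : ∀ᶠ z in 𝓝 (0 : ℂ), z • deriv φ 0 ∈ U :=
      (continuous_id.smul continuous_const).continuousAt.preimage_mem_nhds
        (by simpa using hU.mem_nhds h0U)
    filter_upwards [rotationAverage_eventuallyEq hU hf h0U (by linarith) hφ hφ0, hX]
      with z hz hzU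
    simp only [comp_apply, Φ, hz, hgf _ hzU]
  have heq : EqOn (g ∘ Φ) (fun z => z • deriv φ 0) (ball 0 r) :=
    ((hg.comp hΦ hΦG).analyticOnNhd isOpen_ball).eqOn_of_preconnected_of_eventuallyEq
      ((differentiable_id.smul_const _).differentiableOn.analyticOnNhd isOpen_ball)
      (convex_ball 0 r).isPreconnected (mem_ball_self (by linarith)) hnear
  have h1 : (1 : ℂ) ∈ ball 0 r := by simpa using hr1
  have hg1 : g (Φ 1) = deriv φ 0 := by simpa using heq h1
  exact hg1 ▸ hUD (hgU (hΦG h1))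

theorem ClassE.convex (hE : ClassE D) (hD : IsOpen D) (hbal : Balanced ℂ D) : Convex ℝ D := by
  intro x hx y hy a b ha hb hab
  obtain ⟨Rx, hRx, hx'⟩ := hbal.exists_one_lt_smul_mem hD hx
  obtain ⟨Ry, hRy, hy'⟩ := hbal.exists_one_lt_smul_mem hD hy
  obtain ⟨R, hR, hRRx, hRRy⟩ : ∃ R > 1, R ≤ Rx ∧ R ≤ Ry :=
    ⟨min Rx Ry, lt_min hRx hRy, min_le_left _ _, min_le_right _ _⟩
  set K := closedBall (0 : ℂ) R • ({x, y} : Set (Fin n → ℂ))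
  have hK : IsCompact K := (isCompact_closedBall _ _).smul_set (toFinite _).isCompact
  have hKD : K ⊆ D := by
    rintro _ ⟨c, hc, v, rfl | rfl, rfl⟩ <;> rw [mem_closedBall_zero_iff] at hc
    exacts [hx' c (hc.trans hRRx), hy' c (hc.trans hRRy)]
  obtain ⟨U, hKU, hUD, hU, -, G, hG, hGc, f, g, hf, hg, hfG, hgU, hgf, -⟩ := hE K hK hKD
  have hline : ∀ v ∈ ({x, y} : Set (Fin n → ℂ)), MapsTo (fun c : ℂ => c • v) (ball 0 R) U :=
    fun v hv c hc => hKU (Set.smul_mem_smul (ball_subset_closedBall hc) hv)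
  have hxU := hline x (by simp)
  have hyU := hline y (by simp)
  have hcomb : MapsTo (fun c : ℂ => a • f (c • x) + b • f (c • y)) (ball 0 R) G :=
    fun c hc => hGc (hfG (hxU hc)) (hfG (hyU hc)) ha hb hab
  have hφ : DifferentiableOn ℂ (fun c : ℂ => g (a • f (c • x) + b • f (c • y))) (ball 0 R) :=
    hg.comp (((hf.comp (differentiable_id.smul_const x).differentiableOn hxU).const_smul a).add
      ((hf.comp (differentiable_id.smul_const y).differentiableOn hyU).const_smul b)) hcomb
  have h0U : (0 : Fin n → ℂ) ∈ U := by simpa using hxU (mem_ball_self (by positivity))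
  have hderiv := hasDerivAt_convexCombination_of_leftInverse
    (hf.differentiableAt (hU.mem_nhds h0U)) (hg.differentiableAt (hG.mem_nhds (hfG h0U)))
    (eventually_of_mem (hU.mem_nhds h0U) hgf) x y hab
  rw [← hderiv.deriv]
  refine hE.deriv_mem_of_mapsTo_ball hbal hR hφ (fun c hc => hUD (hgU (hcomb hc))) ?_
  simp [Convex.combo_self hab, hgf 0 h0U]

theorem Convex.classE (hconv : Convex ℝ D) (hD : IsOpen D) (hDc : IsConnected D) :
    ClassE D := fun _ _ hKD =>
  ⟨D, hKD, subset_rfl, hD, hDc, D, hD, hconv, id, id, differentiableOn_id, differentiableOn_id,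
    mapsTo_id D, mapsTo_id D, fun _ _ => rfl, fun _ _ => rfl⟩

end ClassE

/-- a balanced domain `D ⊆ ℂⁿ` belongs to the class `𝓔`
if and only if `D` is convex. -/
theorem balanced_classE_iff_convex {n : ℕ} (D : Set (Fin n → ℂ))
    (hDopen : IsOpen D) (hDconn : IsConnected D)
    (hbal : ∀ lam : ℂ, ‖lam‖ ≤ 1 → ∀ z ∈ D, lam • z ∈ D) :
    ClassE D ↔ Convex ℝ D :=
  have hD : Balanced ℂ D := balanced_iff_smul_mem.2 fun c hc z hz => hbal c hc z hz
  ⟨fun hE => hE.convex hDopen hD, fun hconv => hconv.classE hDopen hDconn⟩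
end

section
/- Let m = ⌊n/2⌋ and let G_n ⊆ ℂ^{n−m} be the set of tuples (a_{m+1},…,a_n) such that all complex zeroes of the polynomial f(ζ) = ζⁿ + Σ_{j=m+1}^{n} a_j ζ^{n−j} lie in the open unit disc 𝔻. Then for every n ≥ 3 the set G_n is not convex. -/
/-!
If `ζ ^ n + u ζ ^ j + v ζ ^ l` has all its zeroes in the unit disc, so does its conjugate
`ζ ^ n + ū ζ ^ j + v̄ ζ ^ l`, and the midpoint `ζ ^ n + (Re u) ζ ^ j + (Re v) ζ ^ l` is real.
When `1 + Re u + Re v < 0` this real polynomial is negative at `1` and positive at infinity, so it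
has a zero in `[1, ∞)`. Such trinomials exist among the polynomials `ζ ^ e q(ζ ^ d)`, where
`q(w) = w ^ k + u w + v` (`k = 3` or `4`) is chosen with explicit roots in the disc whose
first `k - 2` elementary symmetric functions vanish.
-/

open ComplexConjugate

theorem Fintype.sum_pi_single_mul {ι R : Type*} [Fintype ι] [DecidableEq ι]
    [NonUnitalNonAssocSemiring R] (i₀ : ι) (c : R) (f : ι → R) :
    ∑ i, (Pi.single i₀ c : ι → R) i * f i = c * f i₀ := by
  simp [← Pi.single_mul_left_apply]

theorem Complex.norm_lt_one_of_normSq_lt_one {z : ℂ} (h : Complex.normSq z < 1) : ‖z‖ < 1 := by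
  rwa [← sq_lt_one_iff₀ (norm_nonneg z), Complex.sq_norm]

def schurStableTrinomials (n j l : ℕ) : Set (ℂ × ℂ) :=
  {p | ∀ ζ : ℂ, ζ ^ n + p.1 * ζ ^ j + p.2 * ζ ^ l = 0 → ‖ζ‖ < 1}

/-- The coordinate `i` is the coefficient `a_{m+1+i}` of `ζ ^ (n - m - 1 - i)`, `m = n / 2`. -/
def schurStableLowerCoeffs (n : ℕ) : Set (Fin (n - n / 2) → ℂ) :=
  {a | ∀ ζ : ℂ, ζ ^ n + ∑ i : Fin (n - n / 2), a i * ζ ^ (n - (n / 2 + 1 + i.val)) = 0 →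
    ‖ζ‖ < 1}

theorem conj_mem_schurStableTrinomials {n j l : ℕ} {p : ℂ × ℂ}
    (hp : p ∈ schurStableTrinomials n j l) :
    (conj p.1, conj p.2) ∈ schurStableTrinomials n j l := by
  intro ζ hζ
  rw [← Complex.norm_conj]
  exact hp (conj ζ) (by simpa using congrArg conj hζ)

theorem exists_one_le_root_of_one_add_add_neg {n j l : ℕ} (hj : j < n) (hl : l < n) {α β : ℝ}
    (h : 1 + α + β < 0) : ∃ x : ℝ, 1 ≤ x ∧ x ^ n + α * x ^ j + β * x ^ l = 0 := by
  set X := 1 + |α| + |β|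
  have hX : 1 ≤ X := by linarith [abs_nonneg α, abs_nonneg β]
  have hX_nonneg : 0 ≤ X ^ n + α * X ^ j + β * X ^ l := by
    have hj' : X ^ j ≤ X ^ (n - 1) := pow_le_pow_right₀ hX (by omega)
    have hl' : X ^ l ≤ X ^ (n - 1) := pow_le_pow_right₀ hX (by omega)
    have hn : X ^ n = X * X ^ (n - 1) := by rw [← pow_succ']; congr 1; omega
    nlinarith [neg_abs_le α, neg_abs_le β, abs_nonneg α, abs_nonneg β,
      pow_nonneg (zero_le_one.trans hX) j, pow_nonneg (zero_le_one.trans hX) l]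
  have hcont : ContinuousOn (fun x : ℝ => x ^ n + α * x ^ j + β * x ^ l) (Set.Icc 1 X) := by
    fun_prop
  obtain ⟨x, hx, hx0⟩ := intermediate_value_Icc hX hcont ⟨by simpa using h.le, hX_nonneg⟩
  exact ⟨x, hx.1, hx0⟩

theorem not_convex_schurStableTrinomials {n j l : ℕ} (hj : j < n) (hl : l < n) {p : ℂ × ℂ}
    (hp : p ∈ schurStableTrinomials n j l) (hre : 1 + p.1.re + p.2.re < 0) :
    ¬ Convex ℝ (schurStableTrinomials n j l) := by
  intro hconv
  have hmid : ((p.1.re : ℂ), (p.2.re : ℂ)) ∈ schurStableTrinomials n j l := by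
    convert hconv hp (conj_mem_schurStableTrinomials hp) (by norm_num : (0 : ℝ) ≤ 1 / 2)
      (by norm_num : (0 : ℝ) ≤ 1 / 2) (by norm_num) using 1
    ext <;> simp [Complex.ext_iff] <;> ring
  obtain ⟨x, hx1, hx⟩ := exists_one_le_root_of_one_add_add_neg hj hl hre
  have hx_lt := hmid x (by push_cast; exact_mod_cast hx)
  rw [Complex.norm_real, Real.norm_eq_abs, abs_of_nonneg (by linarith)] at hx_lt
  linarith

theorem schurStableTrinomials_subset {k d : ℕ} (e : ℕ) (hd : d ≠ 0) :
    schurStableTrinomials k 1 0 ⊆ schurStableTrinomials (e + k * d) (e + d) e := by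
  intro p hp ζ hζ
  rcases eq_or_ne ζ 0 with rfl | hζ0
  · simp
  have hfactor : ζ ^ (e + k * d) + p.1 * ζ ^ (e + d) + p.2 * ζ ^ e
      = ζ ^ e * ((ζ ^ d) ^ k + p.1 * (ζ ^ d) ^ 1 + p.2 * (ζ ^ d) ^ 0) := by ring
  rw [hfactor, mul_eq_zero] at hζ
  have hζd := hp _ (hζ.resolve_left (pow_ne_zero _ hζ0))
  rwa [norm_pow, pow_lt_one_iff_of_nonneg (norm_nonneg _) hd] at hζd

theorem norm_lt_one_of_prod_sub_eq_zero {s : Multiset ℂ} (hs : ∀ r ∈ s, ‖r‖ < 1) {w : ℂ}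
    (hw : (s.map (w - ·)).prod = 0) : ‖w‖ < 1 := by
  obtain ⟨r, hr, hwr⟩ := Multiset.mem_map.mp (Multiset.prod_eq_zero_iff.mp hw)
  rw [sub_eq_zero.mp hwr]
  exact hs r hr

theorem cubic_mem_schurStableTrinomials {r₁ r₂ r₃ : ℂ} (hsum : r₁ + r₂ + r₃ = 0)
    (h₁ : ‖r₁‖ < 1) (h₂ : ‖r₂‖ < 1) (h₃ : ‖r₃‖ < 1) :
    (r₁ * r₂ + r₁ * r₃ + r₂ * r₃, -(r₁ * r₂ * r₃)) ∈ schurStableTrinomials 3 1 0 := by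
  intro w hw
  refine norm_lt_one_of_prod_sub_eq_zero (s := {r₁, r₂, r₃}) (by simp [*]) ?_
  simp only [Multiset.insert_eq_cons, Multiset.map_cons, Multiset.prod_cons,
    Multiset.map_singleton, Multiset.prod_singleton]
  linear_combination hw - w ^ 2 * hsum

theorem quartic_mem_schurStableTrinomials {r₁ r₂ r₃ r₄ : ℂ} (hsum : r₁ + r₂ + r₃ + r₄ = 0)
    (hpair : r₁ * r₂ + r₁ * r₃ + r₁ * r₄ + r₂ * r₃ + r₂ * r₄ + r₃ * r₄ = 0)
    (h₁ : ‖r₁‖ < 1) (h₂ : ‖r₂‖ < 1) (h₃ : ‖r₃‖ < 1) (h₄ : ‖r₄‖ < 1) :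
    (-(r₁ * r₂ * r₃ + r₁ * r₂ * r₄ + r₁ * r₃ * r₄ + r₂ * r₃ * r₄), r₁ * r₂ * r₃ * r₄)
      ∈ schurStableTrinomials 4 1 0 := by
  intro w hw
  refine norm_lt_one_of_prod_sub_eq_zero (s := {r₁, r₂, r₃, r₄}) (by simp [*]) ?_
  simp only [Multiset.insert_eq_cons, Multiset.map_cons, Multiset.prod_cons,
    Multiset.map_singleton, Multiset.prod_singleton]
  linear_combination hw - w ^ 3 * hsum + w ^ 2 * hpair

/- `1 + u + v = (1 - r₁)(1 - r₂)(1 - r₃)` has negative real part only in a thin region with `r₂`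
near `1`; these roots were found by a numerical search. -/
theorem exists_mem_schurStableTrinomials_three :
    ∃ p ∈ schurStableTrinomials 3 1 0, 1 + p.1.re + p.2.re < 0 := by
  set r₁ : ℂ := ⟨-19 / 126, -55 / 126⟩
  set r₂ : ℂ := ⟨125 / 126, -13 / 126⟩
  set r₃ : ℂ := ⟨-106 / 126, 68 / 126⟩
  refine ⟨_, cubic_mem_schurStableTrinomials (r₁ := r₁) (r₂ := r₂) (r₃ := r₃) ?_ ?_ ?_ ?_, ?_⟩
  all_goals first
    | (apply Complex.norm_lt_one_of_normSq_lt_one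
       simp [r₁, r₂, r₃, Complex.normSq_apply]; norm_num)
    | (simp [r₁, r₂, r₃, Complex.ext_iff]; norm_num)

/- The roots are `a ± b`, `-a ± b'` with `a = 13c`, `b = 7ic`, `b' = 17ic`,
`c = (-30 + 37i) / 1020`: such numbers have `e₁ = 0`, and `e₂ = -2a² - b² - b'² = 0`. -/
theorem exists_mem_schurStableTrinomials_four :
    ∃ p ∈ schurStableTrinomials 4 1 0, 1 + p.1.re + p.2.re < 0 := by
  set r₁ : ℂ := ⟨-649 / 1020, 271 / 1020⟩
  set r₂ : ℂ := ⟨-131 / 1020, 691 / 1020⟩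
  set r₃ : ℂ := ⟨1019 / 1020, 29 / 1020⟩
  set r₄ : ℂ := ⟨-239 / 1020, -991 / 1020⟩
  refine ⟨_, quartic_mem_schurStableTrinomials (r₁ := r₁) (r₂ := r₂) (r₃ := r₃) (r₄ := r₄)
    ?_ ?_ ?_ ?_ ?_ ?_, ?_⟩
  all_goals first
    | (apply Complex.norm_lt_one_of_normSq_lt_one
       simp [r₁, r₂, r₃, r₄, Complex.normSq_apply]; norm_num)
    | (simp [r₁, r₂, r₃, r₄, Complex.ext_iff]; norm_num)

theorem exists_schurStableTrinomials_witness {n : ℕ} (hn : 3 ≤ n) :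
    ∃ k d e : ℕ, n = e + k * d ∧ d ≠ 0 ∧ e + d < n - n / 2 ∧
      ∃ p ∈ schurStableTrinomials k 1 0, 1 + p.1.re + p.2.re < 0 := by
  -- For `n = 4, 5, 8` the cubic choice `d = n / 3` puts the middle term too high.
  by_cases h458 : n = 4 ∨ n = 5 ∨ n = 8
  · exact ⟨4, n / 4, n % 4, by omega, by omega, by omega, exists_mem_schurStableTrinomials_four⟩
  · exact ⟨3, n / 3, n % 3, by omega, by omega, by omega, exists_mem_schurStableTrinomials_three⟩

theorem convex_schurStableTrinomials_of_convex {n j l : ℕ} (hj : j < n - n / 2)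
    (hl : l < n - n / 2) (hconv : Convex ℝ (schurStableLowerCoeffs n)) :
    Convex ℝ (schurStableTrinomials n j l) := by
  let idx (k : ℕ) (hk : k < n - n / 2) : Fin (n - n / 2) := ⟨n - n / 2 - 1 - k, by omega⟩
  let f : ℂ × ℂ →ₗ[ℝ] Fin (n - n / 2) → ℂ :=
    LinearMap.single ℝ (fun _ => ℂ) (idx j hj) ∘ₗ LinearMap.fst ℝ ℂ ℂ +
      LinearMap.single ℝ (fun _ => ℂ) (idx l hl) ∘ₗ LinearMap.snd ℝ ℂ ℂ
  have hsum (p : ℂ × ℂ) (ζ : ℂ) :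
      ∑ i : Fin (n - n / 2), f p i * ζ ^ (n - (n / 2 + 1 + i.val))
        = p.1 * ζ ^ j + p.2 * ζ ^ l := by
    simp only [f, LinearMap.add_apply, LinearMap.comp_apply, LinearMap.coe_single, Pi.add_apply,
      add_mul, Finset.sum_add_distrib, Fintype.sum_pi_single_mul, LinearMap.fst_apply,
      LinearMap.snd_apply]
    congr 3 <;> simp only [idx] <;> omega
  have hpre : schurStableTrinomials n j l = f ⁻¹' schurStableLowerCoeffs n := by
    ext p
    simp only [Set.mem_preimage, schurStableLowerCoeffs, Set.mem_ofPred_eq, hsum, ← add_assoc]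
    rfl
  rw [hpre]
  exact hconv.linear_preimage f

/-- let `m = ⌊n/2⌋` and let `G_n ⊆ ℂ^{n-m}` be the set of tuples
`(a_{m+1}, …, a_n)` such that all complex zeroes of
`f(ζ) = ζⁿ + Σ_{j=m+1}^{n} a_j ζ^{n-j}` lie in the open unit disc.
Then for every `n ≥ 3` the set `G_n` is not convex. -/
theorem Gn_not_convex (n : ℕ) (hn : 3 ≤ n) :
    ¬ Convex ℝ {a : Fin (n - n / 2) → ℂ |
        ∀ ζ : ℂ, ζ ^ n + ∑ i : Fin (n - n / 2), a i * ζ ^ (n - (n / 2 + 1 + i.val)) = 0 →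
          ‖ζ‖ < 1} := by
  intro hconv
  obtain ⟨k, d, e, hn_eq, hd, hed, p, hp, hre⟩ := exists_schurStableTrinomials_witness hn
  have hp_n : p ∈ schurStableTrinomials n (e + d) e :=
    hn_eq ▸ schurStableTrinomials_subset e hd hp
  exact not_convex_schurStableTrinomials (by omega) (by omega) hp_n hre
    (convex_schurStableTrinomials_of_convex (by omega) (by omega) hconv)
end

section
/- Every weakly linearly convex balanced domain D ⊆ ℂⁿ is convex. -/
/-! If a convex combination `z` of two points of `D` were outside `D`, the segment `[0, z]` would
meet `∂D` at some `p`. For a hyperplane `{φ = φ p}` missing `D`, balancedness gives `‖φ‖ < ‖φ p‖`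
on `D`: otherwise a rescaled point of `D` would lie on the hyperplane. This condition is convex, so
it holds at `z`, whereas `‖φ p‖ ≤ ‖φ z‖` because `p` lies between `0` and `z`. -/

open Set Metric

theorem IsPreconnected.inter_frontier_nonempty {X : Type*} [TopologicalSpace X] {s t : Set X}
    (hs : IsPreconnected s) (hst : (s ∩ t).Nonempty) (hst' : (s \ t).Nonempty) :
    (s ∩ frontier t).Nonempty := by
  by_contra! h
  have hsub : s ⊆ interior t ∪ (closure t)ᶜ := fun x hx => by
    by_cases hxc : x ∈ closure t
    · exact .inl (by_contra fun hxi => h.subset ⟨hx, hxc, hxi⟩)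
    · exact .inr hxc
  obtain ⟨x, -, hxi, hxc⟩ := hs _ _ isOpen_interior isClosed_closure.isOpen_compl hsub
    (hst.mono fun x hx => ⟨hx.1, (hsub hx.1).resolve_right (not_not.2 (subset_closure hx.2))⟩)
    (hst'.mono fun x hx => ⟨hx.1, (hsub hx.1).resolve_left fun hxi => hx.2 (interior_subset hxi)⟩)
  exact hxc (interior_subset_closure hxi)

section

variable {𝕜 E : Type*} [RCLike 𝕜] [AddCommGroup E] [Module 𝕜 E]

theorem Balanced.norm_apply_lt_of_forall_apply_ne {D : Set E} (hD : Balanced 𝕜 D)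
    {φ : E →ₗ[𝕜] 𝕜} {a : E} (ha : ∀ w ∈ D, φ w ≠ φ a) {w : E} (hw : w ∈ D) :
    ‖φ w‖ < ‖φ a‖ := by
  by_contra! hle
  have hw0 : φ w ≠ 0 := fun h0 => ha w hw (by simpa [h0, eq_comm] using hle)
  have hc : ‖φ a / φ w‖ ≤ 1 := by
    rw [norm_div]
    exact div_le_one_of_le₀ hle (norm_nonneg _)
  exact ha _ (hD.smul_mem hc hw) (by rw [map_smul, smul_eq_mul, div_mul_cancel₀ _ hw0])

variable [Module ℝ E] [IsScalarTower ℝ 𝕜 E] [TopologicalSpace E] [ContinuousAdd E]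
  [ContinuousSMul ℝ E]

theorem Balanced.convex_of_forall_frontier_exists {D : Set E} (hD : Balanced 𝕜 D)
    (hwlc : ∀ a ∈ frontier D, ∃ φ : E →ₗ[𝕜] 𝕜, ∀ w ∈ D, φ w ≠ φ a) : Convex ℝ D := by
  intro x hx y hy s t hs ht hst
  set z := s • x + t • y
  by_contra hz
  obtain ⟨p, hp, hpD⟩ := (convex_segment (0 : E) z).isPreconnected.inter_frontier_nonempty
    ⟨0, left_mem_segment ℝ _ _, hD.zero_mem ⟨x, hx⟩⟩ ⟨z, right_mem_segment ℝ _ _, hz⟩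
  obtain ⟨φ, hφ⟩ := hwlc p hpD
  have hDball : D ⊆ φ.restrictScalars ℝ ⁻¹' ball 0 ‖φ p‖ := fun w hw =>
    mem_ball_zero_iff.2 (hD.norm_apply_lt_of_forall_apply_ne hφ hw)
  have hzlt : ‖φ z‖ < ‖φ p‖ := mem_ball_zero_iff.1 <|
    (convex_ball _ _).linear_preimage _ (hDball hx) (hDball hy) hs ht hst
  have hple : ‖φ p‖ ≤ ‖φ z‖ := mem_closedBall_zero_iff.1 <|
    ((convex_closedBall _ _).linear_preimage (φ.restrictScalars ℝ)).segment_subset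
      (by simp) (by simp) hp
  exact hple.not_gt hzlt

end

theorem weaklyLinearlyConvex_balanced_convex_general {n : ℕ} (D : Set (Fin n → ℂ))
    (hbal : ∀ lam : ℂ, ‖lam‖ ≤ 1 → ∀ z ∈ D, lam • z ∈ D)
    (hwlc : ∀ a ∈ frontier D, ∃ φ : (Fin n → ℂ) →ₗ[ℂ] ℂ, φ ≠ 0 ∧
      ∀ z ∈ D, φ z ≠ φ a) :
    Convex ℝ D := by
  have hD : Balanced ℂ D := balanced_iff_smul_mem.2 fun lam hlam z hz => hbal lam hlam z hz
  exact hD.convex_of_forall_frontier_exists fun a ha => (hwlc a ha).imp fun _ => And.right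

/-- every weakly linearly convex balanced domain `D ⊆ ℂⁿ` is convex.
Weak linear convexity: through every boundary point `a ∈ ∂D` there passes a complex
affine hyperplane (here `{z | φ z = φ a}` for a nonzero `ℂ`-linear functional `φ`)
disjoint from `D`. -/
theorem weaklyLinearlyConvex_balanced_convex {n : ℕ} (D : Set (Fin n → ℂ))
    (hDopen : IsOpen D) (hDconn : IsConnected D)
    (hbal : ∀ lam : ℂ, ‖lam‖ ≤ 1 → ∀ z ∈ D, lam • z ∈ D)
    (hwlc : ∀ a ∈ frontier D, ∃ φ : (Fin n → ℂ) →ₗ[ℂ] ℂ, φ ≠ 0 ∧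
      ∀ z ∈ D, φ z ≠ φ a) :
    Convex ℝ D :=
  weaklyLinearlyConvex_balanced_convex_general D hbal hwlc
end

section
/- Let D ⊂ ℂⁿ be a bounded domain with the following property: for each point a ∈ ∂D there exist a neighborhood U_a of a and a holomorphic function f_a on D ∩ U_a such that |f_a(z)| → ∞ as z → a. Then D is a taut domain: for every sequence of holomorphic maps ψ_j : 𝔻 → D there is a subsequence which either converges locally uniformly on 𝔻 to a holomorphic map ψ : 𝔻 → D, or is compactly divergent (for every compact K ⊂ 𝔻 and every compact L ⊂ D one has ψ_j(K) ∩ L = ∅ for all sufficiently large j). In particular D is pseudoconvex. -/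
/-!
By Montel's theorem a subsequence of `ψ j` converges locally uniformly on `𝔻` to a holomorphic
`ψ₀` with values in `closure D`. The set `{z | ψ₀ z ∈ D}` is open, and so is its complement in
`𝔻`: if `ψ₀ z₀ = a ∈ ∂D`, then near `z₀` the functions `1 / (f_a ∘ ψ j)` are holomorphic, bounded
by `1` and zero-free, and a further subsequence converges to a limit vanishing at `z₀`. By
Hurwitz's theorem this limit vanishes identically, whereas at a point `z` with `ψ₀ z ∈ D` it equals
`1 / f_a (ψ₀ z) ≠ 0`. As `𝔻` is connected, either `ψ₀` maps `𝔻` into `D`, or `ψ₀ (𝔻) ⊆ ∂D` and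
the subsequence is compactly divergent.
-/

open Filter Metric Set Topology

theorem IsPreconnected.mapsTo_or_mapsTo_compl {α β : Type*} [TopologicalSpace α] {S : Set α}
    {D : Set β} {f : α → β} (hS : IsPreconnected S) (hin : IsOpen (S ∩ f ⁻¹' D))
    (hout : IsOpen (S \ f ⁻¹' D)) : MapsTo f S D ∨ MapsTo f S Dᶜ := by
  refine (isPreconnected_iff_subset_of_disjoint.1 hS _ _ hin hout (fun z hz => ?_) ?_).imp
    (fun h z hz => (h hz).2) (fun h z hz => (h hz).2)
  · by_cases h : f z ∈ D
    exacts [Or.inl ⟨hz, h⟩, Or.inr ⟨hz, h⟩]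
  · ext; simp +contextual

theorem TendstoLocallyUniformlyOn.exists_ball_eventually_mapsTo {ι X Y : Type*}
    [PseudoMetricSpace X] [PseudoMetricSpace Y] {l : Filter ι} {F : ι → X → Y} {f : X → Y}
    {S : Set X} {W : Set Y} {x₀ : X} (hlim : TendstoLocallyUniformlyOn F f l S)
    (hS : S ∈ 𝓝 x₀) (hf : ContinuousAt f x₀) (hW : W ∈ 𝓝 (f x₀)) :
    ∃ r > 0, ball x₀ r ⊆ S ∧ MapsTo f (ball x₀ r) W ∧ ∀ᶠ i in l, MapsTo (F i) (ball x₀ r) W := by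
  obtain ⟨ε, hε, hεW⟩ := Metric.mem_nhds_iff.1 hW
  obtain ⟨t, ht, hunif⟩ := hlim _ (dist_mem_uniformity (half_pos hε)) x₀ (mem_of_mem_nhds hS)
  rw [nhdsWithin_eq_nhds.2 hS] at ht
  obtain ⟨r, hr, hrsub⟩ := Metric.mem_nhds_iff.1 <| inter_mem (inter_mem hS ht) <|
    hf.preimage_mem_nhds (ball_mem_nhds _ (half_pos hε))
  refine ⟨r, hr, fun z hz => (hrsub hz).1.1,
    fun z hz => hεW (ball_subset_ball (half_le_self hε.le) (hrsub hz).2), ?_⟩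
  filter_upwards [hunif] with i hi z hz
  apply hεW
  calc dist (F i z) (f x₀) ≤ dist (F i z) (f z) + dist (f z) (f x₀) := dist_triangle _ _ _
    _ < ε / 2 + ε / 2 := add_lt_add (by rw [dist_comm]; exact hi z (hrsub hz).1.2) (hrsub hz).2
    _ = ε := add_halves ε

theorem TendstoUniformlyOn.eventually_forall_notMem {ι α β : Type*} [PseudoMetricSpace β]
    {l : Filter ι} {F : ι → α → β} {f : α → β} {K : Set α} {D L : Set β}
    (hlim : TendstoUniformlyOn F f l K) (hD : IsOpen D) (hL : IsCompact L) (hLD : L ⊆ D)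
    (hf : MapsTo f K Dᶜ) : ∀ᶠ i in l, ∀ x ∈ K, F i x ∉ L := by
  obtain ⟨ε, hε, hthick⟩ := hL.exists_thickening_subset_open hD hLD
  filter_upwards [Metric.tendstoUniformlyOn_iff.1 hlim ε hε] with i hi x hx hxL
  exact hf hx (hthick (mem_thickening_iff.2 ⟨F i x, hxL, hi x hx⟩))

theorem exists_sphere_of_eventually_nhdsNE {X : Type*} [PseudoMetricSpace X] {p : X → Prop}
    {U : Set X} {x₀ : X} (hU : U ∈ 𝓝 x₀) (hp : ∀ᶠ x in 𝓝[≠] x₀, p x) :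
    ∃ ρ > 0, closedBall x₀ ρ ⊆ U ∧ ∀ x ∈ sphere x₀ ρ, p x := by
  obtain ⟨ε, hε, hball⟩ :=
    Metric.eventually_nhds_iff_ball.1 ((eventually_nhdsWithin_iff.1 hp).and hU)
  refine ⟨ε / 2, by positivity, fun x hx => (hball x (closedBall_subset_ball (by linarith) hx)).2,
    fun x hx => (hball x (sphere_subset_ball (by linarith) hx)).1 ?_⟩
  rintro rfl
  simp only [mem_sphere, dist_self] at hx
  linarith

theorem uniformCauchySeqOn_of_dist_le_mul_dist {X Y : Type*} [PseudoMetricSpace X]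
    [PseudoMetricSpace Y] {F : ℕ → X → Y} {S A K : Set X} {C : ℝ}
    (hlip : ∀ j, ∀ x ∈ S, ∀ y ∈ S, dist (F j x) (F j y) ≤ C * dist x y)
    (hA : ∀ a ∈ A, CauchySeq fun j => F j a) (hK : IsCompact K) (hKS : K ⊆ S) (hAS : A ⊆ S)
    (hKA : K ⊆ closure A) : UniformCauchySeqOn F atTop K := by
  intro u hu
  obtain ⟨ε, hε, hεu⟩ := Metric.mem_uniformity_dist.1 hu
  obtain ⟨δ, hδ, hCδ⟩ : ∃ δ > 0, |C| * δ < ε / 3 :=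
    ⟨ε / (3 * (|C| + 1)), by positivity, by
      rw [mul_div_assoc', div_lt_div_iff₀ (by positivity) (by norm_num)]; nlinarith [abs_nonneg C]⟩
  obtain ⟨T, hTA, hTfin, hKT⟩ := hK.elim_finite_subcover_image (b := A) (c := fun a => ball a δ)
    (fun _ _ => isOpen_ball) fun x hx => by
      obtain ⟨a, ha, hxa⟩ := Metric.mem_closure_iff.1 (hKA hx) δ hδ
      exact mem_biUnion ha (mem_ball.2 hxa)
  have hT : ∀ᶠ p : ℕ × ℕ in atTop ×ˢ atTop, ∀ a ∈ T, dist (F p.1 a) (F p.2 a) < ε / 3 := by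
    rw [prod_atTop_atTop_eq]
    exact hTfin.eventually_all.2 fun a ha =>
      (hA a (hTA ha)).tendsto_uniformity.eventually (dist_mem_uniformity (by positivity))
  filter_upwards [hT] with p hp x hx
  obtain ⟨a, ha, hxa⟩ := mem_iUnion₂.1 (hKT hx)
  have hclose : ∀ j, dist (F j x) (F j a) ≤ |C| * δ := fun j =>
    (hlip j x (hKS hx) a (hAS (hTA ha))).trans
      (mul_le_mul (le_abs_self C) (mem_ball.1 hxa).le dist_nonneg (abs_nonneg C))
  apply hεu
  calc dist (F p.1 x) (F p.2 x)
      ≤ dist (F p.1 x) (F p.1 a) + dist (F p.1 a) (F p.2 a) + dist (F p.2 x) (F p.2 a) := by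
        rw [dist_comm (F p.2 x)]; exact dist_triangle4 _ _ _ _
    _ < ε := by linarith [hclose p.1, hclose p.2, hp a ha]

variable {E : Type*} [NormedAddCommGroup E] [NormedSpace ℂ E]

theorem Complex.dist_le_mul_dist_of_forall_norm_le {c : ℂ} {R M ρ : ℝ} {f : ℂ → E}
    (hf : DifferentiableOn ℂ f (ball c R)) (hM : ∀ z ∈ ball c R, ‖f z‖ ≤ M) (hρ : ρ < R)
    {x y : ℂ} (hx : x ∈ closedBall c ρ) (hy : y ∈ closedBall c ρ) :
    dist (f x) (f y) ≤ M / ((R - ρ) / 2) * dist x y := by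
  have hδ : 0 < (R - ρ) / 2 := by linarith
  have hball : ∀ z ∈ closedBall c ρ, closedBall z ((R - ρ) / 2) ⊆ ball c R := fun z hz =>
    closedBall_subset_ball' (by linarith [mem_closedBall.1 hz])
  have hderiv : ∀ z ∈ closedBall c ρ, ‖deriv f z‖ ≤ M / ((R - ρ) / 2) := fun z hz =>
    Complex.norm_deriv_le_of_forall_mem_sphere_norm_le hδ (hf.diffContOnCl_ball (hball z hz))
      fun w hw => hM w (hball z hz (sphere_subset_closedBall hw))
  have hdiff : ∀ z ∈ closedBall c ρ, DifferentiableAt ℂ f z := fun z hz =>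
    hf.differentiableAt (isOpen_ball.mem_nhds (hball z hz (mem_closedBall_self hδ.le)))
  simpa only [dist_eq_norm] using
    (convex_closedBall c ρ).norm_image_sub_le_of_norm_deriv_le hdiff hderiv hy hx

theorem exists_subseq_tendstoLocallyUniformlyOn_ball [ProperSpace E] {c : ℂ} {R M : ℝ}
    {f : ℕ → ℂ → E} (hf : ∀ j, DifferentiableOn ℂ (f j) (ball c R))
    (hM : ∀ j, ∀ z ∈ ball c R, ‖f j z‖ ≤ M) :
    ∃ s : ℕ → ℕ, StrictMono s ∧ ∃ g : ℂ → E,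
      TendstoLocallyUniformlyOn (fun j => f (s j)) g atTop (ball c R) := by
  obtain ⟨T, hTc, hTd⟩ := TopologicalSpace.exists_countable_dense ℂ
  have : Countable ↥(T ∩ ball c R) := (hTc.mono inter_subset_left).to_subtype
  obtain ⟨_, -, s, hs, hconv⟩ :=
    (isCompact_univ_pi fun _ : ↥(T ∩ ball c R) => isCompact_closedBall (0 : E) M).tendsto_subseq
      (x := fun j (t : ↥(T ∩ ball c R)) => f j t)
      fun j t _ => mem_closedBall_zero_iff.2 (hM j t t.2.2)
  have hcauchy : ∀ z ∈ T ∩ ball c R, CauchySeq fun j => f (s j) z := fun z hz =>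
    ((continuous_apply (⟨z, hz⟩ : ↥(T ∩ ball c R))).tendsto _ |>.comp hconv).cauchySeq
  have hunif : ∀ K ⊆ ball c R, IsCompact K → UniformCauchySeqOn (fun j => f (s j)) atTop K := by
    intro K hKR hK
    obtain ⟨ρ, hρR, hKρ⟩ := exists_lt_subset_ball hK.isClosed hKR
    refine uniformCauchySeqOn_of_dist_le_mul_dist (S := closedBall c ρ) (A := T ∩ ball c ρ)
      (fun j x hx y hy =>
        Complex.dist_le_mul_dist_of_forall_norm_le (hf (s j)) (hM (s j)) hρR hx hy)
      (fun z hz => hcauchy z ⟨hz.1, ball_subset_ball hρR.le hz.2⟩) hK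
      (hKρ.trans ball_subset_closedBall) (inter_subset_right.trans ball_subset_closedBall) ?_
    rw [inter_comm]
    exact hKρ.trans (hTd.open_subset_closure_inter isOpen_ball)
  have hlim : ∀ z ∈ ball c R, ∃ w, Tendsto (fun j => f (s j) z) atTop (𝓝 w) := fun z hz =>
    cauchySeq_tendsto_of_complete
      ((hunif {z} (singleton_subset_iff.2 hz) isCompact_singleton).cauchySeq rfl)
  choose! g hg using hlim
  exact ⟨s, hs, g, (tendstoLocallyUniformlyOn_iff_forall_isCompact isOpen_ball).2
    fun K hKR hK => (hunif K hKR hK).tendstoUniformlyOn_of_tendsto fun z hz => hg z (hKR hz)⟩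

theorem Complex.le_norm_of_forall_mem_sphere_le_norm {g : ℂ → ℂ} {z₀ : ℂ} {ρ m : ℝ}
    (hρ : 0 < ρ) (hg : DifferentiableOn ℂ g (closedBall z₀ ρ))
    (hne : ∀ z ∈ closedBall z₀ ρ, g z ≠ 0) (hm : ∀ w ∈ sphere z₀ ρ, m ≤ ‖g w‖) :
    m ≤ ‖g z₀‖ := by
  rcases le_or_gt m 0 with hm0 | hm0
  · exact hm0.trans (norm_nonneg _)
  have hinv : ‖(g z₀)⁻¹‖ ≤ m⁻¹ :=
    Complex.norm_le_of_forall_mem_frontier_norm_le isBounded_ball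
      ((hg.inv hne).diffContOnCl_ball subset_rfl)
      (fun w hw => by
        rw [frontier_ball z₀ hρ.ne'] at hw
        rw [Pi.inv_apply, norm_inv]
        exact inv_anti₀ hm0 (hm w hw))
      (subset_closure (mem_ball_self hρ))
  rwa [norm_inv, inv_le_inv₀ (norm_pos_iff.2 (hne z₀ (mem_closedBall_self hρ.le))) hm0] at hinv

theorem eqOn_zero_of_tendstoLocallyUniformlyOn_of_ne_zero {ι : Type*} {l : Filter ι} [l.NeBot]
    {g : ι → ℂ → ℂ} {h : ℂ → ℂ} {U : Set ℂ} (hU : IsOpen U) (hUc : IsPreconnected U)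
    (hg : ∀ i, DifferentiableOn ℂ (g i) U) (hne : ∀ i, ∀ z ∈ U, g i z ≠ 0)
    (hlim : TendstoLocallyUniformlyOn g h l U) {z₀ : ℂ} (hz₀ : z₀ ∈ U) (hh : h z₀ = 0) :
    EqOn h 0 U := by
  have hhd : DifferentiableOn ℂ h U := hlim.differentiableOn (.of_forall hg) hU
  have han : AnalyticOnNhd ℂ h U := hhd.analyticOnNhd hU
  refine han.eqOn_zero_of_preconnected_of_eventuallyEq_zero hUc hz₀ <|
    (han z₀ hz₀).eventually_eq_zero_or_eventually_ne_zero.resolve_right fun hiso => ?_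
  obtain ⟨ρ, hρ, hρU, hsphere⟩ := exists_sphere_of_eventually_nhdsNE (hU.mem_nhds hz₀) hiso
  obtain ⟨w₀, hw₀, hmin⟩ := (isCompact_sphere z₀ ρ).exists_isMinOn
    (NormedSpace.sphere_nonempty.2 hρ.le)
    (hhd.continuousOn.mono (sphere_subset_closedBall.trans hρU)).norm
  have hm : 0 < ‖h w₀‖ := norm_pos_iff.2 (hsphere w₀ hw₀)
  obtain ⟨i, hi⟩ := (Metric.tendstoUniformlyOn_iff.1
    ((tendstoLocallyUniformlyOn_iff_forall_isCompact hU).1 hlim _ hρU (isCompact_closedBall _ _))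
    _ (half_pos hm)).exists
  have hsmall : ‖g i z₀‖ < ‖h w₀‖ / 2 := by
    simpa [hh] using hi z₀ (mem_closedBall_self hρ.le)
  have hlarge : ‖h w₀‖ / 2 ≤ ‖g i z₀‖ :=
    Complex.le_norm_of_forall_mem_sphere_le_norm hρ ((hg i).mono hρU)
      (fun z hz => hne i z (hρU hz)) fun w hw => by
        have := hi w (sphere_subset_closedBall hw)
        rw [dist_eq_norm] at this
        linarith [isMinOn_iff.1 hmin w hw, norm_sub_norm_le (h w) (g i w)]
  linarith

theorem not_tendsto_of_tendsto_norm_atTop_of_one_le_norm {F : ℕ → ℂ → ℂ} {z₀ z₁ c : ℂ} {r : ℝ}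
    (hF : ∀ j, DifferentiableOn ℂ (F j) (ball z₀ r)) (hF1 : ∀ j, ∀ z ∈ ball z₀ r, 1 ≤ ‖F j z‖)
    (hz₀ : Tendsto (fun j => ‖F j z₀‖) atTop atTop) (hz₁ : z₁ ∈ ball z₀ r) :
    ¬ Tendsto (fun j => F j z₁) atTop (𝓝 c) := by
  intro hc
  have hne : ∀ j, ∀ z ∈ ball z₀ r, F j z ≠ 0 := fun j z hz =>
    norm_pos_iff.1 (one_pos.trans_le (hF1 j z hz))
  obtain ⟨t, ht, h, hlim⟩ := exists_subseq_tendstoLocallyUniformlyOn_ball (M := 1)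
    (fun j => (hF j).inv (hne j)) fun j z hz => by
      rw [Pi.inv_apply, norm_inv]; exact inv_le_one_of_one_le₀ (hF1 j z hz)
  have hcenter : z₀ ∈ ball z₀ r := mem_ball_self (pos_of_mem_ball hz₁)
  have hh₀ : h z₀ = 0 := by
    refine tendsto_nhds_unique (hlim.tendsto_at hcenter) (tendsto_zero_iff_norm_tendsto_zero.2 ?_)
    simpa only [Pi.inv_apply, norm_inv, Function.comp_def] using
      tendsto_inv_atTop_zero.comp (hz₀.comp ht.tendsto_atTop)
  have hc0 : c ≠ 0 := norm_pos_iff.1 <| one_pos.trans_le <|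
    ge_of_tendsto hc.norm (.of_forall fun j => hF1 j z₁ hz₁)
  have hh₁ : h z₁ = c⁻¹ :=
    tendsto_nhds_unique (hlim.tendsto_at hz₁) ((hc.comp ht.tendsto_atTop).inv₀ hc0)
  have hzero : EqOn h 0 (ball z₀ r) :=
    eqOn_zero_of_tendstoLocallyUniformlyOn_of_ne_zero isOpen_ball (convex_ball z₀ r).isPreconnected
      (fun j => (hF (t j)).inv (hne (t j))) (fun j z hz => inv_ne_zero (hne (t j) z hz)) hlim
      hcenter hh₀
  exact inv_ne_zero hc0 (hh₁ ▸ hzero hz₁)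

def HasLocalPeakFunction (D : Set E) (a : E) : Prop :=
  ∃ U ∈ 𝓝 a, ∃ f : E → ℂ, DifferentiableOn ℂ f (D ∩ U) ∧
    Tendsto (fun z => ‖f z‖) (𝓝[D ∩ U] a) atTop

theorem HasLocalPeakFunction.eventually_notMem_of_tendstoLocallyUniformlyOn {D : Set E} {a : E}
    (ha : HasLocalPeakFunction D a) {S : Set ℂ} {ψ : ℕ → ℂ → E} {ψ₀ : ℂ → E} (hS : IsOpen S)
    (hψ : ∀ j, DifferentiableOn ℂ (ψ j) S) (hmaps : ∀ j, MapsTo (ψ j) S D)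
    (hlim : TendstoLocallyUniformlyOn ψ ψ₀ atTop S) {z₀ : ℂ} (hz₀ : z₀ ∈ S) (ha₀ : ψ₀ z₀ = a) :
    ∀ᶠ z in 𝓝 z₀, ψ₀ z ∉ D := by
  obtain ⟨U, hU, f, hf, hfa⟩ := ha
  have hW : U ∩ {w | w ∈ D ∩ U → 1 ≤ ‖f w‖} ∈ 𝓝 (ψ₀ z₀) :=
    ha₀ ▸ inter_mem hU (eventually_nhdsWithin_iff.1 (hfa.eventually_ge_atTop 1))
  have hcont : ContinuousAt ψ₀ z₀ :=
    (hlim.continuousOn (.of_forall fun j => (hψ j).continuousOn)).continuousAt (hS.mem_nhds hz₀)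
  obtain ⟨r, hr, hrS, hψ₀W, hψW⟩ := hlim.exists_ball_eventually_mapsTo (hS.mem_nhds hz₀) hcont hW
  obtain ⟨J, hJ⟩ := eventually_atTop.1 hψW
  have hDU : ∀ j, MapsTo (ψ (j + J)) (ball z₀ r) (D ∩ U) := fun j z hz =>
    ⟨hmaps _ (hrS hz), (hJ _ le_add_self hz).1⟩
  have hpt : ∀ z ∈ ball z₀ r, Tendsto (fun j => ψ (j + J) z) atTop (𝓝[D ∩ U] (ψ₀ z)) :=
    fun z hz => tendsto_nhdsWithin_iff.2
      ⟨(hlim.tendsto_at (hrS hz)).comp (tendsto_add_atTop_nat J), .of_forall fun j => hDU j hz⟩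
  filter_upwards [ball_mem_nhds z₀ hr] with z₁ hz₁ hD
  exact not_tendsto_of_tendsto_norm_atTop_of_one_le_norm (F := fun j => f ∘ ψ (j + J))
    (fun j => hf.comp ((hψ _).mono hrS) (hDU j)) (fun j z hz => (hJ _ le_add_self hz).2 (hDU j hz))
    (hfa.comp (ha₀ ▸ hpt z₀ (mem_ball_self hr))) hz₁
    ((hf.continuousOn _ ⟨hD, (hψ₀W hz₁).1⟩).tendsto.comp (hpt z₁ hz₁))

theorem isOpen_sdiff_preimage_of_tendstoLocallyUniformlyOn {D : Set E} (hD : IsOpen D)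
    (hpeak : ∀ a ∈ frontier D, HasLocalPeakFunction D a) {S : Set ℂ} {ψ : ℕ → ℂ → E}
    {ψ₀ : ℂ → E} (hS : IsOpen S) (hψ : ∀ j, DifferentiableOn ℂ (ψ j) S)
    (hmaps : ∀ j, MapsTo (ψ j) S D) (hlim : TendstoLocallyUniformlyOn ψ ψ₀ atTop S) :
    IsOpen (S \ ψ₀ ⁻¹' D) := by
  refine isOpen_iff_mem_nhds.2 fun z ⟨hzS, hzD⟩ => ?_
  have ha : ψ₀ z ∈ frontier D := ⟨mem_closure_of_tendsto (hlim.tendsto_at hzS)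
    (.of_forall fun j => hmaps j hzS), by rwa [hD.interior_eq]⟩
  filter_upwards [hS.mem_nhds hzS, (hpeak _ ha).eventually_notMem_of_tendstoLocallyUniformlyOn
    hS hψ hmaps hlim hzS rfl] with w hwS hwD using ⟨hwS, hwD⟩

theorem bounded_domain_with_peak_functions_taut_general {n : ℕ} (D : Set (Fin n → ℂ))
    (hDopen : IsOpen D) (hDbd : Bornology.IsBounded D)
    (hpeak : ∀ a ∈ frontier D, ∃ U ∈ nhds a, ∃ f : (Fin n → ℂ) → ℂ,
      DifferentiableOn ℂ f (D ∩ U) ∧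
      Tendsto (fun z => ‖f z‖) (nhdsWithin a (D ∩ U)) atTop)
    (ψ : ℕ → ℂ → (Fin n → ℂ))
    (hψhol : ∀ j, DifferentiableOn ℂ (ψ j) (ball 0 1))
    (hψmaps : ∀ j, Set.MapsTo (ψ j) (ball 0 1) D) :
    ∃ s : ℕ → ℕ, StrictMono s ∧
      ((∃ ψ₀ : ℂ → (Fin n → ℂ), DifferentiableOn ℂ ψ₀ (ball 0 1) ∧
          Set.MapsTo ψ₀ (ball 0 1) D ∧
          TendstoLocallyUniformlyOn (fun j => ψ (s j)) ψ₀ atTop (ball 0 1)) ∨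
        (∀ K ⊆ ball (0 : ℂ) 1, IsCompact K → ∀ L ⊆ D, IsCompact L →
          ∀ᶠ j in atTop, ∀ x ∈ K, ψ (s j) x ∉ L)) := by
  obtain ⟨M, hM⟩ := isBounded_iff_forall_norm_le.1 hDbd
  obtain ⟨s, hs, ψ₀, hlim⟩ :=
    exists_subseq_tendstoLocallyUniformlyOn_ball hψhol fun j z hz => hM _ (hψmaps j hz)
  have hψ₀ : DifferentiableOn ℂ ψ₀ (ball 0 1) :=
    hlim.differentiableOn (.of_forall fun j => hψhol (s j)) isOpen_ball
  refine ⟨s, hs, ?_⟩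
  rcases (convex_ball (0 : ℂ) 1).isPreconnected.mapsTo_or_mapsTo_compl
      (hψ₀.continuousOn.isOpen_inter_preimage isOpen_ball hDopen)
      (isOpen_sdiff_preimage_of_tendstoLocallyUniformlyOn hDopen hpeak isOpen_ball
        (fun j => hψhol (s j)) (fun j => hψmaps (s j)) hlim) with hin | hout
  · exact Or.inl ⟨ψ₀, hψ₀, hin, hlim⟩
  · exact Or.inr fun K hK hKc L hL hLc =>
      ((tendstoLocallyUniformlyOn_iff_forall_isCompact isOpen_ball).1 hlim K hK hKc
        ).eventually_forall_notMem hDopen hLc hL (hout.mono_left hK)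

/-- a bounded domain `D ⊂ ℂⁿ` such that every boundary point `a`
admits a neighborhood `U_a` and a holomorphic function `f_a` on `D ∩ U_a` with
`|f_a(z)| → ∞` as `z → a`, is taut: every sequence of holomorphic maps `𝔻 → D`
has a subsequence which either converges locally uniformly on `𝔻` to a holomorphic
map `𝔻 → D`, or is compactly divergent. -/
theorem bounded_domain_with_peak_functions_taut {n : ℕ} (D : Set (Fin n → ℂ))
    (hDopen : IsOpen D) (hDconn : IsConnected D) (hDbd : Bornology.IsBounded D)
    (hpeak : ∀ a ∈ frontier D, ∃ U ∈ nhds a, ∃ f : (Fin n → ℂ) → ℂ,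
      DifferentiableOn ℂ f (D ∩ U) ∧
      Tendsto (fun z => ‖f z‖) (nhdsWithin a (D ∩ U)) atTop)
    (ψ : ℕ → ℂ → (Fin n → ℂ))
    (hψhol : ∀ j, DifferentiableOn ℂ (ψ j) (ball 0 1))
    (hψmaps : ∀ j, Set.MapsTo (ψ j) (ball 0 1) D) :
    ∃ s : ℕ → ℕ, StrictMono s ∧
      ((∃ ψ₀ : ℂ → (Fin n → ℂ), DifferentiableOn ℂ ψ₀ (ball 0 1) ∧
          Set.MapsTo ψ₀ (ball 0 1) D ∧
          TendstoLocallyUniformlyOn (fun j => ψ (s j)) ψ₀ atTop (ball 0 1)) ∨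
        (∀ K ⊆ ball (0 : ℂ) 1, IsCompact K → ∀ L ⊆ D, IsCompact L →
          ∀ᶠ j in atTop, ∀ x ∈ K, ψ (s j) x ∉ L)) :=
  bounded_domain_with_peak_functions_taut_general D hDopen hDbd hpeak ψ hψhol hψmaps
end

section
/- For every n ≥ 1 the symmetrized polydisc 𝔾_n is linearly convex: for every point z ∈ ℂⁿ \ 𝔾_n there exists a complex affine hyperplane H ⊆ ℂⁿ with z ∈ H and H ∩ 𝔾_n = ∅. -/
open Finset

/-- The `k`-th elementary symmetric polynomial of `z ∈ ℂⁿ`. -/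
noncomputable def esym (n k : ℕ) (z : Fin n → ℂ) : ℂ :=
  ∑ s ∈ (Finset.univ : Finset (Fin n)).powersetCard k, ∏ j ∈ s, z j

/-- The symmetrization map `σ = (σ₁, …, σₙ) : ℂⁿ → ℂⁿ`. -/
noncomputable def symMap (n : ℕ) (z : Fin n → ℂ) : Fin n → ℂ :=
  fun k => esym n (k.val + 1) z

/-- The symmetrized polydisc `𝔾ₙ = σ(𝔻ⁿ)`. -/
noncomputable def symPolydisc (n : ℕ) : Set (Fin n → ℂ) :=
  symMap n '' {z | ∀ j, ‖z j‖ < 1}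

/-!
Write `p_w(λ) = λⁿ - w₁λⁿ⁻¹ + w₂λⁿ⁻² - ⋯ + (-1)ⁿwₙ` (`vietaPoly n w`). By Vieta's formulas
`p_{σ(x)} = ∏ⱼ (X - xⱼ)`, and since every monic polynomial of degree `n` over `ℂ` splits, `𝔾ₙ` is
exactly the set of `w` such that all roots of `p_w` lie in `𝔻`. So if `z ∉ 𝔾ₙ`, then `p_z` has a
root `λ` with `|λ| ≥ 1`. The map `w ↦ p_w(λ)` is affine, so `{w | p_w(λ) = 0}` is a complex
hyperplane through `z`, and it misses `𝔾ₙ` because `p_{σ(x)}(λ) = ∏ⱼ (λ - xⱼ) ≠ 0` for `x ∈ 𝔻ⁿ`.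
-/

open Polynomial

theorem Polynomial.Monic.exists_eq_prod_X_sub_C {K : Type*} [Field K] [IsAlgClosed K]
    {p : K[X]} (hp : p.Monic) {n : ℕ} (hn : p.natDegree = n) :
    ∃ x : Fin n → K, p = ∏ j, (X - C (x j)) := by
  obtain ⟨l, hl⟩ := Quotient.exists_rep p.roots
  have hlen : l.length = n := by
    rw [← hn, ← IsAlgClosed.card_roots_eq_natDegree, ← hl]; rfl
  subst hlen
  refine ⟨fun j => l[j.1], ?_⟩
  rw [Fin.prod_univ_fun_getElem l (fun a => X - C a)]
  exact (prod_multiset_X_sub_C_of_monic_of_roots_card_eq hp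
    IsAlgClosed.card_roots_eq_natDegree).symm.trans (by rw [← hl]; rfl)

noncomputable def vietaPoly (n : ℕ) (w : Fin n → ℂ) : ℂ[X] :=
  X ^ n + ∑ k : Fin n, C ((-1) ^ (k.val + 1) * w k) * X ^ (n - (k.val + 1))

noncomputable def vietaFunctional (n : ℕ) (l : ℂ) : (Fin n → ℂ) →ₗ[ℂ] ℂ :=
  ∑ k : Fin n, ((-1) ^ (k.val + 1) * l ^ (n - (k.val + 1))) • LinearMap.proj k

section vietaPoly

variable {n : ℕ}

theorem degree_vietaPoly_sub_X_pow_lt (w : Fin n → ℂ) :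
    (vietaPoly n w - X ^ n).degree < (n : WithBot ℕ) := by
  rw [vietaPoly, add_sub_cancel_left]
  refine (degree_sum_le _ _).trans_lt ((Finset.sup_lt_iff (WithBot.bot_lt_coe n)).2 ?_)
  intro k _
  have hk := k.isLt
  exact (degree_C_mul_X_pow_le _ _).trans_lt
    (WithBot.coe_lt_coe.2 (by omega : n - (k.val + 1) < n))

theorem vietaPoly_monic (w : Fin n → ℂ) : (vietaPoly n w).Monic := by
  simpa using monic_X_pow_add (degree_vietaPoly_sub_X_pow_lt w)

theorem natDegree_vietaPoly (w : Fin n → ℂ) : (vietaPoly n w).natDegree = n := by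
  rw [← add_sub_cancel (X ^ n) (vietaPoly n w), natDegree_add_eq_left_of_degree_lt
    (by simpa using degree_vietaPoly_sub_X_pow_lt w), natDegree_X_pow]

theorem coeff_vietaPoly (w : Fin n → ℂ) (k : Fin n) :
    (vietaPoly n w).coeff (n - (k.val + 1)) = (-1) ^ (k.val + 1) * w k := by
  rw [vietaPoly, coeff_add, coeff_X_pow, if_neg (by omega), zero_add, finsetSum_coeff,
    Finset.sum_eq_single k (fun j _ hjk => ?_) (by simp), coeff_C_mul_X_pow, if_pos rfl]
  rw [coeff_C_mul_X_pow, if_neg (by omega)]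

theorem vietaPoly_injective : Function.Injective (vietaPoly n) := by
  intro v w h
  funext k
  have hk := coeff_vietaPoly v k
  rw [h, coeff_vietaPoly] at hk
  exact (mul_left_cancel₀ (pow_ne_zero _ (neg_ne_zero.2 one_ne_zero)) hk).symm

theorem vietaPoly_symMap (x : Fin n → ℂ) : vietaPoly n (symMap n x) = ∏ j, (X - C (x j)) := by
  have h := Multiset.prod_X_sub_X_eq_sum_esymm (univ.val.map x)
  simp only [Multiset.map_map, Function.comp_def, Multiset.card_map, card_val, card_univ,
    Fintype.card_fin, sum_range_succ', ← Fin.sum_univ_eq_sum_range] at h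
  rw [Finset.prod_eq_multiset_prod, h, vietaPoly, add_comm]
  congr 1
  · refine Finset.sum_congr rfl fun k _ => ?_
    rw [symMap, esym, ← Finset.esymm_map_val, map_mul, map_pow, map_neg, map_one, mul_assoc]
  · simp [Multiset.esymm]

theorem eval_vietaPoly (w : Fin n → ℂ) (l : ℂ) :
    (vietaPoly n w).eval l = l ^ n + vietaFunctional n l w := by
  simp only [vietaPoly, vietaFunctional, eval_add, eval_pow, eval_X, eval_finsetSum, eval_mul,
    eval_C, LinearMap.sum_apply, LinearMap.smul_apply, LinearMap.proj_apply, smul_eq_mul]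
  congr 1
  exact Finset.sum_congr rfl fun k _ => by ring

end vietaPoly

theorem symPolydisc_eq_setOf_roots (n : ℕ) :
    symPolydisc n = {w | ∀ l, (vietaPoly n w).IsRoot l → ‖l‖ < 1} := by
  ext w
  constructor
  · rintro ⟨x, hx, rfl⟩ l hl
    rw [vietaPoly_symMap, IsRoot, eval_prod, prod_eq_zero_iff] at hl
    obtain ⟨j, -, hj⟩ := hl
    rw [eval_sub, eval_X, eval_C, sub_eq_zero] at hj
    exact hj ▸ hx j
  · intro hw
    obtain ⟨x, hx⟩ := (vietaPoly_monic w).exists_eq_prod_X_sub_C (natDegree_vietaPoly w)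
    refine ⟨x, fun j => hw _ ?_, vietaPoly_injective ((vietaPoly_symMap x).trans hx.symm)⟩
    rw [hx, IsRoot, eval_prod]
    exact prod_eq_zero (mem_univ j) (by simp)

theorem symPolydisc_nonempty (n : ℕ) : (symPolydisc n).Nonempty :=
  ⟨_, Set.mem_image_of_mem _ (x := 0) (by simp)⟩

theorem symmetrizedPolydisc_linearlyConvex_general (n : ℕ)
    (z : Fin n → ℂ) (hz : z ∉ symPolydisc n) :
    ∃ φ : (Fin n → ℂ) →ₗ[ℂ] ℂ, φ ≠ 0 ∧ ∀ w ∈ symPolydisc n, φ w ≠ φ z := by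
  obtain ⟨l, hroot, hl⟩ : ∃ l, (vietaPoly n z).IsRoot l ∧ 1 ≤ ‖l‖ := by
    simpa [symPolydisc_eq_setOf_roots] using hz
  have hdisjoint : ∀ w ∈ symPolydisc n, vietaFunctional n l w ≠ vietaFunctional n l z := by
    intro w hw hwz
    rw [symPolydisc_eq_setOf_roots] at hw
    refine (hw l ?_).not_ge hl
    rw [IsRoot, eval_vietaPoly, hwz, ← eval_vietaPoly]
    exact hroot
  refine ⟨vietaFunctional n l, fun h0 => ?_, hdisjoint⟩
  obtain ⟨w, hw⟩ := symPolydisc_nonempty n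
  exact hdisjoint w hw (by rw [h0, LinearMap.zero_apply, LinearMap.zero_apply])

/-- for every `n ≥ 1` the symmetrized polydisc `𝔾ₙ` is linearly convex:
every point `z ∉ 𝔾ₙ` lies on a complex affine hyperplane
(here `{w | φ w = φ z}` for a nonzero `ℂ`-linear functional `φ`) disjoint from `𝔾ₙ`. -/
theorem symmetrizedPolydisc_linearlyConvex (n : ℕ) (hn : 1 ≤ n)
    (z : Fin n → ℂ) (hz : z ∉ symPolydisc n) :
    ∃ φ : (Fin n → ℂ) →ₗ[ℂ] ℂ, φ ≠ 0 ∧ ∀ w ∈ symPolydisc n, φ w ≠ φ z :=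
  symmetrizedPolydisc_linearlyConvex_general n z hz
end

section
/- For every integer n ≥ 3 the symmetrized polydisc 𝔾_n is not ℂ-convex; more precisely, for every t with 1/√2 ≤ t < 1 the intersection of 𝔾_n with the complex affine line L_t = {(3t(1−2λ), 3t², t³(1−2λ), 0, …, 0) : λ ∈ ℂ} is nonempty and not connected. -/
/-!
If `σ(z) ∈ 𝔾ₙ ∩ L_t`, then `σ_k(z) = 0` for `k ≥ 4`; since `σ_m(z)` with `m` the number of
nonzero coordinates of `z` is their product, at most three coordinates are nonzero. Hence
`|σ₁² - 2σ₂| = |∑ z_j²| < 3`, and as `σ₂ = 3t² ≥ 3/2` on `L_t`, the first coordinate `w = σ₁`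
satisfies `|w² - 6t²| < 3 ≤ 6t²`, which forces `Re w ≠ 0`. The points of `L_t` at `λ = 0` and
`λ = 1` are `σ(±t, ±t, ±t, 0, …, 0) ∈ 𝔾ₙ`, with `Re w = ±3t`, so `Re w` disconnects `𝔾ₙ ∩ L_t`.
-/

open Finset

/-- The complex affine line through `a` with direction `b`. -/
def cxLine {n : ℕ} (a b : Fin n → ℂ) : Set (Fin n → ℂ) :=
  {z | ∃ ζ : ℂ, z = a + ζ • b}

/-- `ℂ`-convexity: every nonempty intersection with a complex affine line is
connected and simply connected. -/
def CConvex {n : ℕ} (D : Set (Fin n → ℂ)) : Prop :=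
  ∀ a b : Fin n → ℂ, b ≠ 0 → (D ∩ cxLine a b).Nonempty →
    IsConnected (D ∩ cxLine a b) ∧ SimplyConnectedSpace ↥(D ∩ cxLine a b)

/-- The line `L_t = {(3t(1-2λ), 3t², t³(1-2λ), 0, …, 0) : λ ∈ ℂ}` in `ℂⁿ`. -/
def Lt (n : ℕ) (t : ℝ) : Set (Fin n → ℂ) :=
  {z | ∃ lam : ℂ, z = fun j : Fin n =>
    if (j : ℕ) = 0 then 3 * (t : ℂ) * (1 - 2 * lam)
    else if (j : ℕ) = 1 then 3 * (t : ℂ) ^ 2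
    else if (j : ℕ) = 2 then (t : ℂ) ^ 3 * (1 - 2 * lam)
    else 0}


lemma re_ne_zero_of_norm_sq_sub_lt {w : ℂ} {r : ℝ} (h : ‖w ^ 2 - r‖ < r) : w.re ≠ 0 := by
  intro h0
  have hre := Complex.abs_re_le_norm (w ^ 2 - r)
  simp only [sq, Complex.sub_re, Complex.mul_re, h0, Complex.ofReal_re] at hre h
  nlinarith [neg_le_abs (0 * 0 - w.im * w.im - r), mul_self_nonneg w.im]

lemma not_isPreconnected_of_sign_change {X : Type*} [TopologicalSpace X] {s : Set X}
    {f : X → ℝ} (hf : ContinuousOn f s) (hf0 : ∀ x ∈ s, f x ≠ 0) {a b : X} (ha : a ∈ s)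
    (hb : b ∈ s) (hfa : f a < 0) (hfb : 0 < f b) : ¬ IsPreconnected s := fun hs => by
  obtain ⟨x, hx, hfx⟩ := hs.intermediate_value ha hb hf ⟨hfa.le, hfb.le⟩
  exact hf0 x hx hfx

lemma norm_sum_sq_lt_of_card_support_le {ι : Type*} [Fintype ι] {z : ι → ℂ}
    (hz : ∀ j, ‖z j‖ < 1) {m : ℕ} (hm : 0 < m) (hS : #{j | z j ≠ 0} ≤ m) :
    ‖∑ j, z j ^ 2‖ < m := by
  rw [← sum_filter_of_ne (p := fun j => z j ≠ 0) fun j _ h hj => h (by simp [hj])]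
  rcases eq_empty_or_nonempty ({j | z j ≠ 0} : Finset ι) with hS0 | hS0
  · simpa [hS0] using hm
  calc ‖∑ j with z j ≠ 0, z j ^ 2‖ ≤ ∑ j with z j ≠ 0, ‖z j‖ ^ 2 :=
        (norm_sum_le _ _).trans_eq (by simp only [norm_pow])
    _ < ∑ j with z j ≠ 0, (1 : ℝ) :=
        sum_lt_sum_of_nonempty hS0 fun j _ => pow_lt_one₀ (norm_nonneg _) (hz j) two_ne_zero
    _ ≤ m := by simpa using hS

open MvPolynomial in
lemma esym_eq_eval_esymm (n k : ℕ) (z : Fin n → ℂ) :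
    esym n k z = eval z (esymm (Fin n) ℂ k) := by
  simp [esym, esymm, map_sum, map_prod]

lemma esym_one (n : ℕ) (z : Fin n → ℂ) : esym n 1 z = ∑ j, z j := by
  simp [esym, powersetCard_one]

open MvPolynomial in
lemma sum_sq_eq_esym_one_sq_sub (n : ℕ) (z : Fin n → ℂ) :
    ∑ j, z j ^ 2 = esym n 1 z ^ 2 - 2 * esym n 2 z := by
  have h := congrArg (eval z) (psum_eq_mul_esymm_sub_sum (Fin n) ℂ 2 two_pos)
  have hpairs : {x ∈ antidiagonal 2 | x.1 ∈ Set.Ioo 0 2} = {(1, 1)} := by decide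
  rw [hpairs] at h
  rw [esym_one, esym_eq_eval_esymm]
  simp only [psum, sum_singleton, esymm_one, map_sub, map_mul, map_pow, map_neg, map_one,
    map_sum, eval_X, map_natCast, pow_one] at h
  linear_combination h

lemma esym_eq_sum_powersetCard_of_eq_zero {n k : ℕ} {z : Fin n → ℂ} (T : Finset (Fin n))
    (hz : ∀ j ∉ T, z j = 0) : esym n k z = ∑ s ∈ T.powersetCard k, ∏ j ∈ s, z j := by
  refine (sum_subset (powersetCard_mono (subset_univ T)) fun s hs hsT => ?_).symm
  obtain ⟨j, hj, hjT⟩ := not_subset.1 fun h =>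
    hsT (mem_powersetCard.2 ⟨h, (mem_powersetCard.1 hs).2⟩)
  exact prod_eq_zero hj (hz j hjT)

lemma esym_card_support {n : ℕ} (z : Fin n → ℂ) :
    esym n #{j | z j ≠ 0} z = ∏ j with z j ≠ 0, z j := by
  rw [esym_eq_sum_powersetCard_of_eq_zero {j | z j ≠ 0} (by simp), powersetCard_self,
    sum_singleton]

lemma card_support_le_of_esym_eq_zero {n m : ℕ} {z : Fin n → ℂ}
    (h : ∀ k, m < k → k ≤ n → esym n k z = 0) : #{j | z j ≠ 0} ≤ m := by
  by_contra! hm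
  have hzero := h _ hm ((card_le_univ _).trans (by simp))
  rw [esym_card_support] at hzero
  exact prod_ne_zero_iff.2 (fun j hj => (mem_filter.1 hj).2) hzero

lemma norm_esym_one_sq_sub_lt {n : ℕ} {z : Fin n → ℂ} (hz : ∀ j, ‖z j‖ < 1)
    (h : ∀ k, 3 < k → k ≤ n → esym n k z = 0) : ‖esym n 1 z ^ 2 - 2 * esym n 2 z‖ < 3 := by
  rw [← sum_sq_eq_esym_one_sq_sub]
  exact_mod_cast norm_sum_sq_lt_of_card_support_le hz three_pos
    (card_support_le_of_esym_eq_zero h)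

lemma esym_ite_mem {n : ℕ} (T : Finset (Fin n)) (c : ℂ) (k : ℕ) :
    esym n k (fun j => if j ∈ T then c else 0) = (#T).choose k * c ^ k := by
  rw [esym_eq_sum_powersetCard_of_eq_zero T fun j hj => if_neg hj]
  calc ∑ s ∈ T.powersetCard k, ∏ j ∈ s, (if j ∈ T then c else 0)
      = ∑ s ∈ T.powersetCard k, c ^ k := sum_congr rfl fun s hs => by
        rw [prod_congr rfl fun j hj => if_pos ((mem_powersetCard.1 hs).1 hj), prod_const,
          (mem_powersetCard.1 hs).2]
    _ = (#T).choose k * c ^ k := by rw [sum_const, card_powersetCard, nsmul_eq_mul]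

lemma symMap_ite_lt_three {n : ℕ} (hn : 3 ≤ n) (c : ℂ) :
    symMap n (fun j => if j ∈ ({j | (j : ℕ) < 3} : Finset (Fin n)) then c else 0) =
      fun j : Fin n => if (j : ℕ) = 0 then 3 * c else if (j : ℕ) = 1 then 3 * c ^ 2
        else if (j : ℕ) = 2 then c ^ 3 else 0 := by
  funext ⟨j, hj⟩
  rw [symMap, esym_ite_mem, Fin.card_filter_val_lt, min_eq_right hn]
  rcases j with _ | _ | _ | j <;> simp [Nat.choose]

def ltPoint (n : ℕ) (t : ℝ) (lam : ℂ) : Fin n → ℂ := fun j =>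
  if (j : ℕ) = 0 then 3 * (t : ℂ) * (1 - 2 * lam)
  else if (j : ℕ) = 1 then 3 * (t : ℂ) ^ 2
  else if (j : ℕ) = 2 then (t : ℂ) ^ 3 * (1 - 2 * lam)
  else 0

lemma ltPoint_eq_add_smul (n : ℕ) (t : ℝ) (lam : ℂ) :
    ltPoint n t lam = ltPoint n t 0 + lam • (ltPoint n t 1 - ltPoint n t 0) := by
  funext j
  simp only [ltPoint, Pi.add_apply, Pi.smul_apply, Pi.sub_apply, smul_eq_mul]
  split_ifs <;> ring

lemma Lt_eq_cxLine (n : ℕ) (t : ℝ) :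
    Lt n t = cxLine (ltPoint n t 0) (ltPoint n t 1 - ltPoint n t 0) := by
  ext p
  change (∃ lam, p = ltPoint n t lam) ↔ ∃ ζ, p = _ + ζ • _
  simp only [← ltPoint_eq_add_smul]

lemma ltPoint_one_sub_ltPoint_zero_ne_zero {n : ℕ} (hn : 0 < n) {t : ℝ} (ht : t ≠ 0) :
    ltPoint n t 1 - ltPoint n t 0 ≠ 0 := by
  intro h
  have h0 := congrFun h ⟨0, hn⟩
  norm_num [ltPoint] at h0
  exact ht (by exact_mod_cast (by linear_combination -h0 / 6 : (t : ℂ) = 0))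

lemma ltPoint_mem_symPolydisc {n : ℕ} (hn : 3 ≤ n) {t : ℝ} (ht : |t| < 1) {lam : ℂ}
    (hlam : lam = 0 ∨ lam = 1) : ltPoint n t lam ∈ symPolydisc n := by
  -- with `ε = 1 - 2λ = ±1`, the point is `σ(εt, εt, εt, 0, …, 0)`
  set ε := 1 - 2 * lam
  have hε : ε ^ 2 = 1 := by rcases hlam with rfl | rfl <;> norm_num [ε]
  have hεnorm : ‖ε‖ = 1 :=
    (pow_eq_one_iff_of_nonneg (norm_nonneg ε) two_ne_zero).1 (by rw [← norm_pow, hε, norm_one])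
  refine ⟨fun j => if j ∈ ({j | (j : ℕ) < 3} : Finset (Fin n)) then ε * t else 0,
    fun j => ?_, ?_⟩
  · dsimp only
    split_ifs <;> simp [hεnorm, ht]
  · rw [symMap_ite_lt_three hn]
    funext j
    simp only [ltPoint]
    split_ifs
    · ring
    · linear_combination 3 * (t : ℂ) ^ 2 * hε
    · linear_combination (t : ℂ) ^ 3 * ε * hε
    · rfl

lemma re_apply_zero_ne_zero_of_mem_symPolydisc_inter_Lt {n : ℕ} (hn : 2 ≤ n) {t : ℝ}
    (ht : 1 / 2 ≤ t ^ 2) {p : Fin n → ℂ} (hp : p ∈ symPolydisc n ∩ Lt n t) : (p ⟨0, by omega⟩).re ≠ 0 := by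
  obtain ⟨⟨z, hz, rfl⟩, lam, hlam⟩ := hp
  have hσ (k : Fin n) : esym n (k + 1) z = ltPoint n t lam k := congrFun hlam k
  have hσ₂ : esym n 2 z = 3 * t ^ 2 := by simpa [ltPoint] using hσ ⟨1, by omega⟩
  have hσ_high (k : ℕ) (hk : 3 < k) (hkn : k ≤ n) : esym n k z = 0 := by
    obtain ⟨m, rfl⟩ : ∃ m, k = m + 1 := ⟨k - 1, by omega⟩
    rw [hσ ⟨m, by omega⟩]
    simp only [ltPoint]
    rw [if_neg (by omega), if_neg (by omega), if_neg (by omega)]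
  apply re_ne_zero_of_norm_sq_sub_lt (r := 6 * t ^ 2)
  calc ‖esym n 1 z ^ 2 - ((6 * t ^ 2 : ℝ) : ℂ)‖
      = ‖esym n 1 z ^ 2 - 2 * esym n 2 z‖ := by rw [hσ₂]; push_cast; ring_nf
    _ < 3 := norm_esym_one_sq_sub_lt hz hσ_high
    _ ≤ 6 * t ^ 2 := by linarith

lemma not_isPreconnected_symPolydisc_inter_Lt {n : ℕ} (hn : 3 ≤ n) {t : ℝ} (ht0 : 0 < t)
    (ht : 1 / 2 ≤ t ^ 2) (ht1 : t < 1) : ¬ IsPreconnected (symPolydisc n ∩ Lt n t) := by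
  have habs : |t| < 1 := abs_lt.2 ⟨by linarith, ht1⟩
  refine not_isPreconnected_of_sign_change (f := fun p => (p ⟨0, by omega⟩).re)
    (by fun_prop) (fun p hp => re_apply_zero_ne_zero_of_mem_symPolydisc_inter_Lt (by omega) ht hp)
    (a := ltPoint n t 1) (b := ltPoint n t 0)
    ⟨ltPoint_mem_symPolydisc hn habs (.inr rfl), 1, rfl⟩
    ⟨ltPoint_mem_symPolydisc hn habs (.inl rfl), 0, rfl⟩ ?_ ?_ <;>
  norm_num [ltPoint] <;> linarith

/-- for every `n ≥ 3`, `𝔾ₙ` is not `ℂ`-convex; more precisely, for every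
`1/√2 ≤ t < 1` the intersection `𝔾ₙ ∩ L_t` is nonempty and not connected. -/
theorem symmetrizedPolydisc_not_cConvex (n : ℕ) (hn : 3 ≤ n) :
    ¬ CConvex (symPolydisc n) ∧
    ∀ t : ℝ, 1 / Real.sqrt 2 ≤ t → t < 1 →
      (symPolydisc n ∩ Lt n t).Nonempty ∧
      ¬ IsPreconnected (symPolydisc n ∩ Lt n t) := by
  have hLt (t : ℝ) (ht : 1 / √2 ≤ t) (ht1 : t < 1) :
      (symPolydisc n ∩ Lt n t).Nonempty ∧ ¬ IsPreconnected (symPolydisc n ∩ Lt n t) := by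
    have ht0 : 0 < t := lt_of_lt_of_le (by positivity) ht
    have ht2 : 1 / 2 ≤ t ^ 2 := by
      simpa [div_pow] using pow_le_pow_left₀ (by positivity) ht 2
    exact ⟨⟨_, ltPoint_mem_symPolydisc hn (abs_lt.2 ⟨by linarith, ht1⟩) (.inl rfl), 0, rfl⟩,
      not_isPreconnected_symPolydisc_inter_Lt hn ht0 ht2 ht1⟩
  refine ⟨fun hC => ?_, hLt⟩
  have hs : 1 / √2 < 1 := (div_lt_one (by positivity)).2 Real.one_lt_sqrt_two
  obtain ⟨hne, hdisc⟩ := hLt _ le_rfl hs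
  rw [Lt_eq_cxLine] at hne hdisc
  have hb := ltPoint_one_sub_ltPoint_zero_ne_zero (n := n) (t := 1 / √2) (by omega) (by positivity)
  exact hdisc (hC _ _ hb hne).1.isPreconnected
end

section
/- Let A, B ∈ Ω_n be matrices in the spectral ball. Then the following are equivalent: (a) A and B have the same characteristic polynomial (equal spectra with multiplicities); (b) there exists an entire holomorphic map φ : ℂ → M_n(ℂ) with φ(ζ) ∈ Ω_n for all ζ ∈ ℂ, φ(0) = A and φ(1) = B. -/
/-!
For `(b) ⇒ (a)`: for fixed `z`, the map `ζ ↦ det (z - φ ζ)` is entire, and it is bounded by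
`(‖z‖ + 1) ^ n` because all eigenvalues of `φ ζ` lie in the unit disc; by Liouville it is
constant, so `φ 0` and `φ 1` have the same characteristic polynomial.

For `(a) ⇒ (b)`: triangularize `A = P₁ T₁ P₁⁻¹` and `B = P₂ T₂ P₂⁻¹` with the *same* diagonal.
Every matrix on the segment from `T₁` to `T₂` is upper triangular with that diagonal, hence has
the characteristic polynomial of `A`. Every invertible matrix is a product of transvections and
an invertible diagonal matrix, so it is joined to `1` by an entire curve of invertible matrices
with entire inverses (`transvection i j (ζ c)` and `diagonal (exp (ζ log dᵢ))`). Conjugating the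
segment by `R₁ (1 - ζ) * R₂ ζ`, where `Rₖ` joins `1` to `Pₖ`, gives the required curve.
-/

/-- The spectral ball `Ωₙ`: `n × n` complex matrices all of whose eigenvalues lie
in the open unit disc. -/
def specBall (n : ℕ) : Set (Fin n → Fin n → ℂ) :=
  {A | ∀ μ ∈ (Matrix.of A).charpoly.roots, ‖μ‖ < 1}

open Polynomial Matrix
open scoped NNReal

/-- `Matrix` carries no norm instance, so holomorphy of matrix-valued maps is stated entrywise. -/
def Matrix.EntrywiseEntire {ι κ : Type*} (f : ℂ → Matrix ι κ ℂ) : Prop :=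
  ∀ i j, Differentiable ℂ fun ζ => f ζ i j

namespace Matrix.EntrywiseEntire

variable {ι κ : Type*}

theorem const (M : Matrix ι κ ℂ) : EntrywiseEntire fun _ => M :=
  fun _ _ => differentiable_const _

theorem sub {f g : ℂ → Matrix ι κ ℂ} (hf : EntrywiseEntire f) (hg : EntrywiseEntire g) :
    EntrywiseEntire fun ζ => f ζ - g ζ :=
  fun i j => (hf i j).sub (hg i j)

theorem smul {c : ℂ → ℂ} {f : ℂ → Matrix ι κ ℂ} (hc : Differentiable ℂ c)
    (hf : EntrywiseEntire f) : EntrywiseEntire fun ζ => c ζ • f ζ :=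
  fun i j => hc.mul (hf i j)

theorem mul [Fintype ι] {f : ℂ → Matrix κ ι ℂ} {g : ℂ → Matrix ι κ ℂ}
    (hf : EntrywiseEntire f) (hg : EntrywiseEntire g) :
    EntrywiseEntire fun ζ => f ζ * g ζ := fun i j => by
  simp only [mul_apply]
  exact Differentiable.fun_sum fun k _ => (hf i k).mul (hg k j)

theorem comp {f : ℂ → Matrix ι κ ℂ} (hf : EntrywiseEntire f) {c : ℂ → ℂ}
    (hc : Differentiable ℂ c) : EntrywiseEntire (f ∘ c) :=
  fun i j => (hf i j).comp hc

theorem det [Fintype ι] [DecidableEq ι] {f : ℂ → Matrix ι ι ℂ} (hf : EntrywiseEntire f) :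
    Differentiable ℂ fun ζ => (f ζ).det := by
  simp only [det_apply, Units.smul_def, zsmul_eq_mul]
  exact Differentiable.fun_sum fun σ _ =>
    (differentiable_const _).mul (Differentiable.fun_finsetProd fun i _ => hf (σ i) i)

end Matrix.EntrywiseEntire

theorem Polynomial.nnnorm_eval_le_of_forall_mem_roots {p : ℂ[X]} (hp : p.Monic) {r : ℝ≥0}
    (hr : ∀ μ ∈ p.roots, ‖μ‖₊ ≤ r) (z : ℂ) : ‖p.eval z‖₊ ≤ (‖z‖₊ + r) ^ p.natDegree := by
  have hsplit : p.Splits := IsAlgClosed.splits p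
  calc ‖p.eval z‖₊ = (p.roots.map fun μ => ‖z - μ‖₊).prod := by
        conv_lhs => rw [hsplit.eq_prod_roots_of_monic hp]
        rw [eval_multiset_prod, ← nnnormHom_apply, map_multiset_prod (nnnormHom (α := ℂ))]
        simp [Multiset.map_map]
    _ ≤ (‖z‖₊ + r) ^ p.roots.card := by
        rw [← Multiset.card_map (fun μ => ‖z - μ‖₊)]
        refine Multiset.prod_le_pow_card _ _ fun x hx => ?_
        obtain ⟨μ, hμ, rfl⟩ := Multiset.mem_map.1 hx
        exact (nnnorm_sub_le z μ).trans (add_le_add_right (hr μ hμ) _)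
    _ = (‖z‖₊ + r) ^ p.natDegree := by rw [splits_iff_card_roots.1 hsplit]

theorem Matrix.EntrywiseEntire.charpoly_eq_of_forall_mem_roots {ι : Type*} [Fintype ι]
    [DecidableEq ι] {φ : ℂ → Matrix ι ι ℂ} (hφ : EntrywiseEntire φ) {r : ℝ≥0}
    (hr : ∀ ζ, ∀ μ ∈ (φ ζ).charpoly.roots, ‖μ‖₊ ≤ r) (a b : ℂ) :
    (φ a).charpoly = (φ b).charpoly := by
  refine Polynomial.funext fun z => ?_
  have hdiff : Differentiable ℂ fun ζ => (φ ζ).charpoly.eval z := by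
    simpa only [eval_charpoly] using ((EntrywiseEntire.const _).sub hφ).det
  have hbdd : Bornology.IsBounded (Set.range fun ζ => (φ ζ).charpoly.eval z) := by
    refine isBounded_iff_forall_norm_le.2 ⟨((‖z‖₊ + r) ^ Fintype.card ι : ℝ≥0), ?_⟩
    rintro _ ⟨ζ, rfl⟩
    have hle := nnnorm_eval_le_of_forall_mem_roots (charpoly_monic (φ ζ)) (hr ζ) z
    rw [charpoly_natDegree_eq_dim] at hle
    exact_mod_cast hle
  exact hdiff.apply_eq_apply_of_bounded hbdd a b

namespace Matrix

section EntireCurves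

variable {ι : Type*} [Fintype ι] [DecidableEq ι]

def entirelyJoinedToOne (ι : Type*) [Fintype ι] [DecidableEq ι] :
    Submonoid (Matrix ι ι ℂ) where
  carrier := {P | ∃ R S : ℂ → Matrix ι ι ℂ, EntrywiseEntire R ∧ EntrywiseEntire S ∧
    (∀ ζ, R ζ * S ζ = 1) ∧ R 0 = 1 ∧ R 1 = P}
  one_mem' := ⟨fun _ => 1, fun _ => 1, .const 1, .const 1, fun _ => mul_one 1, rfl, rfl⟩
  mul_mem' := by
    rintro _ _ ⟨R₁, S₁, hR₁, hS₁, hRS₁, h0₁, rfl⟩ ⟨R₂, S₂, hR₂, hS₂, hRS₂, h0₂, rfl⟩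
    refine ⟨fun ζ => R₁ ζ * R₂ ζ, fun ζ => S₂ ζ * S₁ ζ, hR₁.mul hR₂, hS₂.mul hS₁,
      fun ζ => ?_, by simp [h0₁, h0₂], rfl⟩
    rw [mul_assoc, ← mul_assoc (R₂ ζ), hRS₂, one_mul, hRS₁]

theorem transvection_mem_entirelyJoinedToOne (t : TransvectionStruct ι ℂ) :
    t.toMatrix ∈ entirelyJoinedToOne ι := by
  have hT (c : ℂ) : EntrywiseEntire fun ζ => transvection t.i t.j (ζ * c) := fun a b => by
    simp only [transvection, add_apply, single_apply]
    split_ifs <;> fun_prop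
  refine ⟨fun ζ => transvection t.i t.j (ζ * t.c), fun ζ => transvection t.i t.j (ζ * -t.c),
    hT _, hT _, fun ζ => ?_, by simp, by simp [TransvectionStruct.toMatrix]⟩
  rw [transvection_mul_transvection_same _ _ t.hij, ← mul_add, add_neg_cancel, mul_zero,
    transvection_zero]

theorem diagonal_mem_entirelyJoinedToOne {D : ι → ℂ} (hD : ∀ i, D i ≠ 0) :
    diagonal D ∈ entirelyJoinedToOne ι := by
  have hE (w : ι → ℂ) : EntrywiseEntire fun ζ => diagonal fun i => Complex.exp (ζ * w i) :=
    fun a b => by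
      simp only [diagonal_apply]
      split_ifs <;> fun_prop
  refine ⟨fun ζ => diagonal fun i => Complex.exp (ζ * Complex.log (D i)),
    fun ζ => diagonal fun i => Complex.exp (ζ * -Complex.log (D i)), hE _, hE _, fun ζ => ?_,
    by simp, by simp [Complex.exp_log (hD _)]⟩
  simp [diagonal_mul_diagonal, ← Complex.exp_add]

theorem mem_entirelyJoinedToOne {P : Matrix ι ι ℂ} (hP : IsUnit P) :
    P ∈ entirelyJoinedToOne ι := by
  obtain ⟨L, L', D, rfl⟩ := Pivot.exists_list_transvec_mul_diagonal_mul_list_transvec P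
  have hdet := (isUnit_iff_isUnit_det _).1 hP
  have hD : ∀ i, D i ≠ 0 := fun i hi => by
    simp [det_diagonal, Finset.prod_eq_zero (Finset.mem_univ i) hi] at hdet
  have hL (L : List (TransvectionStruct ι ℂ)) :
      (L.map TransvectionStruct.toMatrix).prod ∈ entirelyJoinedToOne ι :=
    Submonoid.list_prod_mem _ fun _ hM => by
      obtain ⟨t, -, rfl⟩ := List.mem_map.1 hM
      exact transvection_mem_entirelyJoinedToOne t
  exact mul_mem (mul_mem (hL L) (diagonal_mem_entirelyJoinedToOne hD)) (hL L')

theorem exists_entire_conj_curve {P₁ P₂ : Matrix ι ι ℂ} (hP₁ : IsUnit P₁) (hP₂ : IsUnit P₂)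
    {M : ℂ → Matrix ι ι ℂ} (hM : EntrywiseEntire M) :
    ∃ φ : ℂ → Matrix ι ι ℂ, EntrywiseEntire φ ∧ (∀ ζ, (φ ζ).charpoly = (M ζ).charpoly) ∧
      φ 0 = P₁ * M 0 * P₁⁻¹ ∧ φ 1 = P₂ * M 1 * P₂⁻¹ := by
  obtain ⟨R₁, S₁, hR₁, hS₁, hRS₁, h0₁, h1₁⟩ := mem_entirelyJoinedToOne hP₁
  obtain ⟨R₂, S₂, hR₂, hS₂, hRS₂, h0₂, h1₂⟩ := mem_entirelyJoinedToOne hP₂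
  have hflip : Differentiable ℂ fun ζ : ℂ => 1 - ζ := by fun_prop
  set G : ℂ → Matrix ι ι ℂ := fun ζ => R₁ (1 - ζ) * R₂ ζ
  set H : ℂ → Matrix ι ι ℂ := fun ζ => S₂ ζ * S₁ (1 - ζ)
  have hGH ζ : G ζ * H ζ = 1 := by
    simp only [G, H, mul_assoc, ← mul_assoc (R₂ ζ), hRS₂, one_mul, hRS₁]
  have hH ζ : H ζ = (G ζ)⁻¹ := (inv_eq_right_inv (hGH ζ)).symm
  refine ⟨fun ζ => G ζ * M ζ * H ζ, ((hR₁.comp hflip).mul hR₂ |>.mul hM).mul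
    (hS₂.mul (hS₁.comp hflip)), fun ζ => ?_, ?_, ?_⟩
  · rw [charpoly_mul_comm, ← mul_assoc, mul_eq_one_comm.1 (hGH ζ), one_mul]
  · simp [hH, G, h0₂, h1₁]
  · simp [hH, G, h0₁, h1₂]

end EntireCurves

theorem charpoly_nonsing_inv_mul_mul {R ι : Type*} [CommRing R] [Fintype ι] [DecidableEq ι]
    {P : Matrix ι ι R} (hP : IsUnit P) (M : Matrix ι ι R) :
    (P⁻¹ * M * P).charpoly = M.charpoly := by
  rw [charpoly_mul_comm, ← mul_assoc, mul_nonsing_inv _ ((isUnit_iff_isUnit_det P).1 hP),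
    one_mul]

theorem charpoly_sub_smul_sub_of_isUpperTriangular {R ι : Type*} [CommRing R] [Fintype ι]
    [DecidableEq ι] [LinearOrder ι] {T₁ T₂ : Matrix ι ι R} (h₁ : T₁.IsUpperTriangular)
    (h₂ : T₂.IsUpperTriangular) (hdiag : ∀ i, T₁ i i = T₂ i i) (c : R) :
    (T₁ - c • (T₁ - T₂)).charpoly = T₁.charpoly := by
  rw [charpoly_of_isUpperTriangular _ fun i j h => by simp [h₁ h, h₂ h],
    charpoly_of_isUpperTriangular _ h₁]
  simp [hdiag]

section Triangularization

variable {R : Type*} [CommRing R] {n : ℕ}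

theorem charpoly_eq_X_sub_C_mul_charpoly_submatrix_succ
    {M : Matrix (Fin (n + 1)) (Fin (n + 1)) R} (hM : ∀ i : Fin n, M i.succ 0 = 0) :
    M.charpoly = (X - C (M 0 0)) * (M.submatrix Fin.succ Fin.succ).charpoly := by
  have hsub : (charmatrix M).submatrix Fin.succ Fin.succ =
      charmatrix (M.submatrix Fin.succ Fin.succ) := by
    ext i j
    by_cases hij : i = j <;> simp [hij]
  rw [charpoly, det_succ_column_zero, Fin.sum_univ_succ,
    Finset.sum_eq_zero fun i _ => by simp [hM]]
  simp [hsub, charpoly]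

theorem isUpperTriangular_of_submatrix_succ {T : Matrix (Fin (n + 1)) (Fin (n + 1)) R}
    (h0 : ∀ i : Fin n, T i.succ 0 = 0) (h : (T.submatrix Fin.succ Fin.succ).IsUpperTriangular) :
    T.IsUpperTriangular := by
  intro i j hji
  induction i using Fin.cases with
  | zero => exact absurd hji (Fin.not_lt_zero _)
  | succ i =>
    induction j using Fin.cases with
    | zero => exact h0 i
    | succ j => exact h (Fin.succ_lt_succ_iff.1 hji)

/-- `diag(1, A)` -/
def oneBlockDiagonal (A : Matrix (Fin n) (Fin n) R) : Matrix (Fin (n + 1)) (Fin (n + 1)) R :=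
  of (vecCons (vecCons 1 0) fun i => vecCons 0 (A i))

variable (A B : Matrix (Fin n) (Fin n) R)

@[simp] theorem oneBlockDiagonal_zero_zero : oneBlockDiagonal A 0 0 = 1 := rfl

@[simp] theorem oneBlockDiagonal_zero_succ (j : Fin n) : oneBlockDiagonal A 0 j.succ = 0 := rfl

@[simp] theorem oneBlockDiagonal_succ_zero (i : Fin n) : oneBlockDiagonal A i.succ 0 = 0 := rfl

@[simp] theorem oneBlockDiagonal_succ_succ (i j : Fin n) :
    oneBlockDiagonal A i.succ j.succ = A i j := rfl

theorem oneBlockDiagonal_mul :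
    oneBlockDiagonal (A * B) = oneBlockDiagonal A * oneBlockDiagonal B := by
  ext i j
  refine Fin.cases ?_ (fun i => ?_) i <;> refine Fin.cases ?_ (fun j => ?_) j <;>
    simp [mul_apply, Fin.sum_univ_succ]

theorem oneBlockDiagonal_one : oneBlockDiagonal (1 : Matrix (Fin n) (Fin n) R) = 1 := by
  ext i j
  refine Fin.cases ?_ (fun i => ?_) i <;> refine Fin.cases ?_ (fun j => ?_) j <;>
    simp [one_apply, (Fin.succ_ne_zero _).symm]

theorem oneBlockDiagonal_mul_oneBlockDiagonal_nonsing_inv (hA : IsUnit A) :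
    oneBlockDiagonal A * oneBlockDiagonal A⁻¹ = 1 := by
  rw [← oneBlockDiagonal_mul, mul_nonsing_inv _ ((isUnit_iff_isUnit_det A).1 hA),
    oneBlockDiagonal_one]

theorem oneBlockDiagonal_mulVec_single_zero (c : R) :
    oneBlockDiagonal A *ᵥ Pi.single 0 c = Pi.single 0 c := by
  ext i
  refine Fin.cases ?_ (fun i => ?_) i <;> simp [mulVec, dotProduct, Fin.sum_univ_succ]

theorem submatrix_succ_oneBlockDiagonal_mul_mul (N : Matrix (Fin (n + 1)) (Fin (n + 1)) R) :
    (oneBlockDiagonal A * N * oneBlockDiagonal B).submatrix Fin.succ Fin.succ =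
      A * N.submatrix Fin.succ Fin.succ * B := by
  ext i j
  simp [mul_apply, Fin.sum_univ_succ]

variable {K : Type*} [Field K]

theorem exists_isUnit_mulVec_single_zero_eq {v : Fin (n + 1) → K} (hv : v ≠ 0) :
    ∃ P : Matrix (Fin (n + 1)) (Fin (n + 1)) K, IsUnit P ∧ P *ᵥ Pi.single 0 1 = v := by
  obtain ⟨k, hk⟩ := Function.ne_iff.1 hv
  refine ⟨((1 : Matrix (Fin (n + 1)) (Fin (n + 1)) K).updateCol k v).submatrix id
    (Equiv.swap 0 k), ?_, ?_⟩
  · rw [isUnit_iff_isUnit_det, det_permute', ← cramer_apply, cramer_one]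
    exact ((Equiv.Perm.sign _).isUnit.map (Int.castRingHom K)).mul (by simpa using hk)
  · ext i
    simp

theorem exists_isUnit_conj_mulVec_single_zero {M : Matrix (Fin (n + 1)) (Fin (n + 1)) K} {μ : K}
    (hμ : M.charpoly.IsRoot μ) :
    ∃ P : Matrix (Fin (n + 1)) (Fin (n + 1)) K, IsUnit P ∧
      (P⁻¹ * M * P) *ᵥ Pi.single 0 1 = Pi.single 0 μ := by
  obtain ⟨v, hv, hMv⟩ :=
    exists_mulVec_eq_zero_iff (M := scalar _ μ - M) |>.2 (by rwa [← eval_charpoly])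
  have hMv' : M *ᵥ v = μ • v := by
    rw [sub_mulVec, sub_eq_zero, scalar_apply, ← smul_one_eq_diagonal, smul_mulVec,
      one_mulVec] at hMv
    exact hMv.symm
  obtain ⟨P, hP, hPv⟩ := exists_isUnit_mulVec_single_zero_eq hv
  refine ⟨P, hP, ?_⟩
  calc (P⁻¹ * M * P) *ᵥ Pi.single 0 1 = P⁻¹ *ᵥ (M *ᵥ v) := by
        rw [← mulVec_mulVec, ← mulVec_mulVec, hPv]
    _ = μ • (P⁻¹ * P) *ᵥ Pi.single 0 1 := by
        rw [hMv', mulVec_smul, ← hPv, mulVec_mulVec]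
    _ = Pi.single 0 μ := by
        rw [nonsing_inv_mul P ((isUnit_iff_isUnit_det P).1 hP), one_mulVec,
          ← Pi.single_smul, smul_eq_mul, mul_one]

theorem exists_isUnit_isUpperTriangular_conj :
    ∀ {n : ℕ} (M : Matrix (Fin n) (Fin n) K) (d : Fin n → K),
      M.charpoly = ∏ i, (X - C (d i)) →
      ∃ P, IsUnit P ∧ (P⁻¹ * M * P).IsUpperTriangular ∧ ∀ i, (P⁻¹ * M * P) i i = d i
  | 0, M, d, _ => ⟨1, isUnit_one, fun i => i.elim0, fun i => i.elim0⟩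
  | n + 1, M, d, hM => by
    -- Move an eigenvector for `d 0` to `e₀`, triangularize the lower-right block by
    -- induction, say by `Q`, and conjugate once more by `diag(1, Q)`.
    have hroot : M.charpoly.IsRoot (d 0) := by
      rw [hM, IsRoot, eval_prod]
      exact Finset.prod_eq_zero (Finset.mem_univ 0) (by simp)
    obtain ⟨P, hP, hcol⟩ := exists_isUnit_conj_mulVec_single_zero hroot
    set N := P⁻¹ * M * P
    have hN0 : N 0 0 = d 0 := by simpa using congrFun hcol 0
    have hsplit := charpoly_eq_X_sub_C_mul_charpoly_submatrix_succ (M := N) fun i => by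
      simpa using congrFun hcol i.succ
    have hNsub : (N.submatrix Fin.succ Fin.succ).charpoly = ∏ i : Fin n, (X - C (d i.succ)) := by
      refine mul_left_cancel₀ (X_sub_C_ne_zero (d 0)) ?_
      rw [← Fin.prod_univ_succ (f := fun i => X - C (d i)), ← hM, ← hN0, ← hsplit,
        charpoly_nonsing_inv_mul_mul hP]
    obtain ⟨Q, hQ, htri, hdiag⟩ := exists_isUnit_isUpperTriangular_conj _ _ hNsub
    have hL := oneBlockDiagonal_mul_oneBlockDiagonal_nonsing_inv Q hQ
    set T := oneBlockDiagonal Q⁻¹ * N * oneBlockDiagonal Q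
    have hT : (P * oneBlockDiagonal Q)⁻¹ * M * (P * oneBlockDiagonal Q) = T := by
      simp only [T, N, mul_inv_rev, inv_eq_right_inv hL, mul_assoc]
    have hTcol : T *ᵥ Pi.single 0 1 = Pi.single 0 (d 0) := by
      rw [← mulVec_mulVec, ← mulVec_mulVec, oneBlockDiagonal_mulVec_single_zero, hcol,
        oneBlockDiagonal_mulVec_single_zero]
    have hTsub : T.submatrix Fin.succ Fin.succ = Q⁻¹ * N.submatrix Fin.succ Fin.succ * Q :=
      submatrix_succ_oneBlockDiagonal_mul_mul _ _ _
    refine ⟨P * oneBlockDiagonal Q, hP.mul ((isUnit_iff_isUnit_det _).2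
      (isUnit_det_of_right_inverse hL)), hT ▸ ?_, fun i => hT ▸ ?_⟩
    · refine isUpperTriangular_of_submatrix_succ (fun i => by simpa using congrFun hTcol i.succ) ?_
      rwa [hTsub]
    · induction i using Fin.cases with
      | zero => simpa using congrFun hTcol 0
      | succ i => exact (congrFun (congrFun hTsub i) i).trans (hdiag i)

theorem exists_charpoly_eq_prod_X_sub_C [IsAlgClosed K] (M : Matrix (Fin n) (Fin n) K) :
    ∃ d : Fin n → K, M.charpoly = ∏ i, (X - C (d i)) := by
  have hsplit : M.charpoly.Splits := IsAlgClosed.splits _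
  set l := M.charpoly.roots.toList
  have hl : l.length = n := by
    simp [l, splits_iff_card_roots.1 hsplit, charpoly_natDegree_eq_dim]
  refine ⟨fun i => l[(i : ℕ)], ?_⟩
  rw [← Fintype.prod_equiv (finCongr hl) (fun i => X - C l[(i : ℕ)]) _ fun _ => rfl,
    Fin.prod_univ_fun_getElem l (fun a => X - C a),
    hsplit.eq_prod_roots_of_monic (charpoly_monic M), ← Multiset.prod_toList]
  simp [l]

end Triangularization

theorem exists_entire_curve_of_charpoly_eq {n : ℕ} {A B : Matrix (Fin n) (Fin n) ℂ}
    (h : A.charpoly = B.charpoly) :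
    ∃ φ : ℂ → Matrix (Fin n) (Fin n) ℂ, EntrywiseEntire φ ∧
      (∀ ζ, (φ ζ).charpoly = A.charpoly) ∧ φ 0 = A ∧ φ 1 = B := by
  obtain ⟨d, hd⟩ := exists_charpoly_eq_prod_X_sub_C A
  obtain ⟨P₁, hP₁, htri₁, hdiag₁⟩ := exists_isUnit_isUpperTriangular_conj A d hd
  obtain ⟨P₂, hP₂, htri₂, hdiag₂⟩ := exists_isUnit_isUpperTriangular_conj B d (h ▸ hd)
  set T₁ := P₁⁻¹ * A * P₁
  set T₂ := P₂⁻¹ * B * P₂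
  have hsegment : EntrywiseEntire fun ζ : ℂ => T₁ - ζ • (T₁ - T₂) :=
    (EntrywiseEntire.const T₁).sub (EntrywiseEntire.smul differentiable_id (.const _))
  have hconj {P : Matrix (Fin n) (Fin n) ℂ} (hP : IsUnit P) (M) : P * (P⁻¹ * M * P) * P⁻¹ = M := by
    have hdet := (isUnit_iff_isUnit_det P).1 hP
    simp [mul_assoc, mul_nonsing_inv _ hdet, mul_nonsing_inv_cancel_left _ _ hdet]
  obtain ⟨φ, hφ, hchar, h0, h1⟩ := exists_entire_conj_curve hP₁ hP₂ hsegment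
  refine ⟨φ, hφ, fun ζ => ?_, by simpa [T₁, hconj hP₁] using h0, by simpa [T₂, hconj hP₂] using h1⟩
  rw [hchar, charpoly_sub_smul_sub_of_isUpperTriangular htri₁ htri₂ (fun i => by
    rw [hdiag₁, hdiag₂]), charpoly_nonsing_inv_mul_mul hP₁]

end Matrix

theorem same_spectrum_iff_entire_curve_general (n : ℕ) (A B : Fin n → Fin n → ℂ)
    (hA : A ∈ specBall n) :
    (Matrix.of A).charpoly = (Matrix.of B).charpoly ↔
      ∃ φ : ℂ → (Fin n → Fin n → ℂ), Differentiable ℂ φ ∧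
        (∀ ζ : ℂ, φ ζ ∈ specBall n) ∧ φ 0 = A ∧ φ 1 = B := by
  constructor
  · intro h
    obtain ⟨φ, hφ, hchar, h0, h1⟩ := exists_entire_curve_of_charpoly_eq h
    refine ⟨φ, differentiable_pi.2 fun i => differentiable_pi.2 (hφ i), fun ζ μ hμ => hA μ ?_,
      h0, h1⟩
    rwa [← hchar ζ]
  · rintro ⟨φ, hφ, hball, rfl, rfl⟩
    refine EntrywiseEntire.charpoly_eq_of_forall_mem_roots (φ := fun ζ => of (φ ζ)) (r := 1)
      (fun i j => differentiable_pi.1 (differentiable_pi.1 hφ i) j) (fun ζ μ hμ => ?_) 0 1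
    exact_mod_cast (hball ζ μ hμ).le

/-- for `A, B ∈ Ωₙ` the following are equivalent:
(a) `A` and `B` have the same characteristic polynomial (equal spectra with
multiplicities); (b) there is an entire holomorphic map `φ : ℂ → Mₙ(ℂ)` with values
in `Ωₙ` such that `φ(0) = A` and `φ(1) = B`. -/
theorem same_spectrum_iff_entire_curve (n : ℕ) (A B : Fin n → Fin n → ℂ)
    (hA : A ∈ specBall n) (hB : B ∈ specBall n) :
    (Matrix.of A).charpoly = (Matrix.of B).charpoly ↔
      ∃ φ : ℂ → (Fin n → Fin n → ℂ), Differentiable ℂ φ ∧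
        (∀ ζ : ℂ, φ ζ ∈ specBall n) ∧ φ 0 = A ∧ φ 1 = B :=
  same_spectrum_iff_entire_curve_general n A B hA
end

section
/- The convex hull of the spectral ball Ω_n is exactly the set of n×n complex matrices A with |trace(A)| < n; that is, convexHull(Ω_n) = {A ∈ M_n(ℂ) : |tr A|/n < 1}. -/
/-!
On `Ωₙ` we have `|tr A| ≤ ∑ |λᵢ| < n`, and the right-hand side is convex, which gives one
inclusion. Conversely, a matrix whose diagonal entries all lie in the unit disc is the midpoint
of an upper and a lower triangular matrix with that diagonal, both in `Ωₙ`. A matrix `A` with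
`|tr A| < n` is the midpoint of `2A - D` and `D`, where `D` is diagonal with
`Dᵢᵢ = 2Aᵢᵢ - c` and `c = tr A / n`: the first has constant diagonal `c`, and conjugating `D`
by the discrete Fourier matrix gives a matrix whose diagonal is constant, equal to the mean `c`
of the diagonal of `D`. Since `Ωₙ` is invariant under similarity, so is its convex hull.
-/

open Matrix Polynomial

namespace Matrix

variable {ι R : Type*} [LinearOrder ι] [Semiring R]

def upperFold (M : Matrix ι ι R) : Matrix ι ι R :=
  of fun i j => if i < j then 2 * M i j else if i = j then M i j else 0

lemma upperFold_isUpperTriangular (M : Matrix ι ι R) : (upperFold M).IsUpperTriangular :=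
  fun i j (hji : j < i) => by simp [upperFold, hji.not_gt, hji.ne']

@[simp]
lemma upperFold_apply_self (M : Matrix ι ι R) (i : ι) : upperFold M i i = M i i := by
  simp [upperFold]

lemma upperFold_add_transpose_upperFold_transpose (M : Matrix ι ι R) :
    upperFold M + (upperFold Mᵀ)ᵀ = M + M := by
  ext i j
  rcases lt_trichotomy i j with h | rfl | h
  · simp [upperFold, h, h.not_gt, h.ne', two_mul]
  · simp
  · simp [upperFold, h, h.not_gt, h.ne', two_mul]

end Matrix

section Fourier

variable {K : Type*} [Field K] {n : ℕ}

def fourierMatrix (n : ℕ) (ζ : K) : Matrix (Fin n) (Fin n) K :=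
  of fun a b => ζ ^ ((a : ℕ) * b)

lemma Fin.sum_pow_eq_zero_of_pow_eq_one {w : K} (hw : w ^ n = 1) (hw1 : w ≠ 1) :
    ∑ j : Fin n, w ^ (j : ℕ) = 0 := by
  rw [Fin.sum_univ_eq_sum_range (w ^ ·), geom_sum_eq hw1, hw, sub_self, zero_div]

lemma IsPrimitiveRoot.fourierMatrix_mul_fourierMatrix_inv {ζ : K} (hζ : IsPrimitiveRoot ζ n) :
    fourierMatrix n ζ * fourierMatrix n ζ⁻¹ = (n : K) • 1 := by
  ext a b
  have hζ0 : ζ ≠ 0 := hζ.ne_zero (Fin.pos a).ne'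
  have hsum : (fourierMatrix n ζ * fourierMatrix n ζ⁻¹) a b =
      ∑ j : Fin n, (ζ ^ (a : ℕ) * ζ⁻¹ ^ (b : ℕ)) ^ (j : ℕ) := by
    simp only [fourierMatrix, mul_apply, of_apply, mul_pow, ← pow_mul, mul_comm]
  rw [hsum, Matrix.smul_apply, smul_eq_mul]
  rcases eq_or_ne a b with rfl | hab
  · simp [hζ0]
  · rw [one_apply_ne hab, mul_zero]
    refine Fin.sum_pow_eq_zero_of_pow_eq_one ?_ ?_
    · rw [mul_pow, ← pow_mul, ← pow_mul, mul_comm (a : ℕ), mul_comm (b : ℕ), pow_mul, pow_mul,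
        hζ.pow_eq_one, hζ.inv.pow_eq_one, one_pow, one_pow, one_mul]
    · rw [inv_pow, Ne, mul_inv_eq_one₀ (pow_ne_zero _ hζ0)]
      exact fun h => hab (Fin.ext (hζ.pow_inj a.isLt b.isLt h))

lemma fourierMatrix_inv_mul_diagonal_mul_fourierMatrix_apply_self {ζ : K} (hζ : ζ ≠ 0)
    (d : Fin n → K) (a : Fin n) :
    (fourierMatrix n ζ⁻¹ * diagonal d * fourierMatrix n ζ) a a = ∑ j, d j := by
  rw [mul_apply]
  simp only [mul_diagonal, fourierMatrix, of_apply, inv_pow]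
  refine Finset.sum_congr rfl fun j _ => ?_
  rw [mul_comm (j : ℕ), mul_right_comm, inv_mul_cancel₀ (pow_ne_zero _ hζ), one_mul]

end Fourier

section SpecBall

variable {n : ℕ}

lemma mem_specBall_of_isUpperTriangular {M : Matrix (Fin n) (Fin n) ℂ} (hM : M.IsUpperTriangular)
    (hdiag : ∀ i, ‖M i i‖ < 1) : M ∈ specBall n := by
  intro μ hμ
  have hroot : (∏ i, (X - C (M i i))).IsRoot μ := by
    rw [← charpoly_of_isUpperTriangular M hM]
    exact isRoot_of_mem_roots hμ
  simp only [IsRoot, eval_prod, eval_sub, eval_X, eval_C, Finset.prod_eq_zero_iff,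
    sub_eq_zero] at hroot
  obtain ⟨i, -, rfl⟩ := hroot
  exact hdiag i

lemma mem_specBall_of_charpoly_eq {M N : Matrix (Fin n) (Fin n) ℂ} (h : M.charpoly = N.charpoly)
    (hN : N ∈ specBall n) : M ∈ specBall n :=
  fun μ hμ => hN μ (h ▸ hμ)

lemma mem_convexHull_specBall_of_forall_norm_diag_lt {M : Matrix (Fin n) (Fin n) ℂ}
    (hdiag : ∀ i, ‖M i i‖ < 1) : M ∈ convexHull ℝ (specBall n) := by
  have hU : upperFold M ∈ specBall n :=
    mem_specBall_of_isUpperTriangular (upperFold_isUpperTriangular M) (by simpa using hdiag)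
  have hL : (upperFold Mᵀ)ᵀ ∈ specBall n :=
    mem_specBall_of_charpoly_eq (charpoly_transpose _) <|
      mem_specBall_of_isUpperTriangular (upperFold_isUpperTriangular Mᵀ) (by simpa using hdiag)
  have hM : M = (1 / 2 : ℝ) • upperFold M + (1 / 2 : ℝ) • (upperFold Mᵀ)ᵀ := by
    rw [← smul_add, upperFold_add_transpose_upperFold_transpose, ← two_smul ℝ, smul_smul]
    norm_num
  rw [hM]
  exact convex_convexHull ℝ _ (subset_convexHull ℝ _ hU) (subset_convexHull ℝ _ hL)
    (by norm_num) (by norm_num) (by norm_num)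

lemma mul_mul_mem_convexHull_specBall {P Q M : Matrix (Fin n) (Fin n) ℂ} (hPQ : P * Q = 1)
    (hM : M ∈ convexHull ℝ (specBall n)) : P * M * Q ∈ convexHull ℝ (specBall n) := by
  let f : Matrix (Fin n) (Fin n) ℂ →ₗ[ℝ] Matrix (Fin n) (Fin n) ℂ :=
    LinearMap.mulLeft ℝ P ∘ₗ LinearMap.mulRight ℝ Q
  have hsub : specBall n ⊆ f ⁻¹' convexHull ℝ (specBall n) :=
    fun (N : Matrix (Fin n) (Fin n) ℂ) hN => subset_convexHull ℝ (specBall n) <|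
      mem_specBall_of_charpoly_eq (M := P * (N * Q)) (by
        rw [charpoly_mul_comm, Matrix.mul_assoc, mul_eq_one_comm.mp hPQ, Matrix.mul_one]) hN
  have hconv : Convex ℝ (f ⁻¹' convexHull ℝ (specBall n)) :=
    (convex_convexHull ℝ _).linear_preimage f
  rw [Matrix.mul_assoc]
  exact convexHull_min hsub hconv hM

lemma norm_trace_lt_of_mem_specBall (hn : 0 < n) {M : Matrix (Fin n) (Fin n) ℂ}
    (hM : M ∈ specBall n) : ‖M.trace‖ < n := by
  have hcard : M.charpoly.roots.card = n := by
    rw [splits_iff_card_roots.mp (IsAlgClosed.splits _), charpoly_natDegree_eq_dim,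
      Fintype.card_fin]
  have hne : M.charpoly.roots ≠ 0 := Multiset.card_pos.mp (hcard.symm ▸ hn)
  calc ‖M.trace‖ ≤ (M.charpoly.roots.map norm).sum := by
        rw [trace_eq_sum_roots_charpoly]; exact norm_multiset_sum_le _
    _ < (M.charpoly.roots.map fun _ => (1 : ℝ)).sum := Multiset.sum_lt_sum_of_nonempty hne hM
    _ = n := by simp [hcard]

lemma convex_setOf_norm_trace_lt (r : ℝ) :
    Convex ℝ {M : Matrix (Fin n) (Fin n) ℂ | ‖M.trace‖ < r} := by
  simpa [Set.preimage, Metric.ball] using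
    (convex_ball (0 : ℂ) r).linear_preimage (traceLinearMap (Fin n) ℝ ℂ)

lemma diagonal_mem_convexHull_specBall (hn : 0 < n) {d : Fin n → ℂ} (hd : ‖∑ i, d i‖ < n) :
    diagonal d ∈ convexHull ℝ (specBall n) := by
  obtain ⟨ζ, hζ⟩ : ∃ ζ : ℂ, IsPrimitiveRoot ζ n := ⟨_, Complex.isPrimitiveRoot_exp n hn.ne'⟩
  have hn0 : (n : ℂ) ≠ 0 := Nat.cast_ne_zero.mpr hn.ne'
  set P := fourierMatrix n ζ
  set Q := (n : ℂ)⁻¹ • fourierMatrix n ζ⁻¹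
  have hPQ : P * Q = 1 := by
    rw [Matrix.mul_smul, hζ.fourierMatrix_mul_fourierMatrix_inv, smul_smul, inv_mul_cancel₀ hn0,
      one_smul]
  have hdiag : ∀ a, ‖(Q * diagonal d * P) a a‖ < 1 := fun a => by
    rw [Matrix.smul_mul, Matrix.smul_mul, Matrix.smul_apply,
      fourierMatrix_inv_mul_diagonal_mul_fourierMatrix_apply_self (hζ.ne_zero hn.ne'), smul_eq_mul,
      norm_mul, norm_inv, Complex.norm_natCast, inv_mul_lt_one₀ (Nat.cast_pos.mpr hn)]
    exact hd
  simpa [← Matrix.mul_assoc, hPQ, Matrix.mul_assoc _ _ Q] using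
    mul_mul_mem_convexHull_specBall hPQ (mem_convexHull_specBall_of_forall_norm_diag_lt hdiag)

lemma mem_convexHull_specBall_of_norm_trace_lt (hn : 0 < n) {A : Matrix (Fin n) (Fin n) ℂ}
    (hA : ‖A.trace‖ < n) : A ∈ convexHull ℝ (specBall n) := by
  set c := A.trace / n
  have hc : ‖c‖ < 1 := by
    rwa [norm_div, Complex.norm_natCast, div_lt_one (Nat.cast_pos.mpr hn)]
  set D := diagonal fun i => 2 * A i i - c
  have hD : D ∈ convexHull ℝ (specBall n) := by
    refine diagonal_mem_convexHull_specBall hn ?_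
    have hsum : ∑ i, (2 * A i i - c) = A.trace := by
      rw [Finset.sum_sub_distrib, ← Finset.mul_sum, Finset.sum_const, Finset.card_univ,
        Fintype.card_fin, nsmul_eq_mul, mul_div_cancel₀ _ (Nat.cast_ne_zero.mpr hn.ne')]
      change 2 * A.trace - A.trace = A.trace
      ring
    rwa [hsum]
  have hX : (2 : ℂ) • A - D ∈ convexHull ℝ (specBall n) :=
    mem_convexHull_specBall_of_forall_norm_diag_lt fun i => by simpa [D] using hc
  have hsplit : A = (1 / 2 : ℝ) • ((2 : ℂ) • A - D) + (1 / 2 : ℝ) • D := by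
    rw [← smul_add, sub_add_cancel, ← Complex.coe_smul, smul_smul]
    norm_num
  rw [hsplit]
  exact convex_convexHull ℝ (specBall n) hX hD (by norm_num) (by norm_num) (by norm_num)

end SpecBall

/-- the convex hull of the spectral ball `Ωₙ` is exactly
`{A ∈ Mₙ(ℂ) : |tr A| / n < 1}`. -/
theorem convexHull_specBall (n : ℕ) (hn : 0 < n) :
    convexHull ℝ (specBall n) =
      {A : Fin n → Fin n → ℂ | ‖Matrix.trace (Matrix.of A)‖ / n < 1} := by
  simp_rw [div_lt_one (Nat.cast_pos.mpr hn : (0 : ℝ) < n)]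
  exact (convexHull_min (fun A => norm_trace_lt_of_mem_specBall hn)
    (convex_setOf_norm_trace_lt n)).antisymm fun A => mem_convexHull_specBall_of_norm_trace_lt hn
end

section
/- Let n, k be positive integers with k dividing n, and let e_k denote the k-th standard basis vector of ℂⁿ. Then the Kobayashi metric of the symmetrized polydisc at the origin in direction e_k satisfies κ_{𝔾_n}(0; e_k) = k/n. -/
open Finset Metric

/-- The Kobayashi metric of a set `D ⊆ ℂᴺ` at `z` in direction `X`:
`κ_D(z; X) = inf{|α| : ∃ φ : 𝔻 → D holomorphic, φ(0) = z, α·φ'(0) = X}`. -/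
noncomputable def kobayashi {N : ℕ} (D : Set (Fin N → ℂ)) (z X : Fin N → ℂ) : ℝ :=
  sInf {r : ℝ | ∃ α : ℂ, r = ‖α‖ ∧
    ∃ φ : ℂ → (Fin N → ℂ), DifferentiableOn ℂ φ (ball 0 1) ∧
      Set.MapsTo φ (ball 0 1) D ∧ φ 0 = z ∧ α • deriv φ 0 = X}

/-!
For `|x| < 1` the roots of `(X ^ k + x) ^ m` lie in the unit disc and the coefficients of this
polynomial, i.e. the elementary symmetric functions of its roots, are polynomials in `x`; this is a
holomorphic disc in `𝔾ₙ` (`n = k m`) through `0` with derivative `m • e_k`, so `κ ≤ k / n`.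

Conversely, by Newton's identities the power sum `p_k = ∑ z_j ^ k` is a polynomial in
`σ₁, …, σ_k` whose only linear term is `(-1) ^ (k + 1) k σ_k`. For a holomorphic disc `φ` in `𝔾ₙ`
with `φ 0 = 0`, composing with this polynomial gives a holomorphic map of the unit disc into the
disc of radius `n` vanishing at `0` with derivative `± k φ_k'(0)`, and the Schwarz lemma yields
`k ‖φ_k'(0)‖ ≤ n`.
-/

section Newton

variable {R : Type*} [CommRing R]

/-- Newton's identities solved for the power sums, with `e i` in the role of `σ_i`. The sum
starts at `i = 0`, whose term vanishes because `newtonPsum e 0 = 0` (not the power sum `p₀`). -/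
def newtonPsum (e : ℕ → R) (d : ℕ) : R :=
  (-1) ^ (d + 1) * d * e d - ∑ i : Fin d, (-1) ^ (d - i) * e (d - i) * newtonPsum e i
termination_by d

theorem newtonPsum_zero (e : ℕ → R) : newtonPsum e 0 = 0 := by
  rw [newtonPsum]; simp

theorem newtonPsum_eq_sum_antidiagonal (e : ℕ → R) (d : ℕ) :
    newtonPsum e d = (-1) ^ (d + 1) * d * e d -
      ∑ a ∈ antidiagonal d with a.1 ∈ Set.Ioo 0 d, (-1) ^ a.1 * e a.1 * newtonPsum e a.2 := by
  rw [newtonPsum, Fin.sum_univ_eq_sum_range (fun i => (-1) ^ (d - i) * e (d - i) * newtonPsum e i),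
    sum_filter, ← Nat.sum_antidiagonal_swap, Nat.sum_antidiagonal_eq_sum_range_succ_mk,
    sum_range_succ]
  congr 1
  simp only [Prod.swap, Set.mem_Ioo, Nat.sub_self, lt_irrefl, false_and, if_false, add_zero]
  refine sum_congr rfl fun i hi => ?_
  rcases Nat.eq_zero_or_pos i with rfl | hi0
  · simp [newtonPsum_zero]
  · rw [if_pos (by simp at hi; omega)]

theorem map_newtonPsum {S F : Type*} [CommRing S] [FunLike F R S] [RingHomClass F R S] (f : F)
    (e : ℕ → R) (d : ℕ) : f (newtonPsum e d) = newtonPsum (fun i => f (e i)) d := by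
  induction d using Nat.strong_induction_on with
  | _ d ih =>
    rw [newtonPsum, newtonPsum]
    simp [map_sum, fun i : Fin d => ih i i.2]

theorem newtonPsum_eq_zero {e : ℕ → R} (he : ∀ i, 0 < i → e i = 0) (d : ℕ) :
    newtonPsum e d = 0 := by
  rw [newtonPsum]
  rcases Nat.eq_zero_or_pos d with rfl | hd
  · simp
  · simp [he d hd, fun i : Fin d => he (d - i) (Nat.sub_pos_of_lt i.2)]

theorem newtonPsum_esymm (σ : Type*) [Fintype σ] {d : ℕ} (hd : 0 < d) :
    newtonPsum (MvPolynomial.esymm σ R) d = MvPolynomial.psum σ R d := by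
  induction d using Nat.strong_induction_on with
  | _ d ih =>
    rw [newtonPsum_eq_sum_antidiagonal, MvPolynomial.psum_eq_mul_esymm_sub_sum σ R d hd]
    congr 1
    refine sum_congr rfl fun a ha => ?_
    simp only [mem_filter, HasAntidiagonal.mem_antidiagonal, Set.mem_Ioo] at ha
    rw [ih a.2 (by omega) (by omega)]

end Newton

theorem newtonPsum_esym {n d : ℕ} (hd : 0 < d) (z : Fin n → ℂ) :
    newtonPsum (fun i => esym n i z) d = ∑ j, z j ^ d := by
  have h : ∀ i, esym n i z = MvPolynomial.aeval z (MvPolynomial.esymm (Fin n) ℂ i) := by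
    simp [esym, MvPolynomial.esymm, map_sum, map_prod]
  simp only [h, ← map_newtonPsum, newtonPsum_esymm _ hd, MvPolynomial.psum, map_sum, map_pow,
    MvPolynomial.aeval_X]

section Calculus

variable {𝕜 : Type*} [NontriviallyNormedField 𝕜]

theorem differentiableOn_newtonPsum {E : Type*} [NormedAddCommGroup E] [NormedSpace 𝕜 E]
    {u : ℕ → E → 𝕜} {s : Set E} (hu : ∀ i, 0 < i → DifferentiableOn 𝕜 (u i) s) (d : ℕ) :
    DifferentiableOn 𝕜 (fun x => newtonPsum (fun i => u i x) d) s := by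
  induction d using Nat.strong_induction_on with
  | _ d ih =>
    rcases Nat.eq_zero_or_pos d with rfl | hd
    · simp [newtonPsum_zero, differentiableOn_const]
    simp_rw [newtonPsum.eq_1 _ d]
    refine ((hu d hd).const_mul _).sub (DifferentiableOn.fun_sum fun i _ => ?_)
    exact ((hu _ (Nat.sub_pos_of_lt i.2)).const_mul _).mul (ih i i.2)

/-- Every term of the sum is a product of two factors vanishing at `x`, so only the leading
term contributes. -/
theorem hasDerivAt_newtonPsum {u : ℕ → 𝕜 → 𝕜} {u' : ℕ → 𝕜} {x : 𝕜}
    (hu : ∀ i, 0 < i → HasDerivAt (u i) (u' i) x) (hx : ∀ i, 0 < i → u i x = 0) (d : ℕ) :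
    HasDerivAt (fun y => newtonPsum (fun i => u i y) d) ((-1) ^ (d + 1) * d * u' d) x := by
  induction d using Nat.strong_induction_on with
  | _ d ih =>
    rcases Nat.eq_zero_or_pos d with rfl | hd
    · simpa [newtonPsum_zero] using hasDerivAt_const x (0 : 𝕜)
    simp_rw [newtonPsum.eq_1 _ d]
    have hterm : ∀ i : Fin d, HasDerivAt
        (fun y => (-1) ^ (d - i) * u (d - i) y * newtonPsum (fun i => u i y) i) 0 x := fun i => by
      simpa [hx _ (Nat.sub_pos_of_lt i.2), newtonPsum_eq_zero hx] using
        ((hu _ (Nat.sub_pos_of_lt i.2)).const_mul ((-1 : 𝕜) ^ (d - i))).fun_mul (ih i i.2)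
    simpa using ((hu d hd).const_mul ((-1 : 𝕜) ^ (d + 1) * d)).fun_sub
      (HasDerivAt.fun_sum fun i _ => hterm i)

end Calculus

section LowerBound

variable {n : ℕ}

def symSeq (w : Fin n → ℂ) : ℕ → ℂ
  | 0 => 1
  | i + 1 => if h : i < n then w ⟨i, h⟩ else 0

theorem symSeq_symMap (z : Fin n → ℂ) : symSeq (symMap n z) = fun i => esym n i z := by
  funext i
  rcases i with _ | i
  · simp [symSeq, esym]
  · by_cases h : i < n
    · simp [symSeq, symMap, h]
    · rw [symSeq, dif_neg h, esym, powersetCard_eq_empty.mpr (by simpa using h), sum_empty]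

@[simp]
theorem symSeq_succ (w : Fin n → ℂ) (j : Fin n) : symSeq w (j + 1) = w j := by
  simp [symSeq]

theorem symSeq_zero {i : ℕ} (hi : 0 < i) : symSeq (0 : Fin n → ℂ) i = 0 := by
  obtain ⟨i, rfl⟩ := Nat.exists_eq_add_one.mpr hi
  simp [symSeq]

theorem differentiableOn_symSeq {φ : ℂ → Fin n → ℂ} {s : Set ℂ} (hφ : DifferentiableOn ℂ φ s)
    (i : ℕ) : DifferentiableOn ℂ (fun x => symSeq (φ x) i) s := by
  rcases i with _ | i
  · exact differentiableOn_const 1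
  · by_cases h : i < n
    · simpa [symSeq, h] using differentiableOn_pi.mp hφ ⟨i, h⟩
    · simp [symSeq, h, differentiableOn_const]

theorem hasDerivAt_symSeq {φ : ℂ → Fin n → ℂ} {φ' : Fin n → ℂ} {x : ℂ} (hφ : HasDerivAt φ φ' x)
    {i : ℕ} (hi : 0 < i) : HasDerivAt (fun y => symSeq (φ y) i) (symSeq φ' i) x := by
  obtain ⟨i, rfl⟩ := Nat.exists_eq_add_one.mpr hi
  by_cases h : i < n
  · simpa [symSeq, h] using hasDerivAt_pi.mp hφ ⟨i, h⟩
  · simpa [symSeq, h] using hasDerivAt_const x (0 : ℂ)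

theorem norm_sum_pow_lt_card {ι 𝕜 : Type*} [Fintype ι] [Nonempty ι] [NormedDivisionRing 𝕜]
    {z : ι → 𝕜} (hz : ∀ i, ‖z i‖ < 1) {d : ℕ} (hd : d ≠ 0) :
    ‖∑ i, z i ^ d‖ < Fintype.card ι :=
  calc ‖∑ i, z i ^ d‖ ≤ ∑ i, ‖z i‖ ^ d := (norm_sum_le _ _).trans_eq (by simp only [norm_pow])
    _ < ∑ _i : ι, (1 : ℝ) :=
      sum_lt_sum_of_nonempty univ_nonempty fun i _ => pow_lt_one₀ (norm_nonneg _) (hz i) hd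
    _ = Fintype.card ι := by simp

theorem succ_mul_norm_deriv_le_of_mapsTo_symPolydisc {φ : ℂ → Fin n → ℂ}
    (hφ : DifferentiableOn ℂ φ (ball 0 1)) (hmaps : Set.MapsTo φ (ball 0 1) (symPolydisc n))
    (h0 : φ 0 = 0) (j : Fin n) :
    ((j : ℝ) + 1) * ‖deriv φ 0 j‖ ≤ n := by
  set F : ℂ → ℂ := fun x => newtonPsum (fun i => symSeq (φ x) i) (j + 1)
  have hF0 : F 0 = 0 := newtonPsum_eq_zero (fun i hi => by rw [h0, symSeq_zero hi]) _
  have hFd : DifferentiableOn ℂ F (ball 0 1) :=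
    differentiableOn_newtonPsum (fun i _ => differentiableOn_symSeq hφ i) _
  have hFmaps : Set.MapsTo F (ball 0 1) (closedBall (F 0) n) := by
    intro x hx
    obtain ⟨z, hz, hφz⟩ := hmaps hx
    have : Nonempty (Fin n) := ⟨j⟩
    rw [hF0, mem_closedBall_zero_iff]
    simp only [F, ← hφz, symSeq_symMap, newtonPsum_esym (j : ℕ).succ_pos]
    simpa using (norm_sum_pow_lt_card hz (j : ℕ).succ_ne_zero).le
  have hφ' : HasDerivAt φ (deriv φ 0) 0 :=
    (hφ.differentiableAt (ball_mem_nhds 0 one_pos)).hasDerivAt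
  have hF' : HasDerivAt F ((-1) ^ ((j : ℕ) + 1 + 1) * ((j + 1 : ℕ) : ℂ) * deriv φ 0 j) 0 := by
    simpa only [symSeq_succ] using
      hasDerivAt_newtonPsum (fun i hi => hasDerivAt_symSeq hφ' hi)
        (fun i hi => by rw [h0, symSeq_zero hi]) ((j : ℕ) + 1)
  have hSchwarz := Complex.norm_deriv_le_div_of_mapsTo_ball hFd hFmaps one_pos
  rw [hF'.deriv, norm_mul, norm_mul, norm_pow, norm_neg, norm_one, one_pow, one_mul,
    Complex.norm_natCast, div_one] at hSchwarz
  exact_mod_cast hSchwarz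

end LowerBound

section UpperBound

open Polynomial

theorem esym_eq_coeff_prod {n d : ℕ} (hd : d ≤ n) (z : Fin n → ℂ) :
    esym n d z = (∏ r, (X + C (z r))).coeff (n - d) := by
  rw [Finset.prod_X_add_C_coeff _ _ (by simp), card_univ, Fintype.card_fin,
    Nat.sub_sub_self hd, esym]

theorem prod_range_mul_mod {M : Type*} [CommMonoid M] (f : ℕ → M) (k m : ℕ) :
    ∏ i ∈ range (k * m), f (i % k) = (∏ a ∈ range k, f a) ^ m := by
  induction m with
  | zero => simp
  | succ m ih =>
    rw [Nat.mul_succ, prod_range_add, ih, pow_succ]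
    congr 1
    refine prod_congr rfl fun i hi => ?_
    rw [Nat.mul_add_mod, Nat.mod_eq_of_lt (mem_range.mp hi)]

theorem coeff_X_pow_add_C_pow {R : Type*} [CommRing R] {k m d : ℕ} (hk : 0 < k) (hd : d ≤ k * m)
    (c : R) : ((X ^ k + C c) ^ m).coeff (k * m - d) =
      if k ∣ d then (m.choose (d / k) : R) * c ^ (d / k) else 0 := by
  have hexpand : (X ^ k + C c) ^ m = expand R k ((X + C c) ^ m) := by simp
  rw [hexpand, coeff_expand hk, coeff_X_add_C_pow]
  by_cases hdvd : k ∣ d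
  · obtain ⟨e, rfl⟩ := hdvd
    have hem : e ≤ m := Nat.le_of_mul_le_mul_left hd hk
    rw [← Nat.mul_sub, if_pos (dvd_mul_right _ _), if_pos (dvd_mul_right _ _),
      Nat.mul_div_cancel_left _ hk, Nat.mul_div_cancel_left _ hk, Nat.sub_sub_self hem,
      Nat.choose_symm hem, mul_comm]
  · rw [if_neg hdvd, if_neg fun h => hdvd ?_]
    simpa [Nat.sub_sub_self hd] using Nat.dvd_sub (dvd_mul_right k m) h

/-- The disc `x ↦ σ(roots of (X^k + x)^m)`, written out through the binomial theorem. -/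
def extremalDisc (k m : ℕ) (x : ℂ) : Fin (k * m) → ℂ :=
  fun j => if k ∣ j + 1 then (m.choose ((j + 1) / k) : ℂ) * x ^ ((j + 1) / k) else 0

variable {k m : ℕ}

theorem extremalDisc_eq_coeff (hk : 0 < k) (x : ℂ) (j : Fin (k * m)) :
    extremalDisc k m x j = ((X ^ k + C x) ^ m).coeff (k * m - (j + 1)) := by
  rw [coeff_X_pow_add_C_pow hk j.2 x, extremalDisc]

theorem mapsTo_extremalDisc (hk : 0 < k) :
    Set.MapsTo (extremalDisc k m) (ball 0 1) (symPolydisc (k * m)) := by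
  intro x hx
  obtain ⟨μ, hμ⟩ := IsAlgClosed.exists_pow_nat_eq (-x) hk
  have hζ := Complex.isPrimitiveRoot_exp k hk.ne'
  set ζ := Complex.exp (2 * Real.pi * Complex.I / k)
  -- the roots of `(X ^ k + x) ^ m`: each `k`-th root of `-x`, repeated `m` times
  refine ⟨fun r => -(ζ ^ ((r : ℕ) % k) * μ), fun r => ?_, ?_⟩
  · have hμx : ‖μ‖ ^ k = ‖x‖ := by rw [← norm_pow, hμ, norm_neg]
    rw [norm_neg, norm_mul, norm_pow, hζ.norm'_eq_one hk.ne', one_pow, one_mul,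
      ← pow_lt_one_iff_of_nonneg (norm_nonneg μ) hk.ne', hμx]
    exact mem_ball_zero_iff.mp hx
  · have hprod : ∏ r : Fin (k * m), (X + C (-(ζ ^ ((r : ℕ) % k) * μ))) = (X ^ k + C x) ^ m := by
      simp_rw [map_neg, ← sub_eq_add_neg]
      rw [Fin.prod_univ_eq_prod_range (fun i => X - C (ζ ^ (i % k) * μ)),
        prod_range_mul_mod (fun a => X - C (ζ ^ a * μ)), ← X_pow_sub_C_eq_prod hζ hk hμ,
        map_neg, sub_neg_eq_add]
    funext j
    rw [symMap, esym_eq_coeff_prod j.2, hprod, extremalDisc_eq_coeff hk]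

theorem differentiable_extremalDisc : Differentiable ℂ (extremalDisc k m) := by
  refine differentiable_pi.mpr fun j => ?_
  unfold extremalDisc
  split_ifs <;> fun_prop

theorem extremalDisc_zero (hk : 0 < k) : extremalDisc k m 0 = 0 := by
  funext j
  simp only [extremalDisc, Pi.zero_apply]
  split_ifs with hdvd
  · rw [zero_pow (Nat.div_pos (Nat.le_of_dvd (Nat.succ_pos j) hdvd) hk).ne', mul_zero]
  · rfl

theorem hasDerivAt_extremalDisc (hk : 0 < k) :
    HasDerivAt (extremalDisc k m) (fun j => if (j : ℕ) = k - 1 then (m : ℂ) else 0) 0 := by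
  refine hasDerivAt_pi.mpr fun j => ?_
  by_cases hdvd : k ∣ j + 1
  · obtain ⟨e, he⟩ := hdvd
    simp only [extremalDisc, he, dvd_mul_right, if_true, Nat.mul_div_cancel_left _ hk]
    refine ((hasDerivAt_pow e (0 : ℂ)).const_mul (m.choose e : ℂ)).congr_deriv ?_
    rcases e with _ | _ | e
    · omega
    · simp [show (j : ℕ) = k - 1 by omega]
    · have hj : (j : ℕ) ≠ k - 1 := fun hj =>
        absurd (Nat.eq_of_mul_eq_mul_left hk (show k * (e + 1 + 1) = k * 1 by omega)) (by omega)
      simp [hj]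
  · have hj : (j : ℕ) ≠ k - 1 := fun hj => hdvd ⟨1, by omega⟩
    simpa [extremalDisc, hdvd, hj] using hasDerivAt_const (0 : ℂ) (0 : ℂ)

end UpperBound

/-- if `k ∣ n` (with `k, n ≥ 1`) then the Kobayashi metric of `𝔾ₙ`
at the origin in the direction of the `k`-th standard basis vector is `k/n`. -/
theorem kobayashi_symPolydisc_basis_dvd (n k : ℕ) (hk : 0 < k) (hn : 0 < n)
    (hdvd : k ∣ n) :
    kobayashi (symPolydisc n) 0
      (fun j : Fin n => if (j : ℕ) = k - 1 then 1 else 0) = (k : ℝ) / n := by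
  obtain ⟨m, rfl⟩ := hdvd
  have hm : (m : ℂ) ≠ 0 := by exact_mod_cast (Nat.pos_of_mul_pos_left hn).ne'
  refine IsLeast.csInf_eq ⟨⟨(m : ℂ)⁻¹, ?_, extremalDisc k m,
    differentiable_extremalDisc.differentiableOn, mapsTo_extremalDisc hk, extremalDisc_zero hk,
    ?_⟩, ?_⟩
  · rw [norm_inv, Complex.norm_natCast, Nat.cast_mul, div_mul_cancel_left₀ (by positivity)]
  · funext j
    simp [(hasDerivAt_extremalDisc hk).deriv, hm]
  · rintro _ ⟨α, rfl, φ, hφ, hmaps, h0, hX⟩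
    set j : Fin (k * m) := ⟨k - 1, by have := Nat.le_of_dvd hn (dvd_mul_right k m); omega⟩
    have hαj : ‖α‖ * ‖deriv φ 0 j‖ = 1 := by
      simpa [j] using congr_arg norm (congrFun hX j)
    have hbound : (k : ℝ) * ‖deriv φ 0 j‖ ≤ (k * m : ℕ) := by
      simpa [j, Nat.cast_sub hk, Nat.cast_mul] using
        succ_mul_norm_deriv_le_of_mapsTo_symPolydisc hφ hmaps h0 j
    rw [div_le_iff₀ (by positivity)]
    nlinarith [norm_nonneg α]
end

section
/- Let n, k be positive integers with k ≤ n such that k does not divide n, and let e_k denote the k-th standard basis vector of ℂⁿ. Then the Carathéodory metric of the symmetrized polydisc satisfies the strict inequality γ_{𝔾_n}(0; e_k) > k/n. -/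
/-!
Write `p_m` for the power sums and `Q = ∑_{0<d<k} p_d p_{k-d}`. By the fundamental theorem of
symmetric polynomials, `p_k - εQ` is a polynomial `G` in the coordinates `s = σ(z)` of `𝔾_n`.
On the line through `e_k` all `s_d` with `d < k` vanish, so by Newton's identities `p_d = 0` for
`0 < d < k` and `p_k = (-1)^(k+1) k s_k` there: `G` is linear on that line with slope of modulus
`k`. So `G / B` is a competitor with `|d(G / B)_0(e_k)| = k / B` whenever `|p_k - εQ| < B` on `𝔻ⁿ`.

It remains to find `ε > 0` with `sup_{𝔻ⁿ} |p_k - εQ| < n`. On the closed polydisc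
`|p_k| ≤ n`, with equality only if all `z_j^k` equal one unimodular `μ`. Then `|z_j| = 1` and
`p_{k-d} = conj(p_d) μ`, so `Re (p_k conj Q) = n ∑_{0<d<k} |p_d|²`, and this is positive:
otherwise the `z_j / μ^{1/k}` would be `k`-th roots of unity with vanishing power sums of orders
`1, …, k-1`, which forces `k ∣ n`. Since `|p_k - εQ|² = |p_k|² - 2ε Re (p_k conj Q) + ε²|Q|²`,
compactness of the closed polydisc gives the required `ε`.
-/

open Finset

/-- The Carathéodory metric of a set `D ⊆ ℂᴺ` at `z` in direction `X`:
`γ_D(z; X) = sup{|df_z(X)| : f : D → 𝔻 holomorphic, f(z) = 0}`. -/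
noncomputable def caratheodory {N : ℕ} (D : Set (Fin N → ℂ)) (z X : Fin N → ℂ) : ℝ :=
  sSup {r : ℝ | ∃ f : (Fin N → ℂ) → ℂ, DifferentiableOn ℂ f D ∧
    (∀ w ∈ D, ‖f w‖ < 1) ∧ f z = 0 ∧ r = ‖fderiv ℂ f z X‖}

open Metric Filter Topology ComplexConjugate

section Compactness

variable {X : Type*} [TopologicalSpace X] {T : Set X}

theorem IsCompact.exists_lt_forall_le {f : X → ℝ} (hT : IsCompact T) (hf : ContinuousOn f T)
    {c : ℝ} (h : ∀ x ∈ T, f x < c) : ∃ c' < c, ∀ x ∈ T, f x ≤ c' := by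
  rcases T.eq_empty_or_nonempty with rfl | hne
  · exact ⟨c - 1, by linarith, by simp⟩
  · obtain ⟨x₀, hx₀, hmax⟩ := hT.exists_isMaxOn hne hf
    exact ⟨f x₀, h x₀ hx₀, hmax⟩

theorem IsCompact.exists_pos_le_near_max {f g : X → ℝ} (hT : IsCompact T) (hf : Continuous f)
    (hg : Continuous g) {N : ℝ} (hfN : ∀ x ∈ T, f x ≤ N) (hpos : ∀ x ∈ T, f x = N → 0 < g x) :
    ∃ N' < N, ∃ c > 0, ∀ x ∈ T, N' ≤ f x → c ≤ g x := by
  obtain ⟨N₁, hN₁, hlow⟩ : ∃ N₁ < N, ∀ x ∈ T ∩ {x | g x ≤ 0}, f x ≤ N₁ :=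
    (hT.inter_right (isClosed_le hg continuous_const)).exists_lt_forall_le hf.continuousOn
      fun x ⟨hxT, hx⟩ => (hfN x hxT).lt_of_ne fun h => (hpos x hxT h).not_ge hx
  obtain ⟨c, hc, hnear⟩ : ∃ c < 0, ∀ x ∈ T ∩ {x | (N + N₁) / 2 ≤ f x}, -g x ≤ c :=
    (hT.inter_right (isClosed_le continuous_const hf)).exists_lt_forall_le hg.neg.continuousOn
      fun x ⟨hxT, hx⟩ => by
        by_contra! h
        linarith [hlow x ⟨hxT, neg_nonneg.mp h⟩, hx.out]
  exact ⟨(N + N₁) / 2, by linarith, -c, by linarith, fun x hxT hx => by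
    linarith [hnear x ⟨hxT, hx⟩]⟩

theorem IsCompact.exists_norm_sub_mul_le (hT : IsCompact T) {P Q : X → ℂ} (hP : Continuous P)
    (hQ : Continuous Q) {N : ℝ} (hN : 0 < N) (hPN : ∀ x ∈ T, ‖P x‖ ≤ N)
    (hpos : ∀ x ∈ T, ‖P x‖ = N → 0 < (P x * conj (Q x)).re) :
    ∃ ε : ℝ, 0 < ε ∧ ∃ B < N, ∀ x ∈ T, ‖P x - ε * Q x‖ ≤ B := by
  obtain ⟨N', hN', c, hc, hnear⟩ := hT.exists_pos_le_near_max hP.norm (by fun_prop) hPN hpos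
  obtain ⟨C, hC⟩ := hT.exists_bound_of_continuousOn hQ.continuousOn
  set C₀ := max C 1
  have hC₀ : 0 < C₀ := lt_max_of_lt_right one_pos
  set ε := min (c / C₀ ^ 2) ((N - N') / 2 / C₀)
  have hε : 0 < ε := lt_min (by positivity) (div_pos (half_pos (sub_pos.mpr hN')) hC₀)
  have hεQ : ∀ x ∈ T, ‖(ε : ℂ) * Q x‖ ≤ ε * C₀ := fun x hx => by
    rw [norm_mul, Complex.norm_real, Real.norm_of_nonneg hε.le]
    exact mul_le_mul_of_nonneg_left ((hC x hx).trans (le_max_left _ _)) hε.le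
  have hεC₀ : ε * C₀ ≤ (N - N') / 2 := (le_div_iff₀ (by positivity)).mp (min_le_right _ _)
  have hεC₀2 : ε * C₀ ^ 2 ≤ c := (le_div_iff₀ (by positivity)).mp (min_le_left _ _)
  refine ⟨ε, hε, max ((N + N') / 2) √(N ^ 2 - ε * c),
    max_lt (by linarith) ((Real.sqrt_lt' hN).mpr (by nlinarith)), fun x hxT => ?_⟩
  by_cases hx : ‖P x‖ < N'
  · refine le_max_of_le_left ?_
    calc ‖P x - ε * Q x‖ ≤ ‖P x‖ + ‖(ε : ℂ) * Q x‖ := norm_sub_le _ _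
      _ ≤ (N + N') / 2 := by linarith [hεQ x hxT]
  · refine le_max_of_le_right (Real.le_sqrt_of_sq_le ?_)
    have hexpand : ‖P x - ε * Q x‖ ^ 2 =
        ‖P x‖ ^ 2 - 2 * ε * (P x * conj (Q x)).re + ‖(ε : ℂ) * Q x‖ ^ 2 := by
      simp only [Complex.sq_norm, Complex.normSq_sub, map_mul, Complex.conj_ofReal,
        mul_left_comm (P x), Complex.re_ofReal_mul]
      ring
    have hPx : ‖P x‖ ^ 2 ≤ N ^ 2 := pow_le_pow_left₀ (norm_nonneg _) (hPN x hxT) 2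
    have hεQ2 : ‖(ε : ℂ) * Q x‖ ^ 2 ≤ ε * c :=
      calc ‖(ε : ℂ) * Q x‖ ^ 2 ≤ (ε * C₀) ^ 2 := pow_le_pow_left₀ (norm_nonneg _) (hεQ x hxT) 2
        _ = ε * (ε * C₀ ^ 2) := by ring
        _ ≤ ε * c := mul_le_mul_of_nonneg_left hεC₀2 hε.le
    linarith [mul_le_mul_of_nonneg_left (hnear x hxT (not_lt.mp hx)) hε.le]

end Compactness

section PowerSums

variable {ι : Type*} [Fintype ι]

noncomputable def powerSum (m : ℕ) (z : ι → ℂ) : ℂ := ∑ j, z j ^ m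

noncomputable def powerSumConv (k : ℕ) (z : ι → ℂ) : ℂ :=
  ∑ d ∈ Ioo 0 k, powerSum d z * powerSum (k - d) z

theorem continuous_powerSum (m : ℕ) : Continuous (powerSum (ι := ι) m) := by
  unfold powerSum; fun_prop

theorem continuous_powerSumConv (k : ℕ) : Continuous (powerSumConv (ι := ι) k) := by
  unfold powerSumConv powerSum; fun_prop

theorem norm_powerSum_le {z : ι → ℂ} (hz : ∀ j, ‖z j‖ ≤ 1) (m : ℕ) :
    ‖powerSum m z‖ ≤ Fintype.card ι :=
  calc ‖powerSum m z‖ ≤ ∑ j, ‖z j‖ ^ m := by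
        simpa only [powerSum, norm_pow] using norm_sum_le univ fun j => z j ^ m
    _ ≤ ∑ _j : ι, (1 : ℝ) := sum_le_sum fun j _ => pow_le_one₀ (norm_nonneg _) (hz j)
    _ = Fintype.card ι := by simp

theorem eq_div_card_of_norm_sum_eq_card {w : ι → ℂ} (hw : ∀ j, ‖w j‖ ≤ 1)
    (h : ‖∑ j, w j‖ = Fintype.card ι) (j : ι) : w j = (∑ i, w i) / Fintype.card ι := by
  have hcard : Fintype.card ι ≠ 0 := (Fintype.card_pos_iff.mpr ⟨j⟩).ne'
  set μ := (∑ i, w i) / Fintype.card ι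
  have hμ : Complex.normSq μ = 1 := by
    rw [Complex.normSq_eq_norm_sq, show ‖μ‖ = 1 by simp [μ, h, hcard], one_pow]
  have hre : ∑ i, (w i * conj μ).re = Fintype.card ι := by
    rw [← Complex.re_sum, ← sum_mul,
      show ∑ i, w i = Fintype.card ι * μ by simp [μ, mul_div_cancel₀, hcard],
      mul_assoc, Complex.mul_conj, hμ]
    simp
  have hdev : ∑ i, Complex.normSq (w i - μ) ≤ 0 :=
    calc ∑ i, Complex.normSq (w i - μ)
        = ∑ i, (Complex.normSq (w i) + 1 - 2 * (w i * conj μ).re) := by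
          simp only [Complex.normSq_sub, hμ]
      _ ≤ ∑ i, (2 - 2 * (w i * conj μ).re) := by
          gcongr with i
          rw [Complex.normSq_eq_norm_sq]
          nlinarith [hw i, norm_nonneg (w i)]
      _ = 0 := by
          rw [sum_sub_distrib, ← mul_sum, hre, sum_const, card_univ, nsmul_eq_mul]
          ring
  have := (sum_eq_zero_iff_of_nonneg fun i _ => Complex.normSq_nonneg _).mp
    (hdev.antisymm (sum_nonneg fun i _ => Complex.normSq_nonneg _)) j (mem_univ j)
  exact sub_eq_zero.mp (Complex.normSq_eq_zero.mp this)

theorem dvd_card_of_sum_pow_eq_zero {K : Type*} [Field K] [CharZero K] {ω : ι → K} {k : ℕ}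
    (hk : 0 < k) (hω : ∀ j, ω j ^ k = 1) (h : ∀ d ∈ Ioo 0 k, ∑ j, ω j ^ d = 0) :
    k ∣ Fintype.card ι := by
  classical
  have hgeom : ∀ j, ∑ d ∈ range k, ω j ^ d = if ω j = 1 then (k : K) else 0 := fun j => by
    split_ifs with h1
    · simp [h1]
    · rw [geom_sum_eq h1, hω j, sub_self, zero_div]
  have hrange : range k = insert 0 (Ioo 0 k) := by
    ext d
    simp only [mem_range, mem_insert, mem_Ioo]
    omega
  have hcount : (Fintype.card ι : K) = k * #{j | ω j = 1} :=
    calc (Fintype.card ι : K) = ∑ d ∈ range k, ∑ j, ω j ^ d := by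
          rw [hrange, sum_insert (by simp), sum_eq_zero h]
          simp
      _ = k * #{j | ω j = 1} := by
          rw [sum_comm, sum_congr rfl fun j _ => hgeom j, sum_ite, sum_const_zero, add_zero,
            sum_const, nsmul_eq_mul, mul_comm]
  exact ⟨_, by exact_mod_cast hcount⟩

theorem exists_powerSum_ne_zero {k : ℕ} (hk : 0 < k) (hndvd : ¬ k ∣ Fintype.card ι)
    {z : ι → ℂ} {μ : ℂ} (hμ : μ ≠ 0) (hw : ∀ j, z j ^ k = μ) :
    ∃ d ∈ Ioo 0 k, powerSum d z ≠ 0 := by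
  by_contra! h
  obtain ⟨c, hc⟩ := IsAlgClosed.exists_pow_nat_eq μ hk
  refine hndvd (dvd_card_of_sum_pow_eq_zero (ω := fun j => z j / c) hk (fun j => ?_)
    fun d hd => ?_)
  · rw [div_pow, hw, hc, div_self hμ]
  · simp_rw [div_pow, ← sum_div]
    rw [← powerSum, h d hd, zero_div]

theorem powerSum_sub_eq_conj_mul {z : ι → ℂ} (hz : ∀ j, ‖z j‖ = 1) {k : ℕ} {μ : ℂ}
    (hw : ∀ j, z j ^ k = μ) {d : ℕ} (hd : d ≤ k) :
    powerSum (k - d) z = conj (powerSum d z) * μ := by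
  simp only [powerSum, map_sum, sum_mul]
  refine sum_congr rfl fun j _ => ?_
  have hunit : conj (z j) * z j = 1 := by
    rw [mul_comm, Complex.mul_conj, Complex.normSq_eq_norm_sq, hz j, one_pow, Complex.ofReal_one]
  rw [← hw j, ← Nat.add_sub_cancel' hd, pow_add, Nat.add_sub_cancel_left, map_pow, ← mul_assoc,
    ← mul_pow, hunit, one_pow, one_mul]

theorem re_powerSum_mul_conj_powerSumConv_pos {k : ℕ} (hk : 0 < k)
    (hndvd : ¬ k ∣ Fintype.card ι) {z : ι → ℂ} (hz : ∀ j, ‖z j‖ ≤ 1)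
    (hmax : ‖powerSum k z‖ = Fintype.card ι) :
    0 < (powerSum k z * conj (powerSumConv k z)).re := by
  have hcard : Fintype.card ι ≠ 0 := fun h => hndvd (h ▸ dvd_zero k)
  set μ := powerSum k z / Fintype.card ι
  have hw : ∀ j, z j ^ k = μ := eq_div_card_of_norm_sum_eq_card
    (fun j => by simpa using pow_le_one₀ (norm_nonneg _) (hz j)) hmax
  have hμ : ‖μ‖ = 1 := by simp [μ, hmax, hcard]
  have hunit : ∀ j, ‖z j‖ = 1 := fun j =>
    (pow_eq_one_iff_of_nonneg (norm_nonneg _) hk.ne').mp (by rw [← norm_pow, hw, hμ])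
  have hconv : powerSumConv k z = μ * ∑ d ∈ Ioo 0 k, (Complex.normSq (powerSum d z) : ℂ) := by
    rw [powerSumConv, mul_sum]
    refine sum_congr rfl fun d hd => ?_
    rw [powerSum_sub_eq_conj_mul hunit hw (mem_Ioo.mp hd).2.le, ← mul_assoc, Complex.mul_conj]
    ring
  have hre : (powerSum k z * conj (powerSumConv k z)).re =
      Fintype.card ι * ∑ d ∈ Ioo 0 k, Complex.normSq (powerSum d z) := by
    rw [hconv, show powerSum k z = Fintype.card ι * μ by simp [μ, mul_div_cancel₀, hcard],
      map_mul, ← Complex.ofReal_sum, Complex.conj_ofReal, mul_assoc, ← mul_assoc μ,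
      Complex.mul_conj, Complex.normSq_eq_norm_sq, hμ]
    simp
  obtain ⟨d, hd, hne⟩ :=
    exists_powerSum_ne_zero hk hndvd (norm_ne_zero_iff.mp (hμ ▸ one_ne_zero)) hw
  rw [hre]
  exact mul_pos (by positivity)
    (sum_pos' (fun d _ => Complex.normSq_nonneg _) ⟨d, hd, Complex.normSq_pos.mpr hne⟩)

theorem exists_norm_powerSum_sub_mul_powerSumConv_lt {k : ℕ} (hk : 0 < k)
    (hndvd : ¬ k ∣ Fintype.card ι) :
    ∃ ε : ℝ, 0 < ε ∧ ∃ B : ℝ, 0 < B ∧ B < Fintype.card ι ∧ ∀ z : ι → ℂ, (∀ j, ‖z j‖ < 1) →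
      ‖powerSum k z - ε * powerSumConv k z‖ < B := by
  have hN : (0 : ℝ) < Fintype.card ι := by
    exact_mod_cast Nat.pos_of_ne_zero fun h : Fintype.card ι = 0 => hndvd (h ▸ dvd_zero k)
  have hmem : ∀ z : ι → ℂ, z ∈ closedBall 0 1 ↔ ∀ j, ‖z j‖ ≤ 1 := fun z => by
    rw [mem_closedBall_zero_iff, pi_norm_le_iff_of_nonneg zero_le_one]
  obtain ⟨ε, hε, B, hBN, hB⟩ := (isCompact_closedBall (0 : ι → ℂ) 1).exists_norm_sub_mul_le
    (continuous_powerSum k) (continuous_powerSumConv k) hN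
    (fun z hz => norm_powerSum_le ((hmem z).mp hz) k)
    (fun z hz => re_powerSum_mul_conj_powerSumConv_pos hk hndvd ((hmem z).mp hz))
  have hB0 : 0 ≤ B := (norm_nonneg _).trans (hB 0 (mem_closedBall_self zero_le_one))
  exact ⟨ε, hε, (B + Fintype.card ι) / 2, by linarith, by linarith, fun z hz =>
    (hB z ((hmem z).mpr fun j => (hz j).le)).trans_lt (by linarith)⟩

end PowerSums

theorem eval_esymm_eq_esym (n m : ℕ) (z : Fin n → ℂ) :
    MvPolynomial.eval z (MvPolynomial.esymm (Fin n) ℂ m) = esym n m z := by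
  simp [MvPolynomial.esymm, esym]

theorem eval_psum_eq_powerSum (n m : ℕ) (z : Fin n → ℂ) :
    MvPolynomial.eval z (MvPolynomial.psum (Fin n) ℂ m) = powerSum m z := by
  simp [MvPolynomial.psum, powerSum]

theorem powerSum_eq_of_esym_eq_zero {n m : ℕ} (hm : 0 < m) {z : Fin n → ℂ}
    (h : ∀ d ∈ Ioo 0 m, esym n d z = 0) : powerSum m z = (-1) ^ (m + 1) * m * esym n m z := by
  have := congrArg (MvPolynomial.eval z) (MvPolynomial.psum_eq_mul_esymm_sub_sum (Fin n) ℂ m hm)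
  simp only [map_sub, map_mul, map_sum, map_pow, map_neg, map_one, map_natCast,
    eval_esymm_eq_esym, eval_psum_eq_powerSum] at this
  rw [this, sum_eq_zero fun a ha => ?_, sub_zero]
  rw [h a.1 (by simpa using (mem_filter.mp ha).2), mul_zero, zero_mul]

theorem exists_eval_symMap_eq {n : ℕ} {p : MvPolynomial (Fin n) ℂ}
    (hp : p ∈ MvPolynomial.symmetricSubalgebra (Fin n) ℂ) :
    ∃ q : MvPolynomial (Fin n) ℂ, ∀ z,
      MvPolynomial.eval (symMap n z) q = MvPolynomial.eval z p := by
  obtain ⟨q, hq⟩ := MvPolynomial.esymmAlgHom_fin_surjective ℂ le_rfl ⟨p, hp⟩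
  refine ⟨q, fun z => ?_⟩
  have hpq : p = (MvPolynomial.esymmAlgHom (Fin n) ℂ n q).val := by rw [hq]
  rw [hpq, MvPolynomial.esymmAlgHom_apply, ← MvPolynomial.bind₁]
  calc MvPolynomial.eval (symMap n z) q
      = MvPolynomial.eval (fun i : Fin n =>
          MvPolynomial.eval z (MvPolynomial.esymm (Fin n) ℂ (i + 1))) q := by
        simp only [eval_esymm_eq_esym]
        rfl
    _ = _ := (MvPolynomial.eval₂Hom_bind₁ (RingHom.id ℂ) z _ q).symm

open MvPolynomial in
theorem exists_eval_symMap_eq_powerSum_sub_mul_powerSumConv (n k : ℕ) (ε : ℂ) :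
    ∃ G : MvPolynomial (Fin n) ℂ, ∀ z,
      eval (symMap n z) G = powerSum k z - ε * powerSumConv k z := by
  have hpsum : ∀ m, psum (Fin n) ℂ m ∈ symmetricSubalgebra (Fin n) ℂ := fun m =>
    (mem_symmetricSubalgebra _).mpr (psum_isSymmetric _ _ m)
  obtain ⟨G, hG⟩ := exists_eval_symMap_eq <| Subalgebra.sub_mem _ (hpsum k) <|
    Subalgebra.mul_mem _ (Subalgebra.algebraMap_mem _ ε) <|
      Subalgebra.sum_mem _ (t := Ioo 0 k) fun d _ => Subalgebra.mul_mem _ (hpsum d) (hpsum (k - d))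
  exact ⟨G, fun z => by simp [hG, eval_psum_eq_powerSum, powerSumConv]⟩

theorem Multiset.exists_univ_val_map_eq {α : Type*} {n : ℕ} (m : Multiset α)
    (h : Multiset.card m = n) : ∃ z : Fin n → α, univ.val.map z = m := by
  subst h
  induction m using Quotient.inductionOn with
  | h l =>
    refine ⟨fun i => l.get (i.cast (by simp)), ?_⟩
    rw [Fin.univ_val_map]
    exact congrArg _ (List.ext_get (by simp) fun i _ _ => by simp)

section SymPolynomial

open Polynomial

/-- The monic polynomial whose roots `z` satisfy `symMap n z = s`. -/
noncomputable def symPolynomial (n : ℕ) (s : Fin n → ℂ) : ℂ[X] :=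
  X ^ n + ∑ j : Fin n, C ((-1) ^ (j + 1 : ℕ) * s j) * X ^ (n - 1 - j)

theorem symPolynomial_monic_natDegree (n : ℕ) (s : Fin n → ℂ) :
    (symPolynomial n s).Monic ∧ (symPolynomial n s).natDegree = n := by
  have hdeg : (∑ j : Fin n, C ((-1) ^ (j + 1 : ℕ) * s j) * X ^ (n - 1 - j)).degree <
      (n : WithBot ℕ) :=
    (degree_sum_le _ _).trans_lt ((Finset.sup_lt_iff (WithBot.bot_lt_coe n)).mpr
      fun j _ => (degree_C_mul_X_pow_le _ _).trans_lt (Nat.cast_lt.mpr (by omega)))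
  refine ⟨monic_X_pow_add hdeg, ?_⟩
  rw [symPolynomial, natDegree_add_eq_left_of_degree_lt (by rwa [degree_X_pow]), natDegree_X_pow]

theorem coeff_symPolynomial {n : ℕ} (s : Fin n → ℂ) (j : Fin n) :
    (symPolynomial n s).coeff (n - 1 - j) = (-1) ^ (j + 1 : ℕ) * s j := by
  rw [symPolynomial, coeff_add, coeff_X_pow, if_neg (by omega), zero_add, finsetSum_coeff,
    sum_eq_single j (fun i _ hij => ?_) (by simp), coeff_C_mul_X_pow, if_pos rfl]
  rw [coeff_C_mul_X_pow, if_neg fun h => hij (Fin.ext (by omega))]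

theorem esymm_roots_symPolynomial {n : ℕ} (s : Fin n → ℂ) (j : Fin n) :
    (symPolynomial n s).roots.esymm (j + 1) = s j := by
  obtain ⟨hmonic, hdeg⟩ := symPolynomial_monic_natDegree n s
  have hvieta := coeff_eq_esymm_roots_of_splits (IsAlgClosed.splits (symPolynomial n s))
    (k := n - 1 - j) (by omega)
  rw [coeff_symPolynomial, hmonic.leadingCoeff, hdeg, one_mul,
    show n - (n - 1 - j) = j + 1 by omega] at hvieta
  exact (mul_left_cancel₀ (pow_ne_zero _ (neg_ne_zero.mpr one_ne_zero)) hvieta).symm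

theorem norm_le_of_isRoot_symPolynomial {n : ℕ} {s : Fin n → ℂ} {w : ℂ}
    (hw : (symPolynomial n s).IsRoot w) (h1 : 1 ≤ ‖w‖) : ‖w‖ ≤ n * ‖s‖ := by
  have heq : w ^ n = -∑ j : Fin n, (-1) ^ (j + 1 : ℕ) * s j * w ^ (n - 1 - j) := by
    simpa [symPolynomial, eval_finsetSum, eq_neg_iff_add_eq_zero] using hw
  have hbound : ‖w‖ ^ n ≤ n * ‖s‖ * ‖w‖ ^ (n - 1) :=
    calc ‖w‖ ^ n ≤ ∑ j : Fin n, ‖s j‖ * ‖w‖ ^ (n - 1 - j) := by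
          rw [← norm_pow, heq, norm_neg]
          simpa using norm_sum_le univ fun j : Fin n => (-1) ^ (j + 1 : ℕ) * s j * w ^ (n - 1 - j)
      _ ≤ ∑ _j : Fin n, ‖s‖ * ‖w‖ ^ (n - 1) := sum_le_sum fun j _ =>
          mul_le_mul (norm_le_pi_norm s j) (pow_le_pow_right₀ h1 (by omega)) (by positivity)
            (norm_nonneg _)
      _ = n * ‖s‖ * ‖w‖ ^ (n - 1) := by simp [mul_assoc]
  obtain _ | n := n
  · norm_num at hbound
  · rw [pow_succ', add_tsub_cancel_right] at hbound
    exact le_of_mul_le_mul_right hbound (by positivity)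

theorem exists_symMap_eq (n : ℕ) (s : Fin n → ℂ) :
    ∃ z : Fin n → ℂ, symMap n z = s ∧ ∀ j, 1 ≤ ‖z j‖ → ‖z j‖ ≤ n * ‖s‖ := by
  set P := symPolynomial n s
  obtain ⟨hmonic, hdeg⟩ := symPolynomial_monic_natDegree n s
  obtain ⟨z, hz⟩ := P.roots.exists_univ_val_map_eq
    ((splits_iff_card_roots.mp (IsAlgClosed.splits P)).trans hdeg)
  have hroot : ∀ j, P.IsRoot (z j) := fun j =>
    (mem_roots hmonic.ne_zero).mp (hz ▸ Multiset.mem_map_of_mem z (mem_univ j))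
  refine ⟨z, funext fun j => ?_, fun j => norm_le_of_isRoot_symPolynomial (hroot j)⟩
  rw [symMap, esym, ← Finset.esymm_map_val, hz, esymm_roots_symPolynomial]

end SymPolynomial

theorem symPolydisc_mem_nhds_zero (n : ℕ) : symPolydisc n ∈ 𝓝 0 := by
  refine mem_of_superset (ball_mem_nhds 0 (by positivity : (0 : ℝ) < 1 / (n + 1))) fun s hs => ?_
  obtain ⟨z, hzs, hz⟩ := exists_symMap_eq n s
  refine ⟨z, fun j => not_le.mp fun h1 => ?_, hzs⟩
  have hs' : n * ‖s‖ < 1 := by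
    rw [mem_ball_zero_iff, lt_div_iff₀ (by positivity)] at hs
    nlinarith [norm_nonneg s]
  linarith [hz j h1]

theorem powerSum_sub_mul_powerSumConv_of_symMap_eq_smul {n k : ℕ} (hk : 0 < k) (hkn : k ≤ n)
    (ε t : ℂ) {z : Fin n → ℂ}
    (hz : symMap n z = t • fun j : Fin n => if (j : ℕ) = k - 1 then 1 else 0) :
    powerSum k z - ε * powerSumConv k z = (-1) ^ (k + 1) * k * t := by
  have hesym : ∀ d, 0 < d → d ≤ n → esym n d z = if d = k then t else 0 := fun d hd hdn => by
    have := congrFun hz ⟨d - 1, by omega⟩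
    simp only [symMap, Nat.sub_add_cancel hd, Pi.smul_apply, smul_eq_mul] at this
    by_cases hdk : d = k
    · subst hdk
      simp [this]
    · simp [this, hdk, show d - 1 ≠ k - 1 by omega]
  have hlow : ∀ d ∈ Ioo 0 k, esym n d z = 0 := fun d hd => by
    rw [mem_Ioo] at hd
    rw [hesym d hd.1 (by omega), if_neg hd.2.ne]
  have hpow : ∀ d ∈ Ioo 0 k, powerSum d z = 0 := fun d hd => by
    rw [mem_Ioo] at hd
    rw [powerSum_eq_of_esym_eq_zero hd.1 fun i hi => hlow i
      (mem_Ioo.mpr ⟨(mem_Ioo.mp hi).1, (mem_Ioo.mp hi).2.trans hd.2⟩),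
      hlow d (mem_Ioo.mpr hd), mul_zero]
  rw [powerSum_eq_of_esym_eq_zero hk hlow, hesym k hk hkn, if_pos rfl, powerSumConv,
    sum_eq_zero fun d hd => by rw [hpow d hd, zero_mul], mul_zero, sub_zero]

theorem norm_fderiv_le_caratheodory {N : ℕ} {D : Set (Fin N → ℂ)} {z : Fin N → ℂ}
    (hD : D ∈ 𝓝 z) (X : Fin N → ℂ) {f : (Fin N → ℂ) → ℂ} (hf : DifferentiableOn ℂ f D)
    (hfD : ∀ w ∈ D, ‖f w‖ < 1) (hfz : f z = 0) : ‖fderiv ℂ f z X‖ ≤ caratheodory D z X := by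
  obtain ⟨r, hr, hball⟩ := Metric.mem_nhds_iff.mp hD
  refine le_csSup ⟨‖X‖ / r, ?_⟩ ⟨f, hf, hfD, hfz, rfl⟩
  rintro _ ⟨g, hg, hgD, hgz, rfl⟩
  have hmaps : Set.MapsTo g (ball z r) (closedBall (g z) 1) := fun w hw => by
    rw [hgz, mem_closedBall_zero_iff]
    exact (hgD w (hball hw)).le
  calc ‖fderiv ℂ g z X‖ ≤ ‖fderiv ℂ g z‖ * ‖X‖ := (fderiv ℂ g z).le_opNorm X
    _ ≤ 1 / r * ‖X‖ := by
        gcongr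
        exact Complex.norm_fderiv_le_div_of_mapsTo_ball (hg.mono hball) hmaps hr
    _ = ‖X‖ / r := by ring

theorem fderiv_apply_eq_of_forall_smul {𝕜 E F : Type*} [NontriviallyNormedField 𝕜]
    [NormedAddCommGroup E] [NormedSpace 𝕜 E] [NormedAddCommGroup F] [NormedSpace 𝕜 F]
    {f : E → F} (hf : DifferentiableAt 𝕜 f 0) {v : E} {c : F} (h : ∀ t : 𝕜, f (t • v) = t • c) :
    fderiv 𝕜 f 0 v = c := by
  rw [← hf.lineDeriv_eq_fderiv, lineDeriv]
  simp only [zero_add, h]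
  exact ((hasDerivAt_id 0).smul_const c).deriv.trans (one_smul 𝕜 c)

/-- if `1 ≤ k ≤ n` and `k` does not divide `n`, then the Carathéodory
metric of `𝔾ₙ` at the origin in the direction of the `k`-th standard basis vector
satisfies the strict inequality `γ_{𝔾ₙ}(0; e_k) > k/n`. -/
theorem caratheodory_symPolydisc_strict (n k : ℕ) (hk : 0 < k) (hkn : k ≤ n)
    (hndvd : ¬ k ∣ n) :
    caratheodory (symPolydisc n) 0
      (fun j : Fin n => if (j : ℕ) = k - 1 then 1 else 0) > (k : ℝ) / n := by
  obtain ⟨ε, -, B, hB, hBn, hbound⟩ :=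
    exists_norm_powerSum_sub_mul_powerSumConv_lt (ι := Fin n) hk (by simpa using hndvd)
  rw [Fintype.card_fin] at hBn
  obtain ⟨G, hG⟩ := exists_eval_symMap_eq_powerSum_sub_mul_powerSumConv n k ε
  set f : (Fin n → ℂ) → ℂ := fun s => MvPolynomial.eval s G / B
  have hdiff : Differentiable ℂ f := by
    have := differentiableOn_univ.mp (AnalyticOnNhd.eval_mvPolynomial G).differentiableOn
    fun_prop
  have hline : ∀ t : ℂ, f (t • fun j : Fin n => if (j : ℕ) = k - 1 then 1 else 0) =
      t • ((-1) ^ (k + 1) * k / B) := fun t => by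
    obtain ⟨z, hz, -⟩ := exists_symMap_eq n (t • fun j : Fin n => if (j : ℕ) = k - 1 then 1 else 0)
    simp only [f, ← hz, hG, powerSum_sub_mul_powerSumConv_of_symMap_eq_smul hk hkn ε t hz,
      smul_eq_mul]
    ring
  have hfD : ∀ w ∈ symPolydisc n, ‖f w‖ < 1 := by
    rintro _ ⟨z, hz, rfl⟩
    rw [norm_div, Complex.norm_real, Real.norm_of_nonneg hB.le, div_lt_one hB, hG]
    exact hbound z hz
  calc (k : ℝ) / n < k / B := div_lt_div_of_pos_left (by exact_mod_cast hk) hB hBn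
    _ = ‖fderiv ℂ f 0 fun j : Fin n => if (j : ℕ) = k - 1 then 1 else 0‖ := by
        rw [fderiv_apply_eq_of_forall_smul (hdiff 0) hline]
        simp [abs_of_pos hB]
    _ ≤ _ := norm_fderiv_le_caratheodory (symPolydisc_mem_nhds_zero n) _ hdiff.differentiableOn
        hfD (by simpa using hline 0)
end
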